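/- arXiv:2206.09865 — 11 statements merged into one kernel-verified Lean document; each statement's English description precedes it below -/
import Mathlib

section
/- Let c ≥ 0, let A ∈ ℝ^{m×n}, let I be a finite index set, and let {(xᵢ, ξᵢ, fᵢ)}_{i∈I} ⊆ ℝⁿ × ℝⁿ × ℝ. Then there exists a convex function f : ℝⁿ → ℝ such that x ↦ f(x) − (c/2)‖Ax‖² is convex, f(xᵢ) = fᵢ for all i ∈ I, and ξᵢ is a subgradient of f at xᵢ for all i ∈ I, if and only if for all i, j ∈ I one has (c/2)‖A(xᵢ − xⱼ)‖² ≤ fᵢ − fⱼ − ⟨ξⱼ, xᵢ − xⱼ⟩. -/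
/-!
Write `Q y = (c/2)‖A y‖²`, a positive semidefinite quadratic form; the argument works for any such
form on a real vector space.

Necessity: on the segment `y = (1 - t) xⱼ + t xᵢ`, convexity of `f - Q` and the subgradient
inequality at `xⱼ` combine, through the identity
`Q y = (1 - t) Q xⱼ + t Q xᵢ - t (1 - t) Q (xᵢ - xⱼ)`, into
`(1 - t) Q (xᵢ - xⱼ) ≤ Fᵢ - Fⱼ - ⟨ξⱼ, xᵢ - xⱼ⟩`; let `t → 0`.

Sufficiency: `f = Q + maxⱼ ψⱼ` with `ψⱼ y = Fⱼ + ⟨ξⱼ, y - xⱼ⟩ + Q (y - xⱼ) - Q y`, which is affine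
in `y`. The conditions say exactly `ψⱼ xᵢ ≤ Fᵢ - Q xᵢ`, with equality for `j = i`, and
`Q + ψᵢ ≥ Fᵢ + ⟨ξᵢ, · - xᵢ⟩` because `Q ≥ 0`.
-/

open Matrix Set Filter Topology

theorem ConvexOn.finset_sup' {𝕜 E β ι : Type*} [Semiring 𝕜] [PartialOrder 𝕜]
    [AddCommMonoid E] [AddCommMonoid β] [LinearOrder β] [IsOrderedAddMonoid β]
    [SMul 𝕜 E] [Module 𝕜 β] [PosSMulStrictMono 𝕜 β] {s : Set E}
    {t : Finset ι} (ht : t.Nonempty) {f : ι → E → β} (hf : ∀ i ∈ t, ConvexOn 𝕜 s (f i)) :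
    ConvexOn 𝕜 s fun y => t.sup' ht fun i => f i y := by
  induction ht using Finset.Nonempty.cons_induction with
  | singleton i => simpa using hf i (by simp)
  | cons i t _ ht ih =>
    simp only [Finset.sup'_cons ht]
    exact (hf i (by simp)).sup (ih fun j hj => hf j (by simp [hj]))

namespace QuadraticMap

variable {E : Type*} [AddCommGroup E] [Module ℝ E] (Q : QuadraticForm ℝ E)

theorem map_one_sub_smul_add_smul (a b : E) (t : ℝ) :
    Q ((1 - t) • a + t • b) = (1 - t) * Q a + t * Q b - t * (1 - t) * Q (b - a) := by
  have hsub : Q (b - a) = Q b + Q a - polar Q b a := by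
    rw [sub_eq_add_neg, QuadraticMap.map_add Q, polar_neg_right, QuadraticMap.map_neg]; ring
  rw [QuadraticMap.map_add Q, polar_smul_left, polar_smul_right, QuadraticMap.map_smul,
    QuadraticMap.map_smul, hsub, polar_comm Q b a]
  simp only [smul_eq_mul]
  ring

theorem map_sub_sub_map (a y : E) : Q (y - a) - Q y = Q a - polarBilin Q a y := by
  rw [sub_eq_add_neg y, QuadraticMap.map_add Q, polar_neg_right, QuadraticMap.map_neg,
    polarBilin_apply_apply, polar_comm]
  ring

theorem convexOn_univ (hQ : ∀ v, 0 ≤ Q v) : ConvexOn ℝ univ Q := by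
  refine ⟨convex_univ, fun a _ b _ s t hs ht hst => ?_⟩
  obtain rfl : s = 1 - t := by linarith
  rw [map_one_sub_smul_add_smul]
  simp only [smul_eq_mul]
  nlinarith [mul_nonneg (mul_nonneg ht hs) (hQ (b - a))]

theorem map_sub_le_of_convexOn_sub {f : E → ℝ} (hf : ConvexOn ℝ univ fun y => f y - Q y)
    {a : E} {ℓ : E →ₗ[ℝ] ℝ} (hℓ : ∀ y, f a + ℓ (y - a) ≤ f y) (b : E) :
    Q (b - a) ≤ f b - f a - ℓ (b - a) := by
  have hseg : ∀ t ∈ Ioo (0 : ℝ) 1, (1 - t) * Q (b - a) ≤ f b - f a - ℓ (b - a) := by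
    rintro t ⟨ht0, ht1⟩
    have hconv := hf.2 (mem_univ a) (mem_univ b) (sub_nonneg.2 ht1.le) ht0.le (sub_add_cancel 1 t)
    have hsub := hℓ ((1 - t) • a + t • b)
    rw [show (1 - t) • a + t • b - a = t • (b - a) by module, map_smul] at hsub
    simp only [smul_eq_mul, map_one_sub_smul_add_smul] at hconv hsub
    have : t * ((1 - t) * Q (b - a)) ≤ t * (f b - f a - ℓ (b - a)) := by linarith
    exact le_of_mul_le_mul_left this ht0
  have hlim : Tendsto (fun t : ℝ => (1 - t) * Q (b - a)) (𝓝[>] 0) (𝓝 (Q (b - a))) := by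
    have hcont : Continuous fun t : ℝ => (1 - t) * Q (b - a) := by fun_prop
    exact (hcont.tendsto' 0 _ (by simp)).mono_left nhdsWithin_le_nhds
  exact le_of_tendsto hlim (eventually_of_mem (Ioo_mem_nhdsGT one_pos) hseg)

theorem exists_convexOn_interpolant {ι : Type*} [Fintype ι] (hQ : ∀ v, 0 ≤ Q v) (x : ι → E)
    (ℓ : ι → E →ₗ[ℝ] ℝ) (F : ι → ℝ) (h : ∀ i j, Q (x i - x j) ≤ F i - F j - ℓ j (x i - x j)) :
    ∃ f : E → ℝ, ConvexOn ℝ univ f ∧ ConvexOn ℝ univ (fun y => f y - Q y) ∧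
      (∀ i, f (x i) = F i) ∧ ∀ i y, f (x i) + ℓ i (y - x i) ≤ f y := by
  rcases isEmpty_or_nonempty ι with _ | _
  · exact ⟨Q, Q.convexOn_univ hQ, by simpa using convexOn_const 0 convex_univ,
      fun i => isEmptyElim i, fun i => isEmptyElim i⟩
  set ψ : ι → E → ℝ := fun j y => F j + ℓ j (y - x j) + Q (y - x j) - Q y with hψ
  have hψ_convex (j : ι) : ConvexOn ℝ univ (ψ j) := by
    have : ψ j = fun y => (ℓ j - polarBilin Q (x j)) y + (F j - ℓ j (x j) + Q (x j)) := by
      ext y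
      simp only [hψ, add_sub_assoc, map_sub_sub_map, map_sub, LinearMap.sub_apply]
      ring
    exact this ▸ ((ℓ j - polarBilin Q (x j)).convexOn convex_univ).add_const _
  have hψ_le (i j : ι) : ψ j (x i) ≤ F i - Q (x i) := by
    simp only [hψ]; linarith [h i j]
  have hψ_self (i : ι) : ψ i (x i) = F i - Q (x i) := by simp [hψ]
  set g : E → ℝ := fun y => Finset.univ.sup' Finset.univ_nonempty fun j => ψ j y
  have hg_ge (i : ι) (y : E) : ψ i y ≤ g y := Finset.le_sup' (fun j => ψ j y) (Finset.mem_univ i)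
  have hval (i : ι) : Q (x i) + g (x i) = F i := by
    refine le_antisymm ?_ (by linarith [hg_ge i (x i), hψ_self i])
    linarith [Finset.sup'_le Finset.univ_nonempty (fun j => ψ j (x i)) fun j _ => hψ_le i j]
  have hg_convex : ConvexOn ℝ univ g := ConvexOn.finset_sup' _ fun j _ => hψ_convex j
  refine ⟨fun y => Q y + g y, (Q.convexOn_univ hQ).add hg_convex, by simpa using hg_convex, hval,
    fun i y => ?_⟩
  dsimp only
  rw [hval]
  have := hg_ge i y
  simp only [hψ] at this
  linarith [hQ (y - x i)]

theorem exists_convexOn_interpolant_iff {ι : Type*} [Fintype ι] (hQ : ∀ v, 0 ≤ Q v) (x : ι → E)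
    (ℓ : ι → E →ₗ[ℝ] ℝ) (F : ι → ℝ) :
    (∃ f : E → ℝ, ConvexOn ℝ univ f ∧ ConvexOn ℝ univ (fun y => f y - Q y) ∧
      (∀ i, f (x i) = F i) ∧ ∀ i y, f (x i) + ℓ i (y - x i) ≤ f y) ↔
    ∀ i j, Q (x i - x j) ≤ F i - F j - ℓ j (x i - x j) := by
  refine ⟨fun ⟨f, _, hfQ, hval, hsub⟩ i j => ?_, Q.exists_convexOn_interpolant hQ x ℓ F⟩
  simpa only [hval] using Q.map_sub_le_of_convexOn_sub hfQ (hsub j) (x i)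

end QuadraticMap

theorem stmt0 {m n : ℕ} (c : ℝ) (hc : 0 ≤ c) (A : Matrix (Fin m) (Fin n) ℝ)
    (ι : Type*) [Fintype ι] (x ξ : ι → (Fin n → ℝ)) (F : ι → ℝ) :
    (∃ f : (Fin n → ℝ) → ℝ,
      ConvexOn ℝ Set.univ f ∧
      ConvexOn ℝ Set.univ (fun y => f y - c / 2 * ((A *ᵥ y) ⬝ᵥ (A *ᵥ y))) ∧
      (∀ i, f (x i) = F i) ∧
      (∀ i (y : Fin n → ℝ), f (x i) + (ξ i) ⬝ᵥ (y - x i) ≤ f y)) ↔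
    (∀ i j, c / 2 * ((A *ᵥ (x i - x j)) ⬝ᵥ (A *ᵥ (x i - x j)))
        ≤ F i - F j - (ξ j) ⬝ᵥ (x i - x j)) := by
  let Q : QuadraticForm ℝ (Fin n → ℝ) :=
    (c / 2) • (LinearMap.BilinMap.toQuadraticMap (dotProductBilin ℝ ℝ)).comp (mulVecLin A)
  have hQ (y : Fin n → ℝ) : Q y = c / 2 * ((A *ᵥ y) ⬝ᵥ (A *ᵥ y)) := rfl
  have hQ_nonneg (y : Fin n → ℝ) : 0 ≤ Q y :=
    hQ y ▸ mul_nonneg (by linarith) (dotProduct_self_star_nonneg _)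
  simpa only [hQ, dotProductBilin_apply_apply] using
    Q.exists_convexOn_interpolant_iff hQ_nonneg x (fun i => dotProductBilin ℝ ℝ (ξ i)) F
end

section
/- Let N ≥ 4 be an integer and c > 0. Define the (N+1)×(N+1) real symmetric matrix E(t,c) by: E₁₁ = 2c; E_{1,N+1} = E_{N+1,1} = t − c; E_{1,j} = 0 for 2 ≤ j ≤ N; diagonal entries E_{k,k} = α_k where α₂ = 6c − 5t, α_k = 2(2k² − 3k + 1)c − (4k − 1)t for 3 ≤ k ≤ N−1, α_N = 2N(N−1)c − (2N+1)t, α_{N+1} = 2Nc − (N+1)t; tridiagonal entries E_{k,k+1} = E_{k+1,k} = β_k where β_k = 2kt − (2k² − k − 1)c for 2 ≤ k ≤ N−1 and β_N = 3t − 2(N−1)c; last-column entries E_{2,N+1} = E_{N+1,2} = −t and E_{k,N+1} = E_{N+1,k} = t for 3 ≤ k ≤ N−1; all other entries zero. Then for every t ∈ [0, c], the matrix E(t,c) is positive semidefinite. -/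
open Matrix

/-- Diagonal entries α_k (1-based index `k`) of the matrix E(t,c). -/
noncomputable def Ealpha (N : ℕ) (t c : ℝ) (k : ℕ) : ℝ :=
  if k = 2 then 6 * c - 5 * t
  else if k ≤ N - 1 then 2 * (2 * (k : ℝ) ^ 2 - 3 * (k : ℝ) + 1) * c - (4 * (k : ℝ) - 1) * t
  else if k = N then 2 * (N : ℝ) * ((N : ℝ) - 1) * c - (2 * (N : ℝ) + 1) * t
  else 2 * (N : ℝ) * c - ((N : ℝ) + 1) * t

/-- Off-diagonal entries β_k (1-based index `k`) of the matrix E(t,c). -/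
noncomputable def Ebeta (N : ℕ) (t c : ℝ) (k : ℕ) : ℝ :=
  if k ≤ N - 1 then 2 * (k : ℝ) * t - (2 * (k : ℝ) ^ 2 - (k : ℝ) - 1) * c
  else 3 * t - 2 * ((N : ℝ) - 1) * c

/-- Upper-triangular entry of E(t,c) at 1-based position (a,b) with a ≤ b. -/
noncomputable def Eentry (N : ℕ) (t c : ℝ) (a b : ℕ) : ℝ :=
  if a = 1 then (if b = 1 then 2 * c else if b = N + 1 then t - c else 0)
  else if a = b then Ealpha N t c a
  else if b = a + 1 then Ebeta N t c a
  else if b = N + 1 then (if a = 2 then -t else if a ≤ N - 1 then t else 0)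
  else 0

/-- The (N+1)×(N+1) symmetric matrix E(t,c) of Lemma 1. -/
noncomputable def Emat (N : ℕ) (t c : ℝ) : Matrix (Fin (N + 1)) (Fin (N + 1)) ℝ :=
  fun i j =>
    if (i : ℕ) ≤ (j : ℕ) then Eentry N t c ((i : ℕ) + 1) ((j : ℕ) + 1)
    else Eentry N t c ((j : ℕ) + 1) ((i : ℕ) + 1)

/-!
Since `E(t, c)` is affine in `t`, it is the convex combination
`(1 - t/c) E(0, c) + (t/c) E(c, c)`, so it suffices to treat the two endpoints.

`E(0, c)` is symmetric with nonpositive off-diagonal entries and row sums `c, …, c, N c, c`,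
i.e. a weighted graph Laplacian plus a nonnegative diagonal.

`E(c, c) = Dᵀ Z D`, where `D x = (x₁, x₂ - x₃, …, x_N - x_{N+1}, x_{N+1})` and `Z` is an arrow
matrix (diagonal plus last row and column). `Z` is positive semidefinite because its corner entry
`(2N - 4) c` can be split into shares `s_a` making every block `[[Z_aa, Z_aN], [Z_aN, s_a]]`
positive semidefinite.
-/

namespace Matrix

variable {ι : Type*}

theorem posSemidef_of_offDiag_nonpos_of_sum_row_nonneg [Fintype ι] {M : Matrix ι ι ℝ}
    (hM : M.IsSymm) (hoff : ∀ i j, i ≠ j → M i j ≤ 0) (hrow : ∀ i, 0 ≤ ∑ j, M i j) :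
    M.PosSemidef := by
  refine .of_dotProduct_mulVec_nonneg (isHermitian_iff_isSymm.2 hM) fun x => ?_
  have hswap : ∑ i, ∑ j, M i j * x j ^ 2 = ∑ i, ∑ j, M i j * x i ^ 2 := by
    rw [Finset.sum_comm]
    simp_rw [hM.apply]
  have hform : star x ⬝ᵥ (M *ᵥ x)
      = ∑ i, (∑ j, M i j) * x i ^ 2 + ∑ i, ∑ j, -M i j * (x i - x j) ^ 2 / 2 := by
    have h : ∀ i j, -M i j * (x i - x j) ^ 2 / 2
        = x i * (M i j * x j) - M i j * x i ^ 2 / 2 - M i j * x j ^ 2 / 2 := by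
      intros; ring
    simp only [h, Finset.sum_sub_distrib, ← Finset.sum_div, hswap, star_trivial, dotProduct,
      mulVec, Finset.mul_sum, Finset.sum_mul]
    ring
  rw [hform]
  refine add_nonneg (Finset.sum_nonneg fun i _ => mul_nonneg (hrow i) (sq_nonneg _))
    (Finset.sum_nonneg fun i _ => Finset.sum_nonneg fun j _ => ?_)
  rcases eq_or_ne i j with rfl | hij
  · simp
  · exact div_nonneg (mul_nonneg (neg_nonneg.2 (hoff i j hij)) (sq_nonneg _)) zero_le_two

variable [DecidableEq ι]

def arrow (n : ι) (d w : ι → ℝ) : Matrix ι ι ℝ :=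
  diagonal d + of fun a b => (if b = n then w a else 0) + (if a = n then w b else 0)

lemma arrow_apply (n : ι) (d w : ι → ℝ) (a b : ι) :
    arrow n d w a b = (if a = b then d a else 0) + (if b = n then w a else 0)
      + (if a = n then w b else 0) := by
  simp only [arrow, add_apply, diagonal_apply, of_apply, add_assoc]

lemma arrow_isSymm (n : ι) (d w : ι → ℝ) : (arrow n d w).IsSymm := by
  refine IsSymm.ext fun a b => ?_
  rcases eq_or_ne a b with rfl | hab
  · rfl
  · simp only [arrow_apply, if_neg hab, if_neg hab.symm]
    ring

variable [Fintype ι]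

lemma dotProduct_arrow_mulVec (n : ι) (d w x : ι → ℝ) :
    x ⬝ᵥ (arrow n d w *ᵥ x) = ∑ a, (d a * x a ^ 2 + 2 * w a * x a * x n) := by
  rw [arrow, add_mulVec, dotProduct_add]
  simp only [dotProduct, mulVec_diagonal]
  simp only [mulVec, dotProduct, of_apply, add_mul, ite_mul, zero_mul, Finset.sum_add_distrib,
    Finset.sum_ite_eq', Finset.mem_univ, if_true, Finset.sum_ite_irrel, Finset.sum_const_zero,
    mul_add, mul_ite, Finset.mul_sum, mul_zero]
  simp only [← Finset.sum_add_distrib]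
  exact Finset.sum_congr rfl fun a _ => by ring

theorem arrow_posSemidef (n : ι) (d w s : ι → ℝ)
    (hs : ∑ a ∈ Finset.univ.erase n, s a ≤ d n + 2 * w n)
    (hblock : ∀ a ≠ n, ∀ y z : ℝ, 0 ≤ d a * y ^ 2 + 2 * w a * y * z + s a * z ^ 2) :
    (arrow n d w).PosSemidef := by
  refine .of_dotProduct_mulVec_nonneg (isHermitian_iff_isSymm.2 (arrow_isSymm n d w)) fun x => ?_
  rw [star_trivial, dotProduct_arrow_mulVec, ← Finset.add_sum_erase _ _ (Finset.mem_univ n)]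
  have hcorner : (∑ a ∈ Finset.univ.erase n, s a) * x n ^ 2 ≤ (d n + 2 * w n) * x n ^ 2 :=
    mul_le_mul_of_nonneg_right hs (sq_nonneg _)
  have hblocks := Finset.sum_nonneg (s := Finset.univ.erase n) fun a ha =>
    hblock a (Finset.ne_of_mem_erase ha) (x a) (x n)
  rw [Finset.sum_add_distrib, ← Finset.sum_mul] at hblocks
  linarith

end Matrix

open Matrix

lemma binary_form_nonneg {d w s : ℝ} (hd : 0 < d) (h : w ^ 2 ≤ d * s) (y z : ℝ) :
    0 ≤ d * y ^ 2 + 2 * w * y * z + s * z ^ 2 := by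
  refine nonneg_of_mul_nonneg_right ?_ hd
  have key : d * (d * y ^ 2 + 2 * w * y * z + s * z ^ 2)
      = (d * y + w * z) ^ 2 + (d * s - w ^ 2) * z ^ 2 := by ring
  rw [key]
  exact add_nonneg (sq_nonneg _) (mul_nonneg (sub_nonneg.2 h) (sq_nonneg _))

/-- `(diffMatrix N *ᵥ x) a = x a - x (a + 1)` for `0 < a < N`; rows `0` and `N` are unit rows. -/
def diffMatrix (N : ℕ) : Matrix (Fin (N + 1)) (Fin (N + 1)) ℝ :=
  of fun a b => if a = b then 1 else if (a : ℕ) + 1 = b ∧ 1 ≤ (a : ℕ) then -1 else 0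

section diffMatrix

variable {N : ℕ} {m : Type*}

lemma mul_diffMatrix_apply (M : Matrix m (Fin (N + 1)) ℝ) (a : m) (j : Fin (N + 1)) :
    (M * diffMatrix N) a j = M a j - if 2 ≤ (j : ℕ) then M a ⟨j - 1, by omega⟩ else 0 := by
  rw [mul_apply]
  split_ifs with hj
  · rw [Fintype.sum_eq_add j ⟨j - 1, by omega⟩ (by simp [Fin.ext_iff]; omega)]
    · simp (disch := omega) only [diffMatrix, of_apply, if_pos, if_neg, if_true, Fin.ext_iff]
      ring
    · intro b hb
      simp only [ne_eq, Fin.ext_iff] at hb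
      simp (disch := omega) only [diffMatrix, of_apply, if_neg, Fin.ext_iff, mul_zero]
  · rw [Fintype.sum_eq_single j]
    · simp [diffMatrix]
    · intro b hb
      simp only [ne_eq, Fin.ext_iff] at hb
      simp (disch := omega) only [diffMatrix, of_apply, if_neg, Fin.ext_iff, mul_zero]

lemma diffMatrix_transpose_mul_apply (M : Matrix (Fin (N + 1)) m ℝ) (i : Fin (N + 1)) (b : m) :
    ((diffMatrix N)ᵀ * M) i b = M i b - if 2 ≤ (i : ℕ) then M ⟨i - 1, by omega⟩ b else 0 := by
  rw [← transpose_apply (_ * M), transpose_mul, transpose_transpose, mul_diffMatrix_apply]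
  rfl

lemma diffMatrix_transpose_mul_mul_apply (M : Matrix (Fin (N + 1)) (Fin (N + 1)) ℝ)
    (i j : Fin (N + 1)) :
    ((diffMatrix N)ᵀ * M * diffMatrix N) i j = M i j
      - (if 2 ≤ (j : ℕ) then M i ⟨j - 1, by omega⟩ else 0)
      - (if 2 ≤ (i : ℕ) then M ⟨i - 1, by omega⟩ j
          - (if 2 ≤ (j : ℕ) then M ⟨i - 1, by omega⟩ ⟨j - 1, by omega⟩ else 0) else 0) := by
  rw [mul_diffMatrix_apply, diffMatrix_transpose_mul_apply, diffMatrix_transpose_mul_apply]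
  split_ifs <;> ring

end diffMatrix

theorem Emat_isSymm (N : ℕ) (t c : ℝ) : (Emat N t c).IsSymm :=
  IsSymm.ext fun i j => by
    by_cases h : (i : ℕ) = j
    · rw [Fin.ext h]
    · simp only [Emat]
      split_ifs <;> first | rfl | omega

theorem Emat_eq_smul_add_smul (N : ℕ) {c : ℝ} (hc : c ≠ 0) (t : ℝ) :
    Emat N t c = (1 - t / c) • Emat N 0 c + (t / c) • Emat N c c := by
  ext i j
  simp only [Emat, Eentry, Ealpha, Ebeta, Matrix.add_apply, Matrix.smul_apply, smul_eq_mul]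
  split_ifs <;> field_simp <;> ring

theorem Emat_zero_apply_nonpos {N : ℕ} (hN : 4 ≤ N) {c : ℝ} (hc : 0 < c) {i j : Fin (N + 1)}
    (hij : i ≠ j) : Emat N 0 c i j ≤ 0 := by
  wlog hlt : (i : ℕ) < j generalizing i j
  · rw [← (Emat_isSymm N 0 c).apply i j]
    exact this hij.symm (by omega)
  obtain ⟨i, hi⟩ := i
  obtain ⟨j, hj⟩ := j
  simp only at hlt
  simp only [Emat, if_pos hlt.le]
  obtain ⟨m, rfl⟩ := Nat.exists_eq_add_of_le' hN
  obtain rfl | ⟨hi1, rfl, hiN⟩ | ⟨rfl, rfl⟩ | hfar :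
      i = 0 ∨ (1 ≤ i ∧ j = i + 1 ∧ i ≤ m + 2) ∨ (i = m + 3 ∧ j = m + 4) ∨ (1 ≤ i ∧ i + 2 ≤ j) := by
    omega
  · simp (disch := omega) only [Eentry, if_pos, if_neg, if_true]
    split_ifs <;> linarith
  · simp (disch := omega) only [Eentry, Ebeta, if_pos, if_neg]
    push_cast
    nlinarith [mul_nonneg (Nat.cast_nonneg (α := ℝ) i) hc.le]
  · simp (disch := omega) only [Eentry, Ebeta, if_pos, if_neg]
    push_cast
    nlinarith [mul_nonneg (Nat.cast_nonneg (α := ℝ) m) hc.le]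
  · simp (disch := omega) only [Eentry, if_pos, if_neg]
    split_ifs <;> simp

theorem Emat_zero_sum_row_nonneg {N : ℕ} (hN : 4 ≤ N) {c : ℝ} (hc : 0 < c) (i : Fin (N + 1)) :
    0 ≤ ∑ j, Emat N 0 c i j := by
  obtain ⟨i, hi⟩ := i
  simp only [Emat]
  rw [Fin.sum_univ_eq_sum_range (fun j => if i ≤ j then Eentry N 0 c (i + 1) (j + 1)
    else Eentry N 0 c (j + 1) (i + 1))]
  obtain ⟨m, rfl⟩ := Nat.exists_eq_add_of_le' hN
  have hrows : i = 0 ∨ i = 1 ∨ (2 ≤ i ∧ i ≤ m + 2) ∨ i = m + 3 ∨ i = m + 4 := by omega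
  -- restrict each row sum to the support of the row
  rcases hrows with rfl | rfl | ⟨hi2, him⟩ | rfl | rfl <;> [
    rw [← Finset.sum_subset (s₁ := {0, m + 4}) ?_ ?_, Finset.sum_pair (by omega)];
    rw [← Finset.sum_subset (s₁ := {1, 2}) ?_ ?_, Finset.sum_pair (by omega)];
    (obtain ⟨k, rfl⟩ := Nat.exists_eq_add_of_le' hi2
     rw [← Finset.sum_subset (s₁ := {k + 1, k + 2, k + 3}) ?_ ?_, Finset.sum_insert (by simp),
       Finset.sum_pair (by omega)]);
    rw [← Finset.sum_subset (s₁ := {m + 2, m + 3, m + 4}) ?_ ?_, Finset.sum_insert (by simp),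
      Finset.sum_pair (by omega)];
    rw [← Finset.sum_subset (s₁ := {0, m + 3, m + 4}) ?_ ?_, Finset.sum_insert (by simp),
      Finset.sum_pair (by omega)]]
  all_goals first
    | (intro j; simp; omega)
    | (intro j hj hj'
       simp only [Finset.mem_range, Finset.mem_insert, Finset.mem_singleton] at hj hj'
       simp (disch := omega) only [Eentry, if_pos, if_neg, if_true, neg_zero, ite_self])
    | (simp (disch := omega) only [Eentry, Ealpha, Ebeta, if_pos, if_neg, if_true]
       push_cast
       nlinarith)

theorem Emat_zero_posSemidef {N : ℕ} (hN : 4 ≤ N) {c : ℝ} (hc : 0 < c) :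
    (Emat N 0 c).PosSemidef :=
  posSemidef_of_offDiag_nonpos_of_sum_row_nonneg (Emat_isSymm N 0 c)
    (fun _ _ hij => Emat_zero_apply_nonpos hN hc hij) (Emat_zero_sum_row_nonneg hN hc)

/-- Diagonal of `Z` in `E(c, c) = Dᵀ Z D`, indexed from `0` like `Fin (N + 1)`. -/
noncomputable def Zdiag (N : ℕ) (c : ℝ) (a : ℕ) : ℝ :=
  if a = 0 then 2 * c else if a ≤ N - 2 then (2 * a ^ 2 + a - 2) * c
  else if a = N - 1 then (3 * N - 5) * c else (2 * N - 4) * c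

noncomputable def Zarm (N : ℕ) (c : ℝ) (a : ℕ) : ℝ :=
  if a = 0 then 0 else if a ≤ N - 2 then (a - 2) * c else if a = N - 1 then (2 * N - 4) * c else 0

noncomputable def Zmat (N : ℕ) (c : ℝ) : Matrix (Fin (N + 1)) (Fin (N + 1)) ℝ :=
  arrow (Fin.last N) (fun a => Zdiag N c a) (fun a => Zarm N c a)

/-- Shares of the corner entry `Zdiag N c N = (2N - 4) c`, one for each `2 × 2` block of `Z`. -/
noncomputable def Zsplit (N : ℕ) (c : ℝ) (a : ℕ) : ℝ :=
  if a = 0 then 0 else if a = 1 then c else if a ≤ N - 2 then c / 2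
  else if a = N - 1 then (3 * N - 7) / 2 * c else 0

lemma sum_range_Zsplit {N : ℕ} (hN : 4 ≤ N) (c : ℝ) :
    ∑ a ∈ Finset.range (N + 1), Zsplit N c a = (2 * N - 4) * c := by
  obtain ⟨m, rfl⟩ := Nat.exists_eq_add_of_le' hN
  rw [Finset.sum_range_succ, Finset.sum_range_succ, Finset.sum_range_succ', Finset.sum_range_succ',
    Finset.sum_congr rfl (g := fun _ => c / 2) (fun k hk => by
      simp only [Finset.mem_range] at hk
      simp (disch := omega) only [Zsplit, if_pos, if_neg])]
  simp (disch := omega) only [Zsplit, if_pos, if_neg, if_true, Finset.sum_const,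
    Finset.card_range, nsmul_eq_mul]
  push_cast
  ring

theorem Zmat_posSemidef {N : ℕ} (hN : 4 ≤ N) {c : ℝ} (hc : 0 < c) : (Zmat N c).PosSemidef := by
  refine arrow_posSemidef _ _ _ (fun a => Zsplit N c a) ?_ fun a ha => ?_
  · rw [Finset.sum_erase_eq_sub (Finset.mem_univ _),
      Fin.sum_univ_eq_sum_range (fun a => Zsplit N c a), sum_range_Zsplit hN]
    simp (disch := omega) only [Zsplit, Zdiag, Zarm, Fin.val_last, if_neg, sub_zero, mul_zero,
      add_zero, le_refl]
  obtain ⟨a, ha'⟩ := a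
  have haN : a < N := by
    simp only [ne_eq, Fin.ext_iff, Fin.val_last] at ha
    omega
  intro y z
  obtain ⟨m, rfl⟩ := Nat.exists_eq_add_of_le' hN
  obtain rfl | rfl | ⟨ha2, ham⟩ | rfl : a = 0 ∨ a = 1 ∨ (2 ≤ a ∧ a ≤ m + 2) ∨ a = m + 3 := by
    omega
  all_goals refine binary_form_nonneg ?_ ?_ y z <;>
    simp (disch := omega) only [Zsplit, Zdiag, Zarm, if_pos, if_neg, if_true]
  · positivity
  · simp
  · norm_num [hc]
  · norm_num [sq]
  · have ha : (2 : ℝ) ≤ a := by exact_mod_cast ha2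
    exact mul_pos (by nlinarith) hc
  · have ha : (2 : ℝ) ≤ a := by exact_mod_cast ha2
    nlinarith [mul_nonneg (sub_nonneg.2 ha) (sq_nonneg c)]
  · push_cast
    nlinarith
  · have hm : (0 : ℝ) ≤ m := m.cast_nonneg
    push_cast
    nlinarith [mul_nonneg (mul_nonneg hm hm) (sq_nonneg c), mul_nonneg hm (sq_nonneg c)]

theorem Emat_self_apply_of_le {N : ℕ} (hN : 4 ≤ N) (c : ℝ) {i j : Fin (N + 1)}
    (hij : (i : ℕ) ≤ j) :
    Emat N c c i j = ((diffMatrix N)ᵀ * Zmat N c * diffMatrix N) i j := by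
  obtain ⟨i, hi⟩ := i
  obtain ⟨j, hj⟩ := j
  simp only at hij
  simp only [Emat, diffMatrix_transpose_mul_mul_apply, Zmat, arrow_apply, Fin.ext_iff,
    Fin.val_last, if_pos hij]
  obtain ⟨m, rfl⟩ := Nat.exists_eq_add_of_le' hN
  have hi' : i = 0 ∨ i = 1 ∨ (2 ≤ i ∧ i ≤ m + 2) ∨ i = m + 3 ∨ i = m + 4 := by omega
  have hj' : j = i ∨ j = i + 1 ∨ j = m + 4 ∨ (i + 2 ≤ j ∧ j ≤ m + 3) := by omega
  rcases hi' with rfl | rfl | ⟨hi2, hiN⟩ | rfl | rfl <;> rcases hj' with rfl | rfl | rfl | hfar <;>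
    first
    | omega
    | (simp (disch := omega) only [Eentry, Ealpha, Ebeta, Zdiag, Zarm, if_pos, if_neg, if_true,
        Nat.cast_sub]
       push_cast
       ring)

theorem Emat_self_eq {N : ℕ} (hN : 4 ≤ N) (c : ℝ) :
    Emat N c c = (diffMatrix N)ᵀ * Zmat N c * diffMatrix N := by
  have hsymm : ((diffMatrix N)ᵀ * Zmat N c * diffMatrix N).IsSymm := by
    have hZ : (Zmat N c).IsSymm := arrow_isSymm _ _ _
    rw [IsSymm, transpose_mul, transpose_mul, transpose_transpose, hZ.eq, Matrix.mul_assoc]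
  ext i j
  rcases le_total (i : ℕ) j with hij | hji
  · exact Emat_self_apply_of_le hN c hij
  · rw [← (Emat_isSymm N c c).apply, ← hsymm.apply]
    exact Emat_self_apply_of_le hN c hji

theorem Emat_self_posSemidef {N : ℕ} (hN : 4 ≤ N) {c : ℝ} (hc : 0 < c) :
    (Emat N c c).PosSemidef := by
  rw [Emat_self_eq hN c, ← conjTranspose_eq_transpose_of_trivial]
  exact (Zmat_posSemidef hN hc).conjTranspose_mul_mul_same _

theorem stmt1 (N : ℕ) (hN : 4 ≤ N) (c t : ℝ) (hc : 0 < c) (ht : t ∈ Set.Icc (0 : ℝ) c) :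
    (Emat N t c).PosSemidef := by
  obtain ⟨ht0, htc⟩ := ht
  have hs : 0 ≤ t / c := div_nonneg ht0 hc.le
  have hs' : 0 ≤ 1 - t / c := sub_nonneg.2 ((div_le_one hc).2 htc)
  rw [Emat_eq_smul_add_smul N hc.ne' t]
  exact ((Emat_zero_posSemidef hN hc).smul hs').add ((Emat_self_posSemidef hN hc).smul hs)
end

section
/- Assume x* = 0, z* = 0 (so b = 0), let N ≥ 4, and let {(x^k, z^k, λ^k)}_{k=1}^N be generated by ADMM with step t > 0 from starting points λ⁰, z⁰. Set α_k = (4k−1)t − 2(2k²−3k+1)c₁ for 2 ≤ k ≤ N−1, α_N = (4N+1)t − (2N²−5N+3)c₁, and β_k = (2k²−k−1)c₁ − 2kt. Then for every v ∈ ℝʳ: N⟨λᴺ, Axᴺ + Bzᴺ⟩ − ⟨λᴺ + tAxᴺ + tBz^{N−1}, Axᴺ − v⟩ + ⟨λ⁰ + tAx¹ + tBz⁰, Ax¹ − v⟩ + (1/(2t))‖λ⁰ − λ*‖² − (1/(2t))‖λᴺ − λ*‖² + (t/2)‖Bz⁰‖² − t⟨Ax¹ − Ax² + (N+1)Axᴺ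 + Bzᴺ, v⟩ − t·Σ_{k=3}^{N}⟨Ax^k, v⟩ + (t(N−1)/2)‖v‖² − (c₁/2)‖Ax¹‖² + Σ_{k=2}^{N}(α_k/2)‖Ax^k‖² + Σ_{k=2}^{N−1} β_k⟨Ax^k, Ax^{k+1}⟩ + tN⟨Bz^{N−1}, Axᴺ − v⟩ + t⟨Axᴺ, Bzᴺ⟩ − (t(N−1)²/2)‖B(zᴺ − z^{N−1})‖² − (tN²/2)‖Axᴺ + Bzᴺ‖² − t‖Ax²‖² + f(x¹) − f(xᴺ) + N(f(xᴺ) − f(x*) + g(zᴺ) − g(z*)) ≥ 0. -/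
open Matrix Finset

lemma dot_self_nn {r : ℕ} (w : Fin r → ℝ) : 0 ≤ w ⬝ᵥ w :=
  Finset.sum_nonneg fun _ _ => mul_self_nonneg _

lemma aux_lim (E K : ℝ) (hK : 0 ≤ K) (h : ∀ θ : ℝ, 0 < θ → θ ≤ 1 → 0 ≤ E + θ * K) : 0 ≤ E := by
  by_contra hE
  push_neg at hE
  have h2 := h (min 1 ((-E)/(2*(K+1)))) (lt_min one_pos (div_pos (by linarith) (by linarith))) (min_le_left _ _)
  have h3 : (min 1 ((-E)/(2*(K+1)))) * K ≤ ((-E)/(2*(K+1))) * K :=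
    mul_le_mul_of_nonneg_right (min_le_right _ _) hK
  have h4 : ((-E)/(2*(K+1))) * K < -E := by
    rw [div_mul_eq_mul_div, div_lt_iff₀ (by linarith : (0:ℝ) < 2*(K+1))]
    nlinarith
  linarith

lemma slack_min {n r : ℕ} (A : Matrix (Fin r) (Fin n) ℝ)
    (f : (Fin n → ℝ) → ℝ) (c t : ℝ) (hc : 0 ≤ c) (ht : 0 < t)
    (hf : ConvexOn ℝ Set.univ (fun y => f y - c / 2 * ((A *ᵥ y) ⬝ᵥ (A *ᵥ y))))
    (lam e : Fin r → ℝ) (xk x' : Fin n → ℝ)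
    (hmin : ∀ y : Fin n → ℝ, f xk + lam ⬝ᵥ (A *ᵥ xk) + t / 2 * ((A *ᵥ xk + e) ⬝ᵥ (A *ᵥ xk + e))
        ≤ f y + lam ⬝ᵥ (A *ᵥ y) + t / 2 * ((A *ᵥ y + e) ⬝ᵥ (A *ᵥ y + e))) :
    0 ≤ f x' - f xk - ((lam + t • (A *ᵥ xk) + t • e) ⬝ᵥ (A *ᵥ xk - A *ᵥ x'))
      - c / 2 * ((A *ᵥ x' - A *ᵥ xk) ⬝ᵥ (A *ᵥ x' - A *ᵥ xk)) := by
  apply aux_lim _ ((c+t)/2 * ((A *ᵥ x' - A *ᵥ xk) ⬝ᵥ (A *ᵥ x' - A *ᵥ xk)))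
    (mul_nonneg (by positivity) (dot_self_nn _))
  intro θ hθ hθ1
  have hy := hmin ((1-θ) • xk + θ • x')
  have hcx := hf.2 (Set.mem_univ xk) (Set.mem_univ x') (by linarith : (0:ℝ) ≤ 1-θ)
    (le_of_lt hθ) (by ring)
  simp only [smul_eq_mul] at hcx
  have hAy : A *ᵥ ((1-θ) • xk + θ • x') = (1-θ) • (A *ᵥ xk) + θ • (A *ᵥ x') := by
    rw [Matrix.mulVec_add, Matrix.mulVec_smul, Matrix.mulVec_smul]
  rw [hAy] at hy hcx
  have key : 0 ≤ θ * ((f x' - f xk - ((lam + t • (A *ᵥ xk) + t • e) ⬝ᵥ (A *ᵥ xk - A *ᵥ x'))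
      - c / 2 * ((A *ᵥ x' - A *ᵥ xk) ⬝ᵥ (A *ᵥ x' - A *ᵥ xk)))
      + θ * ((c+t)/2 * ((A *ᵥ x' - A *ᵥ xk) ⬝ᵥ (A *ᵥ x' - A *ᵥ xk)))) := by
    have h1 := sub_nonneg.2 hy
    have h2 := sub_nonneg.2 hcx
    have h3 := add_nonneg h1 h2
    have expand : (f ((1-θ) • xk + θ • x') + lam ⬝ᵥ ((1-θ) • (A *ᵥ xk) + θ • (A *ᵥ x'))
          + t / 2 * ((((1-θ) • (A *ᵥ xk) + θ • (A *ᵥ x')) + e) ⬝ᵥ (((1-θ) • (A *ᵥ xk) + θ • (A *ᵥ x')) + e))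
          - (f xk + lam ⬝ᵥ (A *ᵥ xk) + t / 2 * ((A *ᵥ xk + e) ⬝ᵥ (A *ᵥ xk + e))))
        + ((1-θ) * (f xk - c / 2 * ((A *ᵥ xk) ⬝ᵥ (A *ᵥ xk))) + θ * (f x' - c / 2 * ((A *ᵥ x') ⬝ᵥ (A *ᵥ x')))
          - (f ((1-θ) • xk + θ • x') - c / 2 * (((1-θ) • (A *ᵥ xk) + θ • (A *ᵥ x')) ⬝ᵥ ((1-θ) • (A *ᵥ xk) + θ • (A *ᵥ x')))))
        = θ * ((f x' - f xk - ((lam + t • (A *ᵥ xk) + t • e) ⬝ᵥ (A *ᵥ xk - A *ᵥ x'))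
          - c / 2 * ((A *ᵥ x' - A *ᵥ xk) ⬝ᵥ (A *ᵥ x' - A *ᵥ xk)))
          + θ * ((c+t)/2 * ((A *ᵥ x' - A *ᵥ xk) ⬝ᵥ (A *ᵥ x' - A *ᵥ xk)))) := by
      simp only [add_dotProduct, dotProduct_add, sub_dotProduct, dotProduct_sub,
        smul_dotProduct, dotProduct_smul, smul_eq_mul, dotProduct_comm (A *ᵥ x') (A *ᵥ xk),
        dotProduct_comm e (A *ᵥ xk), dotProduct_comm e (A *ᵥ x'), dotProduct_comm e lam]
      ring
    rw [expand] at h3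
    exact h3
  by_contra hneg
  push_neg at hneg
  nlinarith [mul_pos hθ (neg_pos.2 hneg)]

lemma slack_sub {n r : ℕ} (A : Matrix (Fin r) (Fin n) ℝ)
    (f : (Fin n → ℝ) → ℝ) (c : ℝ) (hc : 0 ≤ c)
    (hf : ConvexOn ℝ Set.univ (fun y => f y - c / 2 * ((A *ᵥ y) ⬝ᵥ (A *ᵥ y))))
    (ls : Fin r → ℝ)
    (hsub : ∀ y : Fin n → ℝ, f 0 + (-(Aᵀ *ᵥ ls)) ⬝ᵥ (y - 0) ≤ f y)
    (y : Fin n → ℝ) :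
    0 ≤ f y - f 0 + ls ⬝ᵥ (A *ᵥ y) - c / 2 * ((A *ᵥ y) ⬝ᵥ (A *ᵥ y)) := by
  have htr : ∀ w : Fin n → ℝ, (Aᵀ *ᵥ ls) ⬝ᵥ w = ls ⬝ᵥ (A *ᵥ w) := by
    intro w
    rw [Matrix.mulVec_transpose, ← Matrix.dotProduct_mulVec]
  apply aux_lim _ (c / 2 * ((A *ᵥ y) ⬝ᵥ (A *ᵥ y))) (mul_nonneg (by positivity) (dot_self_nn _))
  intro θ hθ hθ1
  have h1 := hsub (θ • y)
  rw [sub_zero, neg_dotProduct, htr] at h1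
  have h2 := hf.2 (Set.mem_univ (0 : Fin n → ℝ)) (Set.mem_univ y) (by linarith : (0:ℝ) ≤ 1-θ)
    (le_of_lt hθ) (by ring)
  simp only [smul_eq_mul, smul_zero, zero_add, Matrix.mulVec_zero, dotProduct_zero,
    Matrix.mulVec_smul] at h2
  rw [Matrix.mulVec_smul] at h1
  simp only [dotProduct_smul, smul_eq_mul, smul_dotProduct] at h1 h2
  nlinarith [h1, h2]


noncomputable def TTdef {n m r : ℕ} (A : Matrix (Fin r) (Fin n) ℝ) (B : Matrix (Fin r) (Fin m) ℝ)
    (f : (Fin n → ℝ) → ℝ) (g : (Fin m → ℝ) → ℝ) (c₁ t : ℝ)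
    (x : ℕ → Fin n → ℝ) (z : ℕ → Fin m → ℝ) (lam : ℕ → Fin r → ℝ)
    (lamstar v : Fin r → ℝ) (M : ℕ) : ℝ :=
(M : ℝ) * (lam M ⬝ᵥ (A *ᵥ x M + B *ᵥ z M))
      - ((lam M + t • (A *ᵥ x M) + t • (B *ᵥ z (M - 1))) ⬝ᵥ (A *ᵥ x M - v))
      + ((lam 0 + t • (A *ᵥ x 1) + t • (B *ᵥ z 0)) ⬝ᵥ (A *ᵥ x 1 - v))
      + 1 / (2 * t) * ((lam 0 - lamstar) ⬝ᵥ (lam 0 - lamstar))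
      - 1 / (2 * t) * ((lam M - lamstar) ⬝ᵥ (lam M - lamstar))
      + t / 2 * ((B *ᵥ z 0) ⬝ᵥ (B *ᵥ z 0))
      - t * ((A *ᵥ x 1 - A *ᵥ x 2 + ((M : ℝ) + 1) • (A *ᵥ x M) + B *ᵥ z M) ⬝ᵥ v)
      - t * ∑ k ∈ Finset.Icc 3 M, (A *ᵥ x k) ⬝ᵥ v
      + t * ((M : ℝ) - 1) / 2 * (v ⬝ᵥ v)
      - c₁ / 2 * ((A *ᵥ x 1) ⬝ᵥ (A *ᵥ x 1))
      + ∑ k ∈ Finset.Icc 2 M,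
          ((if k = M then (4 * (M : ℝ) + 1) * t - (2 * (M : ℝ) ^ 2 - 5 * (M : ℝ) + 3) * c₁
            else (4 * (k : ℝ) - 1) * t - 2 * (2 * (k : ℝ) ^ 2 - 3 * (k : ℝ) + 1) * c₁) / 2)
          * ((A *ᵥ x k) ⬝ᵥ (A *ᵥ x k))
      + ∑ k ∈ Finset.Icc 2 (M - 1),
          ((2 * (k : ℝ) ^ 2 - (k : ℝ) - 1) * c₁ - 2 * (k : ℝ) * t)
          * ((A *ᵥ x k) ⬝ᵥ (A *ᵥ x (k + 1)))
      + t * (M : ℝ) * ((B *ᵥ z (M - 1)) ⬝ᵥ (A *ᵥ x M - v))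
      + t * ((A *ᵥ x M) ⬝ᵥ (B *ᵥ z M))
      - t * ((M : ℝ) - 1) ^ 2 / 2 * ((B *ᵥ (z M - z (M - 1))) ⬝ᵥ (B *ᵥ (z M - z (M - 1))))
      - t * (M : ℝ) ^ 2 / 2 * ((A *ᵥ x M + B *ᵥ z M) ⬝ᵥ (A *ᵥ x M + B *ᵥ z M))
      - t * ((A *ᵥ x 2) ⬝ᵥ (A *ᵥ x 2))
      + (f (x 1) - f (x M))
      + (M : ℝ) * (f (x M) - f 0 + g (z M) - g 0)


noncomputable def Qdef {n m r : ℕ} (A : Matrix (Fin r) (Fin n) ℝ) (B : Matrix (Fin r) (Fin m) ℝ)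
    (f : (Fin n → ℝ) → ℝ) (g : (Fin m → ℝ) → ℝ) (c₁ t : ℝ)
    (x : ℕ → Fin n → ℝ) (z : ℕ → Fin m → ℝ) (lam : ℕ → Fin r → ℝ)
    (lamstar v : Fin r → ℝ) (M : ℕ) : ℝ :=
  TTdef A B f g c₁ t x z lam lamstar v M
  - (f (x (M)) - f 0 + lamstar ⬝ᵥ (A *ᵥ x (M)) - c₁ / 2 * ((A *ᵥ x (M)) ⬝ᵥ (A *ᵥ x (M))))
  - (g (z (M)) - g 0 + lamstar ⬝ᵥ (B *ᵥ z (M)))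
  - t / (2 * (M : ℝ)) * (((-(((M : ℝ)) - 2)) • v + ((M : ℝ)) • (A *ᵥ x (M)) + (((M : ℝ)) - 2) • (B *ᵥ z (M - 1)) - (∑ i ∈ Finset.Icc 1 (M - 2), B *ᵥ z i)) ⬝ᵥ ((-(((M : ℝ)) - 2)) • v + ((M : ℝ)) • (A *ᵥ x (M)) + (((M : ℝ)) - 2) • (B *ᵥ z (M - 1)) - (∑ i ∈ Finset.Icc 1 (M - 2), B *ᵥ z i)))


set_option maxHeartbeats 4000000 in
lemma base_lem {n m r : ℕ} (A : Matrix (Fin r) (Fin n) ℝ) (B : Matrix (Fin r) (Fin m) ℝ)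
    (f : (Fin n → ℝ) → ℝ) (g : (Fin m → ℝ) → ℝ) (c₁ t : ℝ)
    (x : ℕ → Fin n → ℝ) (z : ℕ → Fin m → ℝ) (lam : ℕ → Fin r → ℝ)
    (lamstar v : Fin r → ℝ)
    (N : ℕ) (ht : 0 < t)
    (hSF : ∀ k j : ℕ, 1 ≤ k → k ≤ N → 0 ≤ f (x (j)) - f (x (k)) - ((lam (k - 1) + t • (A *ᵥ x (k)) + t • (B *ᵥ z (k - 1))) ⬝ᵥ (A *ᵥ x (k) - A *ᵥ x (j))) - c₁ / 2 * ((A *ᵥ x (j) - A *ᵥ x (k)) ⬝ᵥ (A *ᵥ x (j) - A *ᵥ x (k))))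
    (hSG : ∀ k j : ℕ, 1 ≤ k → k ≤ N → 0 ≤ g (z (j)) - g (z (k)) - ((lam (k - 1) + t • (B *ᵥ z (k)) + t • (A *ᵥ x (k))) ⬝ᵥ (B *ᵥ z (k) - B *ᵥ z (j))))
    (hSFs : ∀ k : ℕ, 0 ≤ f (x (k)) - f 0 + lamstar ⬝ᵥ (A *ᵥ x (k)) - c₁ / 2 * ((A *ᵥ x (k)) ⬝ᵥ (A *ᵥ x (k))))
    (hSGs : ∀ k : ℕ, 0 ≤ g (z (k)) - g 0 + lamstar ⬝ᵥ (B *ᵥ z (k)))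
    (hlam : ∀ k, 1 ≤ k → k ≤ N → lam k = lam (k - 1) + t • (A *ᵥ x k + B *ᵥ z k))
    (hN : 4 ≤ N) :
    0 ≤ Qdef A B f g c₁ t x z lam lamstar v 4 := by
  have bsg1a : 0 ≤ g (z (2)) - g (z (1)) - ((lam (0) + t • (B *ᵥ z (1)) + t • (A *ᵥ x (1))) ⬝ᵥ (B *ᵥ z (1) - B *ᵥ z (2))) := hSG 1 2 (by omega) (by omega)
  have bsg1b : 0 ≤ g (z (1)) - g (z (2)) - ((lam (1) + t • (B *ᵥ z (2)) + t • (A *ᵥ x (2))) ⬝ᵥ (B *ᵥ z (2) - B *ᵥ z (1))) := hSG 2 1 (by omega) (by omega)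
  have bsfs1 : 0 ≤ f (x (1)) - f 0 + lamstar ⬝ᵥ (A *ᵥ x (1)) - c₁ / 2 * ((A *ᵥ x (1)) ⬝ᵥ (A *ᵥ x (1))) := hSFs 1
  have bsgs1 : 0 ≤ g (z (1)) - g 0 + lamstar ⬝ᵥ (B *ᵥ z (1)) := hSGs 1
  have bsf2a : 0 ≤ f (x (3)) - f (x (2)) - ((lam (1) + t • (A *ᵥ x (2)) + t • (B *ᵥ z (1))) ⬝ᵥ (A *ᵥ x (2) - A *ᵥ x (3))) - c₁ / 2 * ((A *ᵥ x (3) - A *ᵥ x (2)) ⬝ᵥ (A *ᵥ x (3) - A *ᵥ x (2))) := hSF 2 3 (by omega) (by omega)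
  have bsf2b : 0 ≤ f (x (2)) - f (x (3)) - ((lam (2) + t • (A *ᵥ x (3)) + t • (B *ᵥ z (2))) ⬝ᵥ (A *ᵥ x (3) - A *ᵥ x (2))) - c₁ / 2 * ((A *ᵥ x (2) - A *ᵥ x (3)) ⬝ᵥ (A *ᵥ x (2) - A *ᵥ x (3))) := hSF 3 2 (by omega) (by omega)
  have bsg2a : 0 ≤ g (z (3)) - g (z (2)) - ((lam (1) + t • (B *ᵥ z (2)) + t • (A *ᵥ x (2))) ⬝ᵥ (B *ᵥ z (2) - B *ᵥ z (3))) := hSG 2 3 (by omega) (by omega)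
  have bsg2b : 0 ≤ g (z (2)) - g (z (3)) - ((lam (2) + t • (B *ᵥ z (3)) + t • (A *ᵥ x (3))) ⬝ᵥ (B *ᵥ z (3) - B *ᵥ z (2))) := hSG 3 2 (by omega) (by omega)
  have bsfs2 : 0 ≤ f (x (2)) - f 0 + lamstar ⬝ᵥ (A *ᵥ x (2)) - c₁ / 2 * ((A *ᵥ x (2)) ⬝ᵥ (A *ᵥ x (2))) := hSFs 2
  have bsgs2 : 0 ≤ g (z (2)) - g 0 + lamstar ⬝ᵥ (B *ᵥ z (2)) := hSGs 2
  have bsf3a : 0 ≤ f (x (4)) - f (x (3)) - ((lam (2) + t • (A *ᵥ x (3)) + t • (B *ᵥ z (2))) ⬝ᵥ (A *ᵥ x (3) - A *ᵥ x (4))) - c₁ / 2 * ((A *ᵥ x (4) - A *ᵥ x (3)) ⬝ᵥ (A *ᵥ x (4) - A *ᵥ x (3))) := hSF 3 4 (by omega) (by omega)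
  have bsf3b : 0 ≤ f (x (3)) - f (x (4)) - ((lam (3) + t • (A *ᵥ x (4)) + t • (B *ᵥ z (3))) ⬝ᵥ (A *ᵥ x (4) - A *ᵥ x (3))) - c₁ / 2 * ((A *ᵥ x (3) - A *ᵥ x (4)) ⬝ᵥ (A *ᵥ x (3) - A *ᵥ x (4))) := hSF 4 3 (by omega) (by omega)
  have bsg3a : 0 ≤ g (z (4)) - g (z (3)) - ((lam (2) + t • (B *ᵥ z (3)) + t • (A *ᵥ x (3))) ⬝ᵥ (B *ᵥ z (3) - B *ᵥ z (4))) := hSG 3 4 (by omega) (by omega)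
  have bsg3b : 0 ≤ g (z (3)) - g (z (4)) - ((lam (3) + t • (B *ᵥ z (4)) + t • (A *ᵥ x (4))) ⬝ᵥ (B *ᵥ z (4) - B *ᵥ z (3))) := hSG 4 3 (by omega) (by omega)
  have bsfs3 : 0 ≤ f (x (3)) - f 0 + lamstar ⬝ᵥ (A *ᵥ x (3)) - c₁ / 2 * ((A *ᵥ x (3)) ⬝ᵥ (A *ᵥ x (3))) := hSFs 3
  have bsgs3 : 0 ≤ g (z (3)) - g 0 + lamstar ⬝ᵥ (B *ᵥ z (3)) := hSGs 3
  have bq0 : 0 ≤ ((A *ᵥ x (1) + B *ᵥ z (0) - v) ⬝ᵥ (A *ᵥ x (1) + B *ᵥ z (0) - v)) := dot_self_nn _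
  have bq2 : 0 ≤ (((2:ℝ) • v + (6:ℝ) • (A *ᵥ x (2) - A *ᵥ x (3)) + (2:ℝ) • (B *ᵥ z (1)) - (2:ℝ) • (B *ᵥ z (2))) ⬝ᵥ ((2:ℝ) • v + (6:ℝ) • (A *ᵥ x (2) - A *ᵥ x (3)) + (2:ℝ) • (B *ᵥ z (1)) - (2:ℝ) • (B *ᵥ z (2)))) := dot_self_nn _
  have bq3 : 0 ≤ (((2:ℝ) • v + (12:ℝ) • (A *ᵥ x (3) - A *ᵥ x (4)) + (7:ℝ) • (B *ᵥ z (2)) - (6:ℝ) • (B *ᵥ z (3)) - (B *ᵥ z (1))) ⬝ᵥ ((2:ℝ) • v + (12:ℝ) • (A *ᵥ x (3) - A *ᵥ x (4)) + (7:ℝ) • (B *ᵥ z (2)) - (6:ℝ) • (B *ᵥ z (3)) - (B *ᵥ z (1)))) := dot_self_nn _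
  have bsg1am : 0 ≤ (2:ℝ) * (g (z (2)) - g (z (1)) - ((lam (0) + t • (B *ᵥ z (1)) + t • (A *ᵥ x (1))) ⬝ᵥ (B *ᵥ z (1) - B *ᵥ z (2)))) := mul_nonneg (by norm_num) bsg1a
  have bsg1bm : 0 ≤ (1:ℝ) * (g (z (1)) - g (z (2)) - ((lam (1) + t • (B *ᵥ z (2)) + t • (A *ᵥ x (2))) ⬝ᵥ (B *ᵥ z (2) - B *ᵥ z (1)))) := mul_nonneg (by norm_num) bsg1b
  have bsfs1m : 0 ≤ (1:ℝ) * (f (x (1)) - f 0 + lamstar ⬝ᵥ (A *ᵥ x (1)) - c₁ / 2 * ((A *ᵥ x (1)) ⬝ᵥ (A *ᵥ x (1)))) := mul_nonneg (by norm_num) bsfs1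
  have bsgs1m : 0 ≤ (1:ℝ) * (g (z (1)) - g 0 + lamstar ⬝ᵥ (B *ᵥ z (1))) := mul_nonneg (by norm_num) bsgs1
  have bsf2am : 0 ≤ (3:ℝ) * (f (x (3)) - f (x (2)) - ((lam (1) + t • (A *ᵥ x (2)) + t • (B *ᵥ z (1))) ⬝ᵥ (A *ᵥ x (2) - A *ᵥ x (3))) - c₁ / 2 * ((A *ᵥ x (3) - A *ᵥ x (2)) ⬝ᵥ (A *ᵥ x (3) - A *ᵥ x (2)))) := mul_nonneg (by norm_num) bsf2a
  have bsf2bm : 0 ≤ (2:ℝ) * (f (x (2)) - f (x (3)) - ((lam (2) + t • (A *ᵥ x (3)) + t • (B *ᵥ z (2))) ⬝ᵥ (A *ᵥ x (3) - A *ᵥ x (2))) - c₁ / 2 * ((A *ᵥ x (2) - A *ᵥ x (3)) ⬝ᵥ (A *ᵥ x (2) - A *ᵥ x (3)))) := mul_nonneg (by norm_num) bsf2b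
  have bsg2am : 0 ≤ (6:ℝ) * (g (z (3)) - g (z (2)) - ((lam (1) + t • (B *ᵥ z (2)) + t • (A *ᵥ x (2))) ⬝ᵥ (B *ᵥ z (2) - B *ᵥ z (3)))) := mul_nonneg (by norm_num) bsg2a
  have bsg2bm : 0 ≤ (4:ℝ) * (g (z (2)) - g (z (3)) - ((lam (2) + t • (B *ᵥ z (3)) + t • (A *ᵥ x (3))) ⬝ᵥ (B *ᵥ z (3) - B *ᵥ z (2)))) := mul_nonneg (by norm_num) bsg2b
  have bsfs2m : 0 ≤ (1:ℝ) * (f (x (2)) - f 0 + lamstar ⬝ᵥ (A *ᵥ x (2)) - c₁ / 2 * ((A *ᵥ x (2)) ⬝ᵥ (A *ᵥ x (2)))) := mul_nonneg (by norm_num) bsfs2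
  have bsgs2m : 0 ≤ (1:ℝ) * (g (z (2)) - g 0 + lamstar ⬝ᵥ (B *ᵥ z (2))) := mul_nonneg (by norm_num) bsgs2
  have bsf3am : 0 ≤ (8:ℝ) * (f (x (4)) - f (x (3)) - ((lam (2) + t • (A *ᵥ x (3)) + t • (B *ᵥ z (2))) ⬝ᵥ (A *ᵥ x (3) - A *ᵥ x (4))) - c₁ / 2 * ((A *ᵥ x (4) - A *ᵥ x (3)) ⬝ᵥ (A *ᵥ x (4) - A *ᵥ x (3)))) := mul_nonneg (by norm_num) bsf3a
  have bsf3bm : 0 ≤ (6:ℝ) * (f (x (3)) - f (x (4)) - ((lam (3) + t • (A *ᵥ x (4)) + t • (B *ᵥ z (3))) ⬝ᵥ (A *ᵥ x (4) - A *ᵥ x (3))) - c₁ / 2 * ((A *ᵥ x (3) - A *ᵥ x (4)) ⬝ᵥ (A *ᵥ x (3) - A *ᵥ x (4)))) := mul_nonneg (by norm_num) bsf3b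
  have bsg3am : 0 ≤ (12:ℝ) * (g (z (4)) - g (z (3)) - ((lam (2) + t • (B *ᵥ z (3)) + t • (A *ᵥ x (3))) ⬝ᵥ (B *ᵥ z (3) - B *ᵥ z (4)))) := mul_nonneg (by norm_num) bsg3a
  have bsg3bm : 0 ≤ (9:ℝ) * (g (z (3)) - g (z (4)) - ((lam (3) + t • (B *ᵥ z (4)) + t • (A *ᵥ x (4))) ⬝ᵥ (B *ᵥ z (4) - B *ᵥ z (3)))) := mul_nonneg (by norm_num) bsg3b
  have bsfs3m : 0 ≤ (1:ℝ) * (f (x (3)) - f 0 + lamstar ⬝ᵥ (A *ᵥ x (3)) - c₁ / 2 * ((A *ᵥ x (3)) ⬝ᵥ (A *ᵥ x (3)))) := mul_nonneg (by norm_num) bsfs3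
  have bsgs3m : 0 ≤ (1:ℝ) * (g (z (3)) - g 0 + lamstar ⬝ᵥ (B *ᵥ z (3))) := mul_nonneg (by norm_num) bsgs3
  have bq0m : 0 ≤ t / 2 * ((A *ᵥ x (1) + B *ᵥ z (0) - v) ⬝ᵥ (A *ᵥ x (1) + B *ᵥ z (0) - v)) := mul_nonneg (by positivity) bq0
  have bq2m : 0 ≤ t / 12 * (((2:ℝ) • v + (6:ℝ) • (A *ᵥ x (2) - A *ᵥ x (3)) + (2:ℝ) • (B *ᵥ z (1)) - (2:ℝ) • (B *ᵥ z (2))) ⬝ᵥ ((2:ℝ) • v + (6:ℝ) • (A *ᵥ x (2) - A *ᵥ x (3)) + (2:ℝ) • (B *ᵥ z (1)) - (2:ℝ) • (B *ᵥ z (2)))) := mul_nonneg (by positivity) bq2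
  have bq3m : 0 ≤ t / 24 * (((2:ℝ) • v + (12:ℝ) • (A *ᵥ x (3) - A *ᵥ x (4)) + (7:ℝ) • (B *ᵥ z (2)) - (6:ℝ) • (B *ᵥ z (3)) - (B *ᵥ z (1))) ⬝ᵥ ((2:ℝ) • v + (12:ℝ) • (A *ᵥ x (3) - A *ᵥ x (4)) + (7:ℝ) • (B *ᵥ z (2)) - (6:ℝ) • (B *ᵥ z (3)) - (B *ᵥ z (1)))) := mul_nonneg (by positivity) bq3
  have hl1 : lam 1 = lam 0 + t • (A *ᵥ x 1 + B *ᵥ z 1) := by simpa using hlam 1 (by omega) (by omega)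
  have hl2 : lam 2 = lam 1 + t • (A *ᵥ x 2 + B *ᵥ z 2) := by simpa using hlam 2 (by omega) (by omega)
  have hl3 : lam 3 = lam 2 + t • (A *ᵥ x 3 + B *ᵥ z 3) := by simpa using hlam 3 (by omega) (by omega)
  have hl4 : lam 4 = lam 3 + t • (A *ᵥ x 4 + B *ᵥ z 4) := by simpa using hlam 4 (by omega) (by omega)
  have hid : Qdef A B f g c₁ t x z lam lamstar v 4 = (2:ℝ) * (g (z (2)) - g (z (1)) - ((lam (0) + t • (B *ᵥ z (1)) + t • (A *ᵥ x (1))) ⬝ᵥ (B *ᵥ z (1) - B *ᵥ z (2)))) + (1:ℝ) * (g (z (1)) - g (z (2)) - ((lam (1) + t • (B *ᵥ z (2)) + t • (A *ᵥ x (2))) ⬝ᵥ (B *ᵥ z (2) - B *ᵥ z (1)))) + (1:ℝ) * (f (x (1)) - f 0 + lamstar ⬝ᵥ (A *ᵥ x (1)) - c₁ / 2 * ((A *ᵥ x (1)) ⬝ᵥ (A *ᵥ x (1)))) + (1:ℝ) * (g (z (1)) - g 0 + lamstar ⬝ᵥ (B *ᵥ z (1))) + (3:ℝ) * (f (x (3))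 - f (x (2)) - ((lam (1) + t • (A *ᵥ x (2)) + t • (B *ᵥ z (1))) ⬝ᵥ (A *ᵥ x (2) - A *ᵥ x (3))) - c₁ / 2 * ((A *ᵥ x (3) - A *ᵥ x (2)) ⬝ᵥ (A *ᵥ x (3) - A *ᵥ x (2)))) + (2:ℝ) * (f (x (2)) - f (x (3)) - ((lam (2) + t • (A *ᵥ x (3)) + t • (B *ᵥ z (2))) ⬝ᵥ (A *ᵥ x (3) - A *ᵥ x (2))) - c₁ / 2 * ((A *ᵥ x (2) - A *ᵥ x (3)) ⬝ᵥ (A *ᵥ x (2) - A *ᵥ x (3)))) + (6:ℝ) * (g (z (3)) - g (z (2)) - ((lam (1) + t • (B *ᵥ z (2)) + t • (A *ᵥ x (2))) ⬝ᵥ (B *ᵥ z (2) - B *ᵥ z (3)))) + (4:ℝ) * (g (z (2)) - g (z (3)) - ((lam (2) + t • (B *ᵥ z (3)) + t • (A *ᵥ x (3))) ⬝ᵥ (B *ᵥ z (3) - B *ᵥ z (2)))) + (1:ℝ) * (f (x (2)) - f 0 + lamstar ⬝ᵥ (A *ᵥ x (2)) - c₁ / 2 * ((A *ᵥ x (2))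 ⬝ᵥ (A *ᵥ x (2)))) + (1:ℝ) * (g (z (2)) - g 0 + lamstar ⬝ᵥ (B *ᵥ z (2))) + (8:ℝ) * (f (x (4)) - f (x (3)) - ((lam (2) + t • (A *ᵥ x (3)) + t • (B *ᵥ z (2))) ⬝ᵥ (A *ᵥ x (3) - A *ᵥ x (4))) - c₁ / 2 * ((A *ᵥ x (4) - A *ᵥ x (3)) ⬝ᵥ (A *ᵥ x (4) - A *ᵥ x (3)))) + (6:ℝ) * (f (x (3)) - f (x (4)) - ((lam (3) + t • (A *ᵥ x (4)) + t • (B *ᵥ z (3))) ⬝ᵥ (A *ᵥ x (4) - A *ᵥ x (3))) - c₁ / 2 * ((A *ᵥ x (3) - A *ᵥ x (4)) ⬝ᵥ (A *ᵥ x (3) - A *ᵥ x (4)))) + (12:ℝ) * (g (z (4)) - g (z (3)) - ((lam (2) + t • (B *ᵥ z (3)) + t • (A *ᵥ x (3))) ⬝ᵥ (B *ᵥ z (3) - B *ᵥ z (4)))) + (9:ℝ) * (g (z (3)) - g (z (4)) - ((lam (3) + t • (B *ᵥ z (4)) + t • (A *ᵥ x (4))) ⬝ᵥ (B *ᵥ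 z (4) - B *ᵥ z (3)))) + (1:ℝ) * (f (x (3)) - f 0 + lamstar ⬝ᵥ (A *ᵥ x (3)) - c₁ / 2 * ((A *ᵥ x (3)) ⬝ᵥ (A *ᵥ x (3)))) + (1:ℝ) * (g (z (3)) - g 0 + lamstar ⬝ᵥ (B *ᵥ z (3))) + t / 2 * ((A *ᵥ x (1) + B *ᵥ z (0) - v) ⬝ᵥ (A *ᵥ x (1) + B *ᵥ z (0) - v)) + t / 12 * (((2:ℝ) • v + (6:ℝ) • (A *ᵥ x (2) - A *ᵥ x (3)) + (2:ℝ) • (B *ᵥ z (1)) - (2:ℝ) • (B *ᵥ z (2))) ⬝ᵥ ((2:ℝ) • v + (6:ℝ) • (A *ᵥ x (2) - A *ᵥ x (3)) + (2:ℝ) • (B *ᵥ z (1)) - (2:ℝ) • (B *ᵥ z (2)))) + t / 24 * (((2:ℝ) • v + (12:ℝ) • (A *ᵥ x (3) - A *ᵥ x (4)) + (7:ℝ) • (B *ᵥ z (2)) - (6:ℝ) • (B *ᵥ z (3)) - (B *ᵥ z (1))) ⬝ᵥ ((2:ℝ) • v + (12:ℝ) • (A *ᵥ x (3) - A *ᵥ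 x (4)) + (7:ℝ) • (B *ᵥ z (2)) - (6:ℝ) • (B *ᵥ z (3)) - (B *ᵥ z (1)))) := by
    simp only [Qdef, TTdef]
    rw [show Finset.Icc 3 4 = {3, 4} by decide, show Finset.Icc 2 4 = {2, 3, 4} by decide,
        show Finset.Icc (2:ℕ) (4 - 1) = {2, 3} by decide, show Finset.Icc (1:ℕ) (4 - 2) = {1, 2} by decide]
    rw [Finset.sum_insert (by decide), Finset.sum_insert (by decide), Finset.sum_singleton,
        Finset.sum_insert (by decide), Finset.sum_singleton,
        Finset.sum_insert (by decide), Finset.sum_singleton,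
        Finset.sum_insert (by decide), Finset.sum_singleton]
    rw [hl4, hl3, hl2, hl1]
    norm_num
    simp only [Matrix.mulVec_sub, sub_dotProduct, dotProduct_sub, add_dotProduct, dotProduct_add, smul_dotProduct, dotProduct_smul, neg_dotProduct, dotProduct_neg, smul_eq_mul, dotProduct_comm]
    field_simp
    ring
  rw [hid]
  linarith [bsg1am, bsg1bm, bsfs1m, bsgs1m, bsf2am, bsf2bm, bsg2am, bsg2bm, bsfs2m, bsgs2m, bsf3am, bsf3bm, bsg3am, bsg3bm, bsfs3m, bsgs3m, bq0m, bq2m, bq3m]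


set_option maxHeartbeats 4000000 in
lemma step_lem {n m r : ℕ} (A : Matrix (Fin r) (Fin n) ℝ) (B : Matrix (Fin r) (Fin m) ℝ)
    (f : (Fin n → ℝ) → ℝ) (g : (Fin m → ℝ) → ℝ) (c₁ t : ℝ)
    (x : ℕ → Fin n → ℝ) (z : ℕ → Fin m → ℝ) (lam : ℕ → Fin r → ℝ)
    (lamstar v : Fin r → ℝ)
    (N : ℕ) (ht : 0 < t)
    (hSF : ∀ k j : ℕ, 1 ≤ k → k ≤ N → 0 ≤ f (x (j)) - f (x (k)) - ((lam (k - 1) + t • (A *ᵥ x (k)) + t • (B *ᵥ z (k - 1))) ⬝ᵥ (A *ᵥ x (k) - A *ᵥ x (j))) - c₁ / 2 * ((A *ᵥ x (j) - A *ᵥ x (k)) ⬝ᵥ (A *ᵥ x (j) - A *ᵥ x (k))))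
    (hSG : ∀ k j : ℕ, 1 ≤ k → k ≤ N → 0 ≤ g (z (j)) - g (z (k)) - ((lam (k - 1) + t • (B *ᵥ z (k)) + t • (A *ᵥ x (k))) ⬝ᵥ (B *ᵥ z (k) - B *ᵥ z (j))))
    (hSFs : ∀ k : ℕ, 0 ≤ f (x (k)) - f 0 + lamstar ⬝ᵥ (A *ᵥ x (k)) - c₁ / 2 * ((A *ᵥ x (k)) ⬝ᵥ (A *ᵥ x (k))))
    (hSGs : ∀ k : ℕ, 0 ≤ g (z (k)) - g 0 + lamstar ⬝ᵥ (B *ᵥ z (k)))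
    (hlam : ∀ k, 1 ≤ k → k ≤ N → lam k = lam (k - 1) + t • (A *ᵥ x k + B *ᵥ z k))
    (mm : ℕ) (h5 : mm + 5 ≤ N) :
    Qdef A B f g c₁ t x z lam lamstar v (mm + 4) ≤ Qdef A B f g c₁ t x z lam lamstar v (mm + 5) := by
  have sf1 : 0 ≤ f (x (mm + 5)) - f (x (mm + 4)) - ((lam (mm + 3) + t • (A *ᵥ x (mm + 4)) + t • (B *ᵥ z (mm + 3))) ⬝ᵥ (A *ᵥ x (mm + 4) - A *ᵥ x (mm + 5))) - c₁ / 2 * ((A *ᵥ x (mm + 5) - A *ᵥ x (mm + 4)) ⬝ᵥ (A *ᵥ x (mm + 5) - A *ᵥ x (mm + 4))) := hSF (mm+4) (mm+5) (by omega) (by omega)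
  have sf1m : 0 ≤ (((mm : ℝ) + 4)^2 - 1) * (f (x (mm + 5)) - f (x (mm + 4)) - ((lam (mm + 3) + t • (A *ᵥ x (mm + 4)) + t • (B *ᵥ z (mm + 3))) ⬝ᵥ (A *ᵥ x (mm + 4) - A *ᵥ x (mm + 5))) - c₁ / 2 * ((A *ᵥ x (mm + 5) - A *ᵥ x (mm + 4)) ⬝ᵥ (A *ᵥ x (mm + 5) - A *ᵥ x (mm + 4)))) := mul_nonneg (by have h0 : (0:ℝ) ≤ (mm:ℝ) := Nat.cast_nonneg mm; nlinarith) sf1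
  have sf2 : 0 ≤ f (x (mm + 4)) - f (x (mm + 5)) - ((lam (mm + 4) + t • (A *ᵥ x (mm + 5)) + t • (B *ᵥ z (mm + 4))) ⬝ᵥ (A *ᵥ x (mm + 5) - A *ᵥ x (mm + 4))) - c₁ / 2 * ((A *ᵥ x (mm + 4) - A *ᵥ x (mm + 5)) ⬝ᵥ (A *ᵥ x (mm + 4) - A *ᵥ x (mm + 5))) := hSF (mm+5) (mm+4) (by omega) (by omega)
  have sf2m : 0 ≤ (((mm : ℝ) + 4)^2 - ((mm : ℝ) + 4)) * (f (x (mm + 4)) - f (x (mm + 5)) - ((lam (mm + 4) + t • (A *ᵥ x (mm + 5)) + t • (B *ᵥ z (mm + 4))) ⬝ᵥ (A *ᵥ x (mm + 5) - A *ᵥ x (mm + 4))) - c₁ / 2 * ((A *ᵥ x (mm + 4) - A *ᵥ x (mm + 5)) ⬝ᵥ (A *ᵥ x (mm + 4) - A *ᵥ x (mm + 5)))) := mul_nonneg (by have h0 : (0:ℝ) ≤ (mm:ℝ) := Nat.cast_nonneg mm; nlinarith) sf2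
  have sg1 : 0 ≤ g (z (mm + 5)) - g (z (mm + 4)) - ((lam (mm + 3) + t • (B *ᵥ z (mm + 4)) + t • (A *ᵥ x (mm + 4))) ⬝ᵥ (B *ᵥ z (mm + 4) - B *ᵥ z (mm + 5))) := hSG (mm+4) (mm+5) (by omega) (by omega)
  have sg1m : 0 ≤ (((mm : ℝ) + 4)^2 + ((mm : ℝ) + 4)) * (g (z (mm + 5)) - g (z (mm + 4)) - ((lam (mm + 3) + t • (B *ᵥ z (mm + 4)) + t • (A *ᵥ x (mm + 4))) ⬝ᵥ (B *ᵥ z (mm + 4) - B *ᵥ z (mm + 5)))) := mul_nonneg (by have h0 : (0:ℝ) ≤ (mm:ℝ) := Nat.cast_nonneg mm; nlinarith) sg1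
  have sg2 : 0 ≤ g (z (mm + 4)) - g (z (mm + 5)) - ((lam (mm + 4) + t • (B *ᵥ z (mm + 5)) + t • (A *ᵥ x (mm + 5))) ⬝ᵥ (B *ᵥ z (mm + 5) - B *ᵥ z (mm + 4))) := hSG (mm+5) (mm+4) (by omega) (by omega)
  have sg2m : 0 ≤ (((mm : ℝ) + 4)^2) * (g (z (mm + 4)) - g (z (mm + 5)) - ((lam (mm + 4) + t • (B *ᵥ z (mm + 5)) + t • (A *ᵥ x (mm + 5))) ⬝ᵥ (B *ᵥ z (mm + 5) - B *ᵥ z (mm + 4)))) := mul_nonneg (by have h0 : (0:ℝ) ≤ (mm:ℝ) := Nat.cast_nonneg mm; nlinarith) sg2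
  have sfs : 0 ≤ f (x (mm + 4)) - f 0 + lamstar ⬝ᵥ (A *ᵥ x (mm + 4)) - c₁ / 2 * ((A *ᵥ x (mm + 4)) ⬝ᵥ (A *ᵥ x (mm + 4))) := hSFs (mm+4)
  have sfsm : 0 ≤ (1:ℝ) * (f (x (mm + 4)) - f 0 + lamstar ⬝ᵥ (A *ᵥ x (mm + 4)) - c₁ / 2 * ((A *ᵥ x (mm + 4)) ⬝ᵥ (A *ᵥ x (mm + 4)))) := mul_nonneg (by have h0 : (0:ℝ) ≤ (mm:ℝ) := Nat.cast_nonneg mm; nlinarith) sfs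
  have sgs : 0 ≤ g (z (mm + 4)) - g 0 + lamstar ⬝ᵥ (B *ᵥ z (mm + 4)) := hSGs (mm+4)
  have sgsm : 0 ≤ (1:ℝ) * (g (z (mm + 4)) - g 0 + lamstar ⬝ᵥ (B *ᵥ z (mm + 4))) := mul_nonneg (by have h0 : (0:ℝ) ≤ (mm:ℝ) := Nat.cast_nonneg mm; nlinarith) sgs
  have sqi : 0 ≤ (((2:ℝ) • v + (((mm : ℝ) + 4) * ((mm : ℝ) + 5)) • (A *ᵥ x (mm + 4) - A *ᵥ x (mm + 5)) + (((mm : ℝ) + 4) * ((mm : ℝ) + 4) - 2) • (B *ᵥ z (mm + 3)) - (((mm : ℝ) + 4) * (((mm : ℝ) + 4) - 1)) • (B *ᵥ z (mm + 4)) - (∑ i ∈ Finset.Icc 1 (mm + 2), B *ᵥ z i)) ⬝ᵥ ((2:ℝ) • v + (((mm : ℝ) + 4) * ((mm : ℝ) + 5)) • (A *ᵥ x (mm + 4) - A *ᵥ x (mm + 5)) + (((mm : ℝ) + 4) * ((mm : ℝ) + 4) - 2) • (B *ᵥ z (mm + 3)) - (((mm : ℝ) + 4) * (((mm : ℝ)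 + 4) - 1)) • (B *ᵥ z (mm + 4)) - (∑ i ∈ Finset.Icc 1 (mm + 2), B *ᵥ z i))) := dot_self_nn _
  have sqim : 0 ≤ t / (2 * ((mm : ℝ) + 4) * ((mm : ℝ) + 5)) * (((2:ℝ) • v + (((mm : ℝ) + 4) * ((mm : ℝ) + 5)) • (A *ᵥ x (mm + 4) - A *ᵥ x (mm + 5)) + (((mm : ℝ) + 4) * ((mm : ℝ) + 4) - 2) • (B *ᵥ z (mm + 3)) - (((mm : ℝ) + 4) * (((mm : ℝ) + 4) - 1)) • (B *ᵥ z (mm + 4)) - (∑ i ∈ Finset.Icc 1 (mm + 2), B *ᵥ z i)) ⬝ᵥ ((2:ℝ) • v + (((mm : ℝ) + 4) * ((mm : ℝ) + 5)) • (A *ᵥ x (mm + 4) - A *ᵥ x (mm + 5)) + (((mm : ℝ) + 4) * ((mm : ℝ) + 4) - 2) • (B *ᵥ z (mm + 3)) - (((mm : ℝ) + 4) * (((mm : ℝ) + 4) - 1)) • (B *ᵥ z (mm + 4)) - (∑ i ∈ Finset.Icc 1 (mm + 2), B *ᵥ z i))) := mul_nonneg (by positivity) sqi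
  have hl5 : lam (mm + 5) = lam (mm + 4) + t • (A *ᵥ x (mm + 5) + B *ᵥ z (mm + 5)) := by
    simpa using hlam (mm + 5) (by omega) (by omega)
  have hl4 : lam (mm + 4) = lam (mm + 3) + t • (A *ᵥ x (mm + 4) + B *ᵥ z (mm + 4)) := by
    simpa using hlam (mm + 4) (by omega) (by omega)
  have hv5 : (∑ k ∈ Finset.Icc 3 (mm + 5), (A *ᵥ x k) ⬝ᵥ v)
      = (∑ k ∈ Finset.Icc 3 (mm + 4), (A *ᵥ x k) ⬝ᵥ v) + (A *ᵥ x (mm + 5)) ⬝ᵥ v := by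
    rw [show mm + 5 = (mm + 4) + 1 from rfl, Finset.sum_Icc_succ_top (by omega)]
  have ha5 : (∑ k ∈ Finset.Icc 2 (mm + 5),
        ((if k = mm + 5 then ((4 * ((mm + 5 : ℕ) : ℝ) + 1) * t - (2 * ((mm + 5 : ℕ) : ℝ) ^ 2 - 5 * ((mm + 5 : ℕ) : ℝ) + 3) * c₁)
          else ((4 * (k : ℝ) - 1) * t - 2 * (2 * (k : ℝ) ^ 2 - 3 * (k : ℝ) + 1) * c₁)) / 2) * ((A *ᵥ x k) ⬝ᵥ (A *ᵥ x k)))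
      = (∑ k ∈ Finset.Icc 2 (mm + 4), (((4 * (k : ℝ) - 1) * t - 2 * (2 * (k : ℝ) ^ 2 - 3 * (k : ℝ) + 1) * c₁) / 2) * ((A *ᵥ x k) ⬝ᵥ (A *ᵥ x k)))
        + (((4 * ((mm + 5 : ℕ) : ℝ) + 1) * t - (2 * ((mm + 5 : ℕ) : ℝ) ^ 2 - 5 * ((mm + 5 : ℕ) : ℝ) + 3) * c₁) / 2) * ((A *ᵥ x (mm + 5)) ⬝ᵥ (A *ᵥ x (mm + 5))) := by
    rw [show mm + 5 = (mm + 4) + 1 from rfl, Finset.sum_Icc_succ_top (by omega)]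
    congr 1
    · refine Finset.sum_congr rfl fun k hk => ?_
      simp only [Finset.mem_Icc] at hk
      rw [if_neg (by omega)]
    · rw [if_pos rfl]
  have ha4 : (∑ k ∈ Finset.Icc 2 (mm + 4),
        ((if k = mm + 4 then ((4 * ((mm + 4 : ℕ) : ℝ) + 1) * t - (2 * ((mm + 4 : ℕ) : ℝ) ^ 2 - 5 * ((mm + 4 : ℕ) : ℝ) + 3) * c₁)
          else ((4 * (k : ℝ) - 1) * t - 2 * (2 * (k : ℝ) ^ 2 - 3 * (k : ℝ) + 1) * c₁)) / 2) * ((A *ᵥ x k) ⬝ᵥ (A *ᵥ x k)))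
      = (∑ k ∈ Finset.Icc 2 (mm + 3), (((4 * (k : ℝ) - 1) * t - 2 * (2 * (k : ℝ) ^ 2 - 3 * (k : ℝ) + 1) * c₁) / 2) * ((A *ᵥ x k) ⬝ᵥ (A *ᵥ x k)))
        + (((4 * ((mm + 4 : ℕ) : ℝ) + 1) * t - (2 * ((mm + 4 : ℕ) : ℝ) ^ 2 - 5 * ((mm + 4 : ℕ) : ℝ) + 3) * c₁) / 2) * ((A *ᵥ x (mm + 4)) ⬝ᵥ (A *ᵥ x (mm + 4))) := by
    rw [show mm + 4 = (mm + 3) + 1 from rfl, Finset.sum_Icc_succ_top (by omega)]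
    congr 1
    · refine Finset.sum_congr rfl fun k hk => ?_
      simp only [Finset.mem_Icc] at hk
      rw [if_neg (by omega)]
    · rw [if_pos rfl]
  have ha5b : (∑ k ∈ Finset.Icc 2 (mm + 4), (((4 * (k : ℝ) - 1) * t - 2 * (2 * (k : ℝ) ^ 2 - 3 * (k : ℝ) + 1) * c₁) / 2) * ((A *ᵥ x k) ⬝ᵥ (A *ᵥ x k)))
      = (∑ k ∈ Finset.Icc 2 (mm + 3), (((4 * (k : ℝ) - 1) * t - 2 * (2 * (k : ℝ) ^ 2 - 3 * (k : ℝ) + 1) * c₁) / 2) * ((A *ᵥ x k) ⬝ᵥ (A *ᵥ x k)))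
        + (((4 * ((mm : ℝ) + 4) - 1) * t - 2 * (2 * ((mm : ℝ) + 4) ^ 2 - 3 * ((mm : ℝ) + 4) + 1) * c₁) / 2) * ((A *ᵥ x (mm + 4)) ⬝ᵥ (A *ᵥ x (mm + 4))) := by
    rw [show mm + 4 = (mm + 3) + 1 from rfl, Finset.sum_Icc_succ_top (by omega)]
    push_cast
    ring
  have hb5 : (∑ k ∈ Finset.Icc 2 (mm + 4), ((2 * (k : ℝ) ^ 2 - (k : ℝ) - 1) * c₁ - 2 * (k : ℝ) * t) * ((A *ᵥ x k) ⬝ᵥ (A *ᵥ x (k + 1))))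
      = (∑ k ∈ Finset.Icc 2 (mm + 3), ((2 * (k : ℝ) ^ 2 - (k : ℝ) - 1) * c₁ - 2 * (k : ℝ) * t) * ((A *ᵥ x k) ⬝ᵥ (A *ᵥ x (k + 1))))
        + ((2 * ((mm : ℝ) + 4) ^ 2 - ((mm : ℝ) + 4) - 1) * c₁ - 2 * ((mm : ℝ) + 4) * t) * ((A *ᵥ x (mm + 4)) ⬝ᵥ (A *ᵥ x (mm + 5))) := by
    rw [show mm + 4 = (mm + 3) + 1 from rfl, Finset.sum_Icc_succ_top (by omega)]
    push_cast
    ring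
  have hD : (∑ i ∈ Finset.Icc 1 (mm + 3), B *ᵥ z i)
      = (∑ i ∈ Finset.Icc 1 (mm + 2), B *ᵥ z i) + B *ᵥ z (mm + 3) := by
    rw [show mm + 3 = (mm + 2) + 1 from rfl, Finset.sum_Icc_succ_top (by omega)]
  have hid : Qdef A B f g c₁ t x z lam lamstar v (mm + 5)
      = Qdef A B f g c₁ t x z lam lamstar v (mm + 4) + ((((mm : ℝ) + 4)^2 - 1) * (f (x (mm + 5)) - f (x (mm + 4)) - ((lam (mm + 3) + t • (A *ᵥ x (mm + 4)) + t • (B *ᵥ z (mm + 3))) ⬝ᵥ (A *ᵥ x (mm + 4) - A *ᵥ x (mm + 5))) - c₁ / 2 * ((A *ᵥ x (mm + 5) - A *ᵥ x (mm + 4)) ⬝ᵥ (A *ᵥ x (mm + 5) - A *ᵥ x (mm + 4)))) + (((mm : ℝ) + 4)^2 - ((mm : ℝ) + 4)) * (f (x (mm + 4)) - f (x (mm + 5)) - ((lam (mm + 4) + t • (A *ᵥ x (mm + 5)) + t • (B *ᵥ z (mm + 4))) ⬝ᵥ (A *ᵥ x (mm + 5) - A *ᵥ x (mm + 4))) - c₁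 / 2 * ((A *ᵥ x (mm + 4) - A *ᵥ x (mm + 5)) ⬝ᵥ (A *ᵥ x (mm + 4) - A *ᵥ x (mm + 5)))) + (((mm : ℝ) + 4)^2 + ((mm : ℝ) + 4)) * (g (z (mm + 5)) - g (z (mm + 4)) - ((lam (mm + 3) + t • (B *ᵥ z (mm + 4)) + t • (A *ᵥ x (mm + 4))) ⬝ᵥ (B *ᵥ z (mm + 4) - B *ᵥ z (mm + 5)))) + (((mm : ℝ) + 4)^2) * (g (z (mm + 4)) - g (z (mm + 5)) - ((lam (mm + 4) + t • (B *ᵥ z (mm + 5)) + t • (A *ᵥ x (mm + 5))) ⬝ᵥ (B *ᵥ z (mm + 5) - B *ᵥ z (mm + 4)))) + (1:ℝ) * (f (x (mm + 4)) - f 0 + lamstar ⬝ᵥ (A *ᵥ x (mm + 4)) - c₁ / 2 * ((A *ᵥ x (mm + 4)) ⬝ᵥ (A *ᵥ x (mm + 4)))) + (1:ℝ) * (g (z (mm + 4)) - g 0 + lamstar ⬝ᵥ (B *ᵥ z (mm + 4))) + t / (2 * ((mm : ℝ) + 4) * ((mm : ℝ) + 5)) * (((2:ℝ) • v + (((mm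 : ℝ) + 4) * ((mm : ℝ) + 5)) • (A *ᵥ x (mm + 4) - A *ᵥ x (mm + 5)) + (((mm : ℝ) + 4) * ((mm : ℝ) + 4) - 2) • (B *ᵥ z (mm + 3)) - (((mm : ℝ) + 4) * (((mm : ℝ) + 4) - 1)) • (B *ᵥ z (mm + 4)) - (∑ i ∈ Finset.Icc 1 (mm + 2), B *ᵥ z i)) ⬝ᵥ ((2:ℝ) • v + (((mm : ℝ) + 4) * ((mm : ℝ) + 5)) • (A *ᵥ x (mm + 4) - A *ᵥ x (mm + 5)) + (((mm : ℝ) + 4) * ((mm : ℝ) + 4) - 2) • (B *ᵥ z (mm + 3)) - (((mm : ℝ) + 4) * (((mm : ℝ) + 4) - 1)) • (B *ᵥ z (mm + 4)) - (∑ i ∈ Finset.Icc 1 (mm + 2), B *ᵥ z i)))) := by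
    simp only [Qdef, TTdef]
    simp only [show mm + 5 - 1 = mm + 4 from rfl, show mm + 5 - 2 = mm + 3 from rfl,
      show mm + 4 - 1 = mm + 3 from rfl, show mm + 4 - 2 = mm + 2 from rfl]
    rw [hv5, ha5, ha4, ha5b, hb5, hD, hl5, hl4]
    simp only [Matrix.mulVec_sub, sub_dotProduct, dotProduct_sub, add_dotProduct, dotProduct_add, smul_dotProduct, dotProduct_smul, neg_dotProduct, dotProduct_neg, smul_eq_mul, dotProduct_comm]
    push_cast
    field_simp
    ring
  rw [hid]
  have := sqim
  linarith [sf1m, sf2m, sg1m, sg2m, sfsm, sgsm]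


set_option maxHeartbeats 1000000 in
theorem stmt2 {n m r : ℕ}
    (A : Matrix (Fin r) (Fin n) ℝ) (B : Matrix (Fin r) (Fin m) ℝ)
    (f : (Fin n → ℝ) → ℝ) (g : (Fin m → ℝ) → ℝ)
    (c₁ : ℝ) (hc₁ : 0 < c₁)
    (hf : ConvexOn ℝ Set.univ (fun y => f y - c₁ / 2 * ((A *ᵥ y) ⬝ᵥ (A *ᵥ y))))
    (hg : ConvexOn ℝ Set.univ g)
    (t : ℝ) (ht : 0 < t) (N : ℕ) (hN : 4 ≤ N)
    (x : ℕ → Fin n → ℝ) (z : ℕ → Fin m → ℝ) (lam : ℕ → Fin r → ℝ)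
    (lamstar : Fin r → ℝ)
    -- (x*, z*) = (0, 0) is optimal with multiplier λ* (and b = 0):
    (hfsub : ∀ y : Fin n → ℝ, f 0 + (-(Aᵀ *ᵥ lamstar)) ⬝ᵥ (y - 0) ≤ f y)
    (hgsub : ∀ w : Fin m → ℝ, g 0 + (-(Bᵀ *ᵥ lamstar)) ⬝ᵥ (w - 0) ≤ g w)
    -- ADMM iterations (with b = 0), started from λ⁰ = lam 0 and z⁰ = z 0:
    (hxmin : ∀ k, 1 ≤ k → k ≤ N → ∀ x' : Fin n → ℝ,
      f (x k) + lam (k - 1) ⬝ᵥ (A *ᵥ x k)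
          + t / 2 * ((A *ᵥ x k + B *ᵥ z (k - 1)) ⬝ᵥ (A *ᵥ x k + B *ᵥ z (k - 1)))
        ≤ f x' + lam (k - 1) ⬝ᵥ (A *ᵥ x')
          + t / 2 * ((A *ᵥ x' + B *ᵥ z (k - 1)) ⬝ᵥ (A *ᵥ x' + B *ᵥ z (k - 1))))
    (hzmin : ∀ k, 1 ≤ k → k ≤ N → ∀ z' : Fin m → ℝ,
      g (z k) + lam (k - 1) ⬝ᵥ (B *ᵥ z k)
          + t / 2 * ((A *ᵥ x k + B *ᵥ z k) ⬝ᵥ (A *ᵥ x k + B *ᵥ z k))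
        ≤ g z' + lam (k - 1) ⬝ᵥ (B *ᵥ z')
          + t / 2 * ((A *ᵥ x k + B *ᵥ z') ⬝ᵥ (A *ᵥ x k + B *ᵥ z')))
    (hlam : ∀ k, 1 ≤ k → k ≤ N → lam k = lam (k - 1) + t • (A *ᵥ x k + B *ᵥ z k))
    (v : Fin r → ℝ) :
    0 ≤ (N : ℝ) * (lam N ⬝ᵥ (A *ᵥ x N + B *ᵥ z N))
      - ((lam N + t • (A *ᵥ x N) + t • (B *ᵥ z (N - 1))) ⬝ᵥ (A *ᵥ x N - v))
      + ((lam 0 + t • (A *ᵥ x 1) + t • (B *ᵥ z 0)) ⬝ᵥ (A *ᵥ x 1 - v))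
      + 1 / (2 * t) * ((lam 0 - lamstar) ⬝ᵥ (lam 0 - lamstar))
      - 1 / (2 * t) * ((lam N - lamstar) ⬝ᵥ (lam N - lamstar))
      + t / 2 * ((B *ᵥ z 0) ⬝ᵥ (B *ᵥ z 0))
      - t * ((A *ᵥ x 1 - A *ᵥ x 2 + ((N : ℝ) + 1) • (A *ᵥ x N) + B *ᵥ z N) ⬝ᵥ v)
      - t * ∑ k ∈ Finset.Icc 3 N, (A *ᵥ x k) ⬝ᵥ v
      + t * ((N : ℝ) - 1) / 2 * (v ⬝ᵥ v)
      - c₁ / 2 * ((A *ᵥ x 1) ⬝ᵥ (A *ᵥ x 1))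
      + ∑ k ∈ Finset.Icc 2 N,
          ((if k = N then (4 * (N : ℝ) + 1) * t - (2 * (N : ℝ) ^ 2 - 5 * (N : ℝ) + 3) * c₁
            else (4 * (k : ℝ) - 1) * t - 2 * (2 * (k : ℝ) ^ 2 - 3 * (k : ℝ) + 1) * c₁) / 2)
          * ((A *ᵥ x k) ⬝ᵥ (A *ᵥ x k))
      + ∑ k ∈ Finset.Icc 2 (N - 1),
          ((2 * (k : ℝ) ^ 2 - (k : ℝ) - 1) * c₁ - 2 * (k : ℝ) * t)
          * ((A *ᵥ x k) ⬝ᵥ (A *ᵥ x (k + 1)))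
      + t * (N : ℝ) * ((B *ᵥ z (N - 1)) ⬝ᵥ (A *ᵥ x N - v))
      + t * ((A *ᵥ x N) ⬝ᵥ (B *ᵥ z N))
      - t * ((N : ℝ) - 1) ^ 2 / 2 * ((B *ᵥ (z N - z (N - 1))) ⬝ᵥ (B *ᵥ (z N - z (N - 1))))
      - t * (N : ℝ) ^ 2 / 2 * ((A *ᵥ x N + B *ᵥ z N) ⬝ᵥ (A *ᵥ x N + B *ᵥ z N))
      - t * ((A *ᵥ x 2) ⬝ᵥ (A *ᵥ x 2))
      + (f (x 1) - f (x N))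
      + (N : ℝ) * (f (x N) - f 0 + g (z N) - g 0) := by
  have hg0 : ConvexOn ℝ Set.univ (fun w => g w - (0:ℝ) / 2 * ((B *ᵥ w) ⬝ᵥ (B *ᵥ w))) := by
    simpa using hg
  have hSF : ∀ k j : ℕ, 1 ≤ k → k ≤ N → 0 ≤ f (x (j)) - f (x (k)) - ((lam (k - 1) + t • (A *ᵥ x (k)) + t • (B *ᵥ z (k - 1))) ⬝ᵥ (A *ᵥ x (k) - A *ᵥ x (j))) - c₁ / 2 * ((A *ᵥ x (j) - A *ᵥ x (k)) ⬝ᵥ (A *ᵥ x (j) - A *ᵥ x (k))) := by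
    intro k j hk hkN
    exact slack_min A f c₁ t hc₁.le ht hf (lam (k - 1)) (B *ᵥ z (k - 1)) (x k) (x j)
      (fun y => hxmin k hk hkN y)
  have hSG : ∀ k j : ℕ, 1 ≤ k → k ≤ N → 0 ≤ g (z (j)) - g (z (k)) - ((lam (k - 1) + t • (B *ᵥ z (k)) + t • (A *ᵥ x (k))) ⬝ᵥ (B *ᵥ z (k) - B *ᵥ z (j))) := by
    intro k j hk hkN
    have hm : ∀ y : Fin m → ℝ, g (z k) + lam (k - 1) ⬝ᵥ (B *ᵥ z k)
        + t / 2 * ((B *ᵥ z k + A *ᵥ x k) ⬝ᵥ (B *ᵥ z k + A *ᵥ x k))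
        ≤ g y + lam (k - 1) ⬝ᵥ (B *ᵥ y) + t / 2 * ((B *ᵥ y + A *ᵥ x k) ⬝ᵥ (B *ᵥ y + A *ᵥ x k)) := by
      intro y
      have h := hzmin k hk hkN y
      rw [add_comm (A *ᵥ x k) (B *ᵥ z k), add_comm (A *ᵥ x k) (B *ᵥ y)] at h
      exact h
    have h2 := slack_min B g 0 t le_rfl ht hg0 (lam (k - 1)) (A *ᵥ x k) (z k) (z j) hm
    simpa only [zero_div, zero_mul, sub_zero] using h2
  have hSFs : ∀ k : ℕ, 0 ≤ f (x (k)) - f 0 + lamstar ⬝ᵥ (A *ᵥ x (k)) - c₁ / 2 * ((A *ᵥ x (k)) ⬝ᵥ (A *ᵥ x (k))) :=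
    fun k => slack_sub A f c₁ hc₁.le hf lamstar hfsub (x k)
  have hSGs : ∀ k : ℕ, 0 ≤ g (z (k)) - g 0 + lamstar ⬝ᵥ (B *ᵥ z (k)) := by
    intro k
    have h2 := slack_sub B g 0 le_rfl hg0 lamstar hgsub (z k)
    simpa only [zero_div, zero_mul, sub_zero] using h2
  have hQ : ∀ M : ℕ, 4 ≤ M → M ≤ N → 0 ≤ Qdef A B f g c₁ t x z lam lamstar v M := by
    intro M hM4
    induction M, hM4 using Nat.le_induction with
    | base =>
      intro _
      exact base_lem A B f g c₁ t x z lam lamstar v N ht hSF hSG hSFs hSGs hlam hN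
    | succ M hM4' ih =>
      intro hM1N
      have h0 := ih (by omega)
      obtain ⟨mm, rfl⟩ : ∃ mm, M = mm + 4 := ⟨M - 4, by omega⟩
      have hstep := step_lem A B f g c₁ t x z lam lamstar v N ht hSF hSG hSFs hSGs hlam mm (by omega)
      show 0 ≤ Qdef A B f g c₁ t x z lam lamstar v (mm + 5)
      linarith [h0, hstep]
  have hQN := hQ N hN le_rfl
  have hB1 := hSFs N
  have hB2 := hSGs N
  have hB3 : 0 ≤ t / (2 * (N : ℝ)) * (((-(((N : ℝ)) - 2)) • v + ((N : ℝ)) • (A *ᵥ x (N)) + (((N : ℝ)) - 2) • (B *ᵥ z (N - 1)) - (∑ i ∈ Finset.Icc 1 (N - 2), B *ᵥ z i)) ⬝ᵥ ((-(((N : ℝ)) - 2)) • v + ((N : ℝ)) • (A *ᵥ x (N)) + (((N : ℝ)) - 2) • (B *ᵥ z (N - 1)) - (∑ i ∈ Finset.Icc 1 (N - 2), B *ᵥ z i))) :=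
    mul_nonneg (div_nonneg ht.le (by positivity)) (dot_self_nn _)
  have hT : 0 ≤ TTdef A B f g c₁ t x z lam lamstar v N := by
    have hsplit : TTdef A B f g c₁ t x z lam lamstar v N
        = Qdef A B f g c₁ t x z lam lamstar v N
          + (f (x (N)) - f 0 + lamstar ⬝ᵥ (A *ᵥ x (N)) - c₁ / 2 * ((A *ᵥ x (N)) ⬝ᵥ (A *ᵥ x (N))))
          + (g (z (N)) - g 0 + lamstar ⬝ᵥ (B *ᵥ z (N)))
          + t / (2 * (N : ℝ)) * (((-(((N : ℝ)) - 2)) • v + ((N : ℝ)) • (A *ᵥ x (N)) + (((N : ℝ)) - 2) • (B *ᵥ z (N - 1)) - (∑ i ∈ Finset.Icc 1 (N - 2), B *ᵥ z i)) ⬝ᵥ ((-(((N : ℝ)) - 2)) • v + ((N : ℝ)) • (A *ᵥ x (N)) + (((N : ℝ)) - 2) • (B *ᵥ z (N - 1)) - (∑ i ∈ Finset.Icc 1 (N - 2), B *ᵥ z i))) := by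
      simp only [Qdef]
      ring
    rw [hsplit]
    linarith [hQN, hB1, hB2, hB3]
  exact hT
end

section
/- Let c₁ > 0, N ≥ 4 an integer, and 0 < t ≤ c₁. Define f, g : ℝ → ℝ by f(x) = (1/2)|x| + (c₁/2)x² and g(z) = (1/2)·max{ ((N−1)/N)(z − 1/(2Nt)) − 1/(2Nt), −z }, and consider min f(x) + g(z) subject to x + z = 0 (so A = B = 1, b = 0). Then: (x*, z*) = (0, 0) is an optimal solution with Lagrange multiplier λ* = 1/2 and optimal value 0; ADMM with step t from λ⁰ = −1/2, z⁰ = 0 can generate the iterates x^k = 0, z^k = 1/(2Nt), λ^k = −1/2 + k/(2N) for k = 1, …, N; and D(λᴺ) = −1/(4Nt), so D(λ*) − D(λᴺ) = (‖λ⁰ − λ*‖² + t²|z⁰ − z*|²)/(4Nt), showing that the bound of Theorem 3 is attained. -/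
lemma aux_abs (a b u : ℝ) (ha : |a| ≤ 1/2) (hb : 0 ≤ b) :
    0 ≤ 1/2 * |u| + a * u + b * u ^ 2 := by
  have h2 : |a| * |u| ≤ 1/2 * |u| := mul_le_mul_of_nonneg_right ha (abs_nonneg u)
  nlinarith [neg_abs_le (a * u), abs_mul a u, mul_nonneg hb (sq_nonneg u)]

set_option maxHeartbeats 1000000 in
theorem stmt4 (c₁ : ℝ) (hc₁ : 0 < c₁) (N : ℕ) (hN : 4 ≤ N)
    (t : ℝ) (ht : 0 < t) (htc : t ≤ c₁)
    (f g : ℝ → ℝ)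
    (hf : f = fun x => 1 / 2 * |x| + c₁ / 2 * x ^ 2)
    (hg : g = fun z =>
      1 / 2 * max (((N : ℝ) - 1) / (N : ℝ) * (z - 1 / (2 * (N : ℝ) * t)) - 1 / (2 * (N : ℝ) * t))
        (-z))
    (x z lam : ℕ → ℝ)
    (hx : ∀ k, x k = 0)
    (hz : z = fun k : ℕ => if k = 0 then 0 else 1 / (2 * (N : ℝ) * t))
    (hlam : lam = fun k : ℕ => -(1 / 2) + (k : ℝ) / (2 * (N : ℝ))) :
    -- (x*, z*) = (0,0) is optimal with Lagrange multiplier λ* = 1/2 and optimal value 0: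
    ((0 : ℝ) + 0 = 0 ∧
      (∀ y : ℝ, f 0 + -(1 / 2) * (y - 0) ≤ f y) ∧
      (∀ w : ℝ, g 0 + -(1 / 2) * (w - 0) ≤ g w) ∧
      (∀ p q : ℝ, p + q = 0 → 0 ≤ f p + g q) ∧
      f 0 + g 0 = 0) ∧
    -- the given sequences are valid ADMM iterates from λ⁰ = −1/2, z⁰ = 0:
    (lam 0 = -(1 / 2) ∧ z 0 = 0 ∧
      ∀ k, 1 ≤ k → k ≤ N →
        (∀ x' : ℝ, f (x k) + lam (k - 1) * x k + t / 2 * (x k + z (k - 1)) ^ 2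
            ≤ f x' + lam (k - 1) * x' + t / 2 * (x' + z (k - 1)) ^ 2) ∧
        (∀ z' : ℝ, g (z k) + lam (k - 1) * z k + t / 2 * (x k + z k) ^ 2
            ≤ g z' + lam (k - 1) * z' + t / 2 * (x k + z') ^ 2) ∧
        lam k = lam (k - 1) + t * (x k + z k)) ∧
    -- D(λᴺ) = −1/(4Nt) and D(λ*) = 0:
    IsLeast {w : ℝ | ∃ p q : ℝ, w = f p + g q + lam N * (p + q)} (-(1 / (4 * (N : ℝ) * t))) ∧
    IsLeast {w : ℝ | ∃ p q : ℝ, w = f p + g q + 1 / 2 * (p + q)} 0 ∧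
    -- so the bound of Theorem 3 is attained:
    (0 : ℝ) - -(1 / (4 * (N : ℝ) * t))
      = ((-(1 / 2) - 1 / 2) ^ 2 + t ^ 2 * ((0 : ℝ) - 0) ^ 2) / (4 * (N : ℝ) * t) := by
  have hn : (4 : ℝ) ≤ (N : ℝ) := by exact_mod_cast hN
  have hn0 : (0 : ℝ) < (N : ℝ) := by linarith
  set n : ℝ := (N : ℝ) with hn_def
  set c : ℝ := 1 / (2 * n * t) with hc_def
  have hc0 : 0 < c := by positivity
  have hntc : n * (t * c) = 1 / 2 := by
    rw [hc_def]; field_simp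
  have htc_small : 2 * (t * c) ≤ 1 / 2 := by
    nlinarith [mul_pos ht hc0]
  have htc_pos : 0 < t * c := mul_pos ht hc0
  -- polynomial form of g
  have hgb : ∀ q : ℝ, g q = 1/2 * max ((1 - 2*(t*c))*(q - c) - c) (-q) := by
    intro q
    rw [hg]
    have : (n - 1) / n * (q - c) = (1 - 2*(t*c))*(q - c) := by
      have h1 : (n - 1) / n = 1 - 2*(t*c) := by
        field_simp
        nlinarith [hntc]
      rw [h1]
    simp only [← hn_def, ← hc_def, this]
  have hg_lb : ∀ q : ℝ, -q / 2 ≤ g q := by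
    intro q
    rw [hgb]
    have := le_max_right ((1 - 2*(t*c))*(q - c) - c) (-q)
    linarith
  have hg_lb2 : ∀ q : ℝ, 1/2 * ((1 - 2*(t*c))*(q - c) - c) ≤ g q := by
    intro q
    rw [hgb]
    have := le_max_left ((1 - 2*(t*c))*(q - c) - c) (-q)
    linarith
  have hg_min : ∀ q : ℝ, -c / 2 ≤ g q := by
    intro q
    rw [hgb]
    rcases max_cases ((1 - 2*(t*c))*(q - c) - c) (-q) with ⟨h1, h2⟩ | ⟨h1, h2⟩
    · rw [h1]
      have hq : c ≤ q := by nlinarith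
      nlinarith
    · rw [h1]
      have hq : q ≤ c := by nlinarith
      linarith
  have hgc : g c = -c/2 := by
    have h : (1 - 2*(t*c))*(c - c) - c = -c := by ring
    rw [hgb, h, max_self]; ring
  have hf0 : f 0 = 0 := by rw [hf]; norm_num
  have hg0 : g 0 = 0 := by
    rw [hgb]
    have h1 : (1 - 2*(t*c))*((0:ℝ) - c) - c ≤ -(0:ℝ) := by nlinarith
    rw [max_eq_right h1]; ring
  have hfnn : ∀ p : ℝ, 0 ≤ f p := by
    intro p; rw [hf]; positivity
  have hc2 : 1 / (4 * n * t) = c / 2 := by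
    rw [hc_def]; field_simp; ring
  refine ⟨⟨by norm_num, ?_, ?_, ?_, by rw [hf0, hg0]; ring⟩, ?_, ?_, ?_, ?_⟩
  · -- subgradient ineq for f at 0
    intro y
    rw [hf0]
    simp only [hf]
    nlinarith [neg_abs_le y, mul_nonneg hc₁.le (sq_nonneg y)]
  · -- subgradient ineq for g at 0
    intro w
    rw [hg0]
    have := hg_lb w
    linarith
  · -- primal optimality
    intro p q hpq
    have h1 := hg_lb q
    have h2 : q = -p := by linarith
    rw [h2]
    simp only [hf]
    nlinarith [neg_abs_le p, mul_nonneg hc₁.le (sq_nonneg p), hg_lb (-p)]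
  · -- ADMM iterates
    refine ⟨by rw [hlam]; norm_num, by rw [hz]; norm_num, ?_⟩
    rintro k hk1 hkN
    obtain ⟨m, rfl⟩ : ∃ m, k = m + 1 := ⟨k - 1, (Nat.succ_pred_eq_of_pos hk1).symm⟩
    have hmN : (m : ℝ) + 1 ≤ n := by
      rw [hn_def]; exact_mod_cast hkN
    have hm0 : (0:ℝ) ≤ (m:ℝ) := Nat.cast_nonneg m
    simp only [Nat.add_sub_cancel]
    have hzm1 : z (m+1) = c := by rw [hz]; simp
    have hlamm : lam m = -(1/2) + (m:ℝ) * (t * c) := by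
      rw [hlam]
      have : (m:ℝ) / (2 * n) = (m:ℝ) * (t * c) := by
        rw [eq_comm, eq_div_iff (by positivity)]
        nlinarith [hntc]
      simp only [this]
    refine ⟨?_, ?_, ?_⟩
    · -- x-update
      intro x'
      rw [hx (m+1)]
      simp only [hf]
      have hb : (0:ℝ) ≤ (c₁ + t)/2 := by linarith
      rcases Nat.eq_zero_or_pos m with hm | hm
      · subst hm
        have hz0 : z 0 = 0 := by rw [hz]; simp
        rw [hz0, hlamm]
        have ha : |(-(1/2) + (0:ℕ) * (t*c) + t * (0:ℝ))| ≤ 1/2 := by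
          rw [abs_le]; norm_num
        have := aux_abs (-(1/2) + (0:ℕ) * (t*c) + t * (0:ℝ)) ((c₁ + t)/2) x' ha hb
        push_cast at this ⊢
        simp only [abs_zero]
        nlinarith [this]
      · have hzm : z m = c := by rw [hz]; simp [Nat.pos_iff_ne_zero.mp hm]
        rw [hzm, hlamm]
        have hm1 : (1:ℝ) ≤ (m:ℝ) := by exact_mod_cast hm
        have ha : |(-(1/2) + (m:ℝ) * (t*c) + t * c)| ≤ 1/2 := by
          rw [abs_le]
          constructor
          · nlinarith [mul_nonneg hm0 htc_pos.le]
          · -- -(1/2) + (m+1)(tc) ≤ 0 since (m+1) ≤ n and n tc = 1/2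
            nlinarith [mul_le_mul_of_nonneg_right hmN htc_pos.le]
        have := aux_abs (-(1/2) + (m:ℝ) * (t*c) + t * c) ((c₁ + t)/2) x' ha hb
        simp only [abs_zero]
        nlinarith [this]
    · -- z-update
      intro z'
      rw [hx (m+1), hzm1, hlamm, hgc, hgb z']
      rcases max_cases ((1 - 2*(t*c))*(z' - c) - c) (-z') with ⟨h1, h2⟩ | ⟨h1, h2⟩
      · rw [h1]
        have hzc : c ≤ z' := by nlinarith
        -- diff = t (z'-c) ((m-1) c + (z'+c)/2) with K = m+1, K-2 = m-1
        have hb2 : (0:ℝ) ≤ ((m:ℝ) - 1)*c + (z' + c)/2 := by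
          nlinarith [mul_nonneg hm0 hc0.le]
        nlinarith [mul_nonneg (mul_nonneg ht.le (by linarith : (0:ℝ) ≤ z' - c)) hb2]
      · rw [h1]
        have hzc : z' ≤ c := by nlinarith
        have hb2 : (m:ℝ) * (t*c) + t * (z' + c)/2 ≤ 1/2 := by
          nlinarith [mul_le_mul_of_nonneg_right hmN htc_pos.le,
            mul_le_mul_of_nonneg_left hzc ht.le]
        nlinarith [mul_nonneg (by linarith : (0:ℝ) ≤ c - z')
          (by linarith : (0:ℝ) ≤ 1 - ((m:ℝ) * (t*c) + t * (z' + c)/2))]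
    · -- lambda-update
      rw [hx (m+1), hzm1, hlam]
      simp only
      push_cast
      rw [eq_comm]
      field_simp
      nlinarith [hntc]
  · -- IsLeast D(lam N)
    have hlamN : lam N = 0 := by
      rw [hlam]
      field_simp
      ring
    constructor
    · exact ⟨0, c, by rw [hf0, hgc, hlamN, hc2]; ring⟩
    · rintro w ⟨p, q, rfl⟩
      rw [hlamN, hc2]
      have := hg_min q
      have := hfnn p
      linarith
  · -- IsLeast D(1/2)
    constructor
    · exact ⟨0, 0, by rw [hf0, hg0]; ring⟩
    · rintro w ⟨p, q, rfl⟩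
      have h1 := hg_lb q
      have h2 : 0 ≤ f p + 1/2 * p := by
        simp only [hf]
        nlinarith [neg_abs_le p, mul_nonneg hc₁.le (sq_nonneg p)]
      linarith
  · -- final identity
    rw [hc2, hc_def]
    norm_num
    field_simp
    ring
end

section
/- Let c₁ > 0, N ≥ 4 an integer, and 0 < t ≤ c₁. Define f, g : ℝ → ℝ by f(x) = (1/2)|x| + (c₁/2)x² and g(z) = max{ (1/2 − 1/N)(z − 1/(Nt)), (1/2)(1/(Nt) − z) }, and consider min f(x) + g(z) subject to x + z = 0 (so A = B = 1, b = 0). Then: (x*, z*) = (0, 0) is an optimal solution with Lagrange multiplier λ* = 1/2; ADMM with step t from λ⁰ = −1/2, z⁰ = 0 can generate the iterates x^k = 0, z^k = 1/(Nt), λ^k = (2k − N)/(2N) for k = 1, …, N; and |xᴺ + zᴺ| = 1/(tN) = √(‖λ⁰ − λ*‖² + t²|z⁰ − z*|²)/(tN), showing that the primal-residual bound of Theorem 4 is attained. -/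
set_option maxHeartbeats 1000000

/-- key inequality for the x-update -/
lemma key_x (c t a u : ℝ) (hc : 0 < c) (ht : 0 ≤ t) (ha : |a| ≤ 1/2) :
    0 ≤ 1/2 * |u| + (c + t)/2 * u ^ 2 + a * u := by
  rcases abs_le.mp ha with ⟨h1, h2⟩
  rcases le_or_gt 0 u with h | h
  · rw [abs_of_nonneg h]; nlinarith
  · rw [abs_of_neg h]; nlinarith

theorem stmt6 (c₁ : ℝ) (hc₁ : 0 < c₁) (N : ℕ) (hN : 4 ≤ N)
    (t : ℝ) (ht : 0 < t) (htc : t ≤ c₁)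
    (f g : ℝ → ℝ)
    (hf : f = fun x => 1 / 2 * |x| + c₁ / 2 * x ^ 2)
    (hg : g = fun z =>
      max ((1 / 2 - 1 / (N : ℝ)) * (z - 1 / ((N : ℝ) * t)))
        (1 / 2 * (1 / ((N : ℝ) * t) - z)))
    (x z lam : ℕ → ℝ)
    (hx : ∀ k, x k = 0)
    (hz : z = fun k : ℕ => if k = 0 then 0 else 1 / ((N : ℝ) * t))
    (hlam : lam = fun k : ℕ => (2 * (k : ℝ) - (N : ℝ)) / (2 * (N : ℝ))) :
    -- (x*, z*) = (0,0) is optimal with Lagrange multiplier λ* = 1/2: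
    ((0 : ℝ) + 0 = 0 ∧
      (∀ y : ℝ, f 0 + -(1 / 2) * (y - 0) ≤ f y) ∧
      (∀ w : ℝ, g 0 + -(1 / 2) * (w - 0) ≤ g w)) ∧
    -- the given sequences are valid ADMM iterates from λ⁰ = −1/2, z⁰ = 0:
    (lam 0 = -(1 / 2) ∧ z 0 = 0 ∧
      ∀ k, 1 ≤ k → k ≤ N →
        (∀ x' : ℝ, f (x k) + lam (k - 1) * x k + t / 2 * (x k + z (k - 1)) ^ 2
            ≤ f x' + lam (k - 1) * x' + t / 2 * (x' + z (k - 1)) ^ 2) ∧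
        (∀ z' : ℝ, g (z k) + lam (k - 1) * z k + t / 2 * (x k + z k) ^ 2
            ≤ g z' + lam (k - 1) * z' + t / 2 * (x k + z') ^ 2) ∧
        lam k = lam (k - 1) + t * (x k + z k)) ∧
    -- the primal-residual bound of Theorem 4 is attained:
    |x N + z N| = 1 / (t * (N : ℝ)) ∧
    1 / (t * (N : ℝ))
      = Real.sqrt ((-(1 / 2) - 1 / 2) ^ 2 + t ^ 2 * ((0 : ℝ) - 0) ^ 2) / (t * (N : ℝ)) := by
  subst hf hg hz hlam
  have hN4 : (4 : ℝ) ≤ (N : ℝ) := by exact_mod_cast hN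
  have hN0 : (0 : ℝ) < (N : ℝ) := by linarith
  have hNne : (N : ℝ) ≠ 0 := ne_of_gt hN0
  have htne : t ≠ 0 := ne_of_gt ht
  have hNt : (0 : ℝ) < (N : ℝ) * t := by positivity
  have hcpos : (0 : ℝ) < 1 / ((N : ℝ) * t) := by positivity
  have h1N : (0 : ℝ) < 1 / (N : ℝ) := by positivity
  have h1N4 : 1 / (N : ℝ) ≤ 1 / 4 := by
    apply one_div_le_one_div_of_le <;> linarith
  have htc' : t * (1 / ((N : ℝ) * t)) = 1 / (N : ℝ) := by field_simp
  refine ⟨⟨by norm_num, ?_, ?_⟩, ⟨?_, ?_, ?_⟩, ?_, ?_⟩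
  · -- f subgradient
    intro y
    simp only [abs_zero]
    have h1 := neg_abs_le y
    nlinarith [abs_nonneg y, sq_nonneg y]
  · -- g subgradient
    intro w
    simp only []
    have h1 : (1/2 - 1/(N:ℝ)) * ((0:ℝ) - 1/((N:ℝ)*t)) ≤ 1/2 * (1/((N:ℝ)*t) - 0) := by
      nlinarith [mul_nonpos_of_nonneg_of_nonpos (by linarith : (0:ℝ) ≤ 1/2 - 1/(N:ℝ))
        (by linarith : (0:ℝ) - 1/((N:ℝ)*t) ≤ 0)]
    rw [max_eq_right h1]
    refine le_trans (le_of_eq ?_) (le_max_right _ _)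
    ring
  · -- lam 0 = -1/2
    simp only [Nat.cast_zero]
    field_simp
    ring
  · -- z 0 = 0
    simp
  · -- the iterate conditions
    intro k hk1 hkN
    have hkne : k ≠ 0 := by omega
    have hkc : ((k - 1 : ℕ) : ℝ) = (k : ℝ) - 1 := by
      rw [Nat.cast_sub hk1]; norm_num
    have hk1r : (1 : ℝ) ≤ (k : ℝ) := by exact_mod_cast hk1
    have hkNr : (k : ℝ) ≤ (N : ℝ) := by exact_mod_cast hkN
    set lam' : ℝ := (2 * ((k : ℝ) - 1) - (N : ℝ)) / (2 * (N : ℝ)) with hlam'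
    have hlam'lb : -(1/2) ≤ lam' := by
      rw [hlam', le_div_iff₀ (by positivity)]; nlinarith
    have hlam'ub2 : lam' ≤ 1/2 := by
      rw [hlam', div_le_iff₀ (by positivity)]; nlinarith
    have hlam'ub : lam' + 1/(N:ℝ) ≤ 1/2 := by
      have h : lam' ≤ (N - 2) / (2 * N) := by
        rw [hlam', div_le_div_iff₀ (by positivity) (by positivity)]; nlinarith
      have h2 : ((N:ℝ) - 2) / (2 * (N:ℝ)) + 1/(N:ℝ) = 1/2 := by field_simp; ring
      linarith
    refine ⟨?_, ?_, ?_⟩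
    · -- x-update
      intro x'
      rw [hx k]
      simp only [hkc]
      set zp : ℝ := if k - 1 = 0 then (0:ℝ) else 1 / ((N:ℝ) * t) with hzp
      have ha : |lam' + t * zp| ≤ 1/2 := by
        rcases eq_or_ne (k - 1) 0 with h | h
        · rw [hzp, if_pos h, mul_zero, add_zero, abs_le]
          exact ⟨hlam'lb, hlam'ub2⟩
        · rw [hzp, if_neg h, htc', abs_le]
          exact ⟨by linarith, by linarith⟩
      have hkey := key_x c₁ t (lam' + t * zp) x' hc₁ (le_of_lt ht) ha
      simp only [abs_zero]
      nlinarith [hkey]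
    · -- z-update
      intro z'
      rw [hx k]
      simp only [hkc, if_neg hkne]
      set c : ℝ := 1 / ((N:ℝ) * t) with hc
      have hgc : max ((1/2 - 1/(N:ℝ)) * (c - c)) (1/2 * (c - c)) = 0 := by
        simp
      rw [hgc]
      have hm1 : (1/2 - 1/(N:ℝ)) * (z' - c) ≤
          max ((1/2 - 1/(N:ℝ)) * (z' - c)) (1/2 * (c - z')) := le_max_left _ _
      have hm2 : 1/2 * (c - z') ≤
          max ((1/2 - 1/(N:ℝ)) * (z' - c)) (1/2 * (c - z')) := le_max_right _ _
      have hprod : t * c * (c - z') = 1/(N:ℝ) * (c - z') := by rw [htc']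
      rcases le_total z' c with h | h
      · nlinarith [hm2, hprod,
          mul_nonneg (by linarith : (0:ℝ) ≤ 1/2 - (lam' + 1/(N:ℝ)))
            (by linarith : (0:ℝ) ≤ c - z'),
          mul_nonneg (le_of_lt ht) (sq_nonneg (c - z'))]
      · nlinarith [hm1, hprod,
          mul_nonneg (by linarith : (0:ℝ) ≤ lam' + 1/2)
            (by linarith : (0:ℝ) ≤ z' - c),
          mul_nonneg (le_of_lt ht) (sq_nonneg (z' - c))]
    · -- lam update
      rw [hx k]
      simp only [hkc, if_neg hkne]
      field_simp
      ring
  · -- |x N + z N| = 1/(tN)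
    rw [hx N]
    have hNne' : N ≠ 0 := by omega
    simp only [if_neg hNne', zero_add]
    rw [abs_of_pos hcpos, mul_comm]
  · norm_num
end

section
/- Let c₁ > 0, N ≥ 4 an integer, and 0 < t ≤ c₁. Define f, g : ℝ → ℝ by f(x) = (1/2)·max{ −((N+1)/(N−1))x, x } + (c₁/2)x² and g(z) = (1/2)·max{ 1/(t(N−1)) − z, ((N−3)/(N−1))(z − 1/(t(N−1))) }, and consider min f(x) + g(z) subject to x + z = 0 (so A = B = 1, b = 0). Then: (x*, z*) = (0, 0) is an optimal solution with Lagrange multiplier λ* = 1/2; ADMM with step t from λ⁰ = −1/2, z⁰ = 0 can generate the iterates x^k = 0 for k = 1, …, N, z^k = 1/(t(N−1)) for k = 1, …, N−1 and zᴺ = 0, λ^k = (2k + 1 − N)/(2(N−1)) for k = 1, …, N−1 and λᴺ = 1/2; hence |zᴺ − z^{N−1}| = 1/((N−1)t) = √(‖λ⁰ − λ*‖² + t²|z⁰ − z*|²)/((N−1)t), showing that the dual-residual bound of Theorem 5 is attained. -/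
private lemma xstep (a c₁ t lam zp x' : ℝ) (hc : 0 ≤ c₁) (ht : 0 ≤ t)
    (h1 : -(1/2) ≤ lam + t*zp) (h2 : lam + t*zp ≤ a/2) :
    1 / 2 * max (-a * (0:ℝ)) 0 + c₁ / 2 * (0:ℝ) ^ 2 + lam * 0 + t / 2 * ((0:ℝ) + zp) ^ 2
      ≤ 1 / 2 * max (-a * x') x' + c₁ / 2 * x' ^ 2 + lam * x' + t / 2 * (x' + zp) ^ 2 := by
  have h0 : max (-a * (0:ℝ)) 0 = 0 := by norm_num
  rw [h0]
  rcases le_total 0 x' with h | h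
  · have hb := le_max_right (-a * x') x'
    nlinarith [mul_nonneg h (by linarith : (0:ℝ) ≤ lam + t*zp + 1/2),
      mul_nonneg hc (sq_nonneg x'), mul_nonneg ht (sq_nonneg x')]
  · have hb := le_max_left (-a * x') x'
    nlinarith [mul_nonneg (neg_nonneg.2 h) (by linarith : (0:ℝ) ≤ a/2 - (lam + t*zp)),
      mul_nonneg hc (sq_nonneg x'), mul_nonneg ht (sq_nonneg x')]

private lemma zstep1 (s m lam t z' : ℝ) (ht : 0 ≤ t)
    (hl : -(m/2) ≤ lam + t*s) (hu : lam + t*s ≤ 1/2) :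
    1 / 2 * max (s - s) (m * (s - s)) + lam * s + t / 2 * ((0:ℝ) + s) ^ 2
      ≤ 1 / 2 * max (s - z') (m * (z' - s)) + lam * z' + t / 2 * ((0:ℝ) + z') ^ 2 := by
  have h0 : max (s - s) (m * (s - s)) = 0 := by simp
  rw [h0]
  rcases le_total z' s with h | h
  · have hb := le_max_left (s - z') (m * (z' - s))
    nlinarith [mul_nonneg (sub_nonneg.2 h) (by linarith : (0:ℝ) ≤ 1/2 - (lam + t*s)),
      mul_nonneg ht (sq_nonneg (z' - s))]
  · have hb := le_max_right (s - z') (m * (z' - s))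
    nlinarith [mul_nonneg (sub_nonneg.2 h) (by linarith : (0:ℝ) ≤ lam + t*s + m/2),
      mul_nonneg ht (sq_nonneg (z' - s))]

private lemma zstepN (s m t z' : ℝ) (ht : 0 ≤ t) (hs : 0 ≤ s) (hm : 0 ≤ m) :
    1 / 2 * max (s - 0) (m * ((0:ℝ) - s)) + 1 / 2 * (0:ℝ) + t / 2 * ((0:ℝ) + 0) ^ 2
      ≤ 1 / 2 * max (s - z') (m * (z' - s)) + 1 / 2 * z' + t / 2 * ((0:ℝ) + z') ^ 2 := by
  have h0 : max (s - 0) (m * ((0:ℝ) - s)) = s := by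
    rw [max_eq_left (by nlinarith [mul_nonneg hm hs])]; ring
  rw [h0]
  have hb := le_max_left (s - z') (m * (z' - s))
  nlinarith [mul_nonneg ht (sq_nonneg z')]

set_option maxHeartbeats 2000000 in



theorem stmt8 (c₁ : ℝ) (hc₁ : 0 < c₁) (N : ℕ) (hN : 4 ≤ N)
    (t : ℝ) (ht : 0 < t) (htc : t ≤ c₁)
    (f g : ℝ → ℝ)
    (hf : f = fun x => 1 / 2 * max (-(((N : ℝ) + 1) / ((N : ℝ) - 1)) * x) x + c₁ / 2 * x ^ 2)
    (hg : g = fun z =>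
      1 / 2 * max (1 / (t * ((N : ℝ) - 1)) - z)
        (((N : ℝ) - 3) / ((N : ℝ) - 1) * (z - 1 / (t * ((N : ℝ) - 1)))))
    (x z lam : ℕ → ℝ)
    (hx : ∀ k, x k = 0)
    (hz : z = fun k : ℕ =>
      if k = 0 then 0 else if k ≤ N - 1 then 1 / (t * ((N : ℝ) - 1)) else 0)
    (hlam : lam = fun k : ℕ =>
      if k = 0 then -(1 / 2)
      else if k ≤ N - 1 then (2 * (k : ℝ) + 1 - (N : ℝ)) / (2 * ((N : ℝ) - 1))
      else 1 / 2) :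
    -- (x*, z*) = (0,0) is optimal with Lagrange multiplier λ* = 1/2:
    ((0 : ℝ) + 0 = 0 ∧
      (∀ y : ℝ, f 0 + -(1 / 2) * (y - 0) ≤ f y) ∧
      (∀ w : ℝ, g 0 + -(1 / 2) * (w - 0) ≤ g w)) ∧
    -- the given sequences are valid ADMM iterates from λ⁰ = −1/2, z⁰ = 0:
    (lam 0 = -(1 / 2) ∧ z 0 = 0 ∧
      ∀ k, 1 ≤ k → k ≤ N →
        (∀ x' : ℝ, f (x k) + lam (k - 1) * x k + t / 2 * (x k + z (k - 1)) ^ 2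
            ≤ f x' + lam (k - 1) * x' + t / 2 * (x' + z (k - 1)) ^ 2) ∧
        (∀ z' : ℝ, g (z k) + lam (k - 1) * z k + t / 2 * (x k + z k) ^ 2
            ≤ g z' + lam (k - 1) * z' + t / 2 * (x k + z') ^ 2) ∧
        lam k = lam (k - 1) + t * (x k + z k)) ∧
    -- the dual-residual bound of Theorem 5 is attained:
    |z N - z (N - 1)| = 1 / (((N : ℝ) - 1) * t) ∧
    1 / (((N : ℝ) - 1) * t)
      = Real.sqrt ((-(1 / 2) - 1 / 2) ^ 2 + t ^ 2 * ((0 : ℝ) - 0) ^ 2) / (((N : ℝ) - 1) * t) := by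
  have hN4 : (4:ℝ) ≤ (N:ℝ) := by exact_mod_cast hN
  have hN1 : (0:ℝ) < (N:ℝ) - 1 := by linarith
  have hs0 : 0 < 1 / (t * ((N:ℝ) - 1)) := by positivity
  have hm0 : (0:ℝ) ≤ ((N:ℝ) - 3) / ((N:ℝ) - 1) := by
    apply div_nonneg <;> linarith
  have hts : t * (1 / (t * ((N:ℝ) - 1))) = 1 / ((N:ℝ) - 1) := by
    field_simp
  have hne : ((N:ℝ) - 1) ≠ 0 := ne_of_gt hN1
  have htne : t ≠ 0 := ne_of_gt ht
  have hinv : (0:ℝ) < 1 / ((N:ℝ) - 1) := by positivity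
  have hinv1 : 1 / ((N:ℝ) - 1) ≤ 1 := by rw [div_le_one hN1]; linarith
  refine ⟨⟨by norm_num, ?_, ?_⟩, ⟨?_, ?_, ?_⟩, ?_, ?_⟩
  · -- f optimality
    intro y
    simp only [hf]
    have h00 : max (-(((N:ℝ) + 1) / ((N:ℝ) - 1)) * (0:ℝ)) 0 = 0 := by norm_num
    rw [h00]
    have ha1 : (1:ℝ) ≤ ((N:ℝ) + 1) / ((N:ℝ) - 1) := by
      rw [le_div_iff₀ hN1]; linarith
    rcases le_total 0 y with h | h
    · have hb := le_max_right (-(((N:ℝ) + 1) / ((N:ℝ) - 1)) * y) y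
      nlinarith [mul_nonneg hc₁.le (sq_nonneg y)]
    · have hb := le_max_left (-(((N:ℝ) + 1) / ((N:ℝ) - 1)) * y) y
      nlinarith [mul_nonneg (neg_nonneg.2 h) (by linarith : (0:ℝ) ≤ ((N:ℝ) + 1) / ((N:ℝ) - 1) - 1),
        mul_nonneg hc₁.le (sq_nonneg y)]
  · -- g optimality
    intro w
    simp only [hg]
    have h00 : max (1 / (t * ((N:ℝ) - 1)) - 0)
        (((N:ℝ) - 3) / ((N:ℝ) - 1) * ((0:ℝ) - 1 / (t * ((N:ℝ) - 1)))) = 1 / (t * ((N:ℝ) - 1)) := by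
      rw [max_eq_left (by nlinarith [mul_nonneg hm0 hs0.le])]; ring
    rw [h00]
    have hb := le_max_left (1 / (t * ((N:ℝ) - 1)) - w)
      (((N:ℝ) - 3) / ((N:ℝ) - 1) * (w - 1 / (t * ((N:ℝ) - 1))))
    linarith
  · simp [hlam]
  · simp [hz]
  · -- ADMM iterates
    intro k hk1 hkN
    have hcast : ((k - 1 : ℕ) : ℝ) = (k:ℝ) - 1 := by
      have := Nat.cast_sub hk1 (R := ℝ); simpa using this
    have hkR : (1:ℝ) ≤ (k:ℝ) := by exact_mod_cast hk1
    have hkRN : (k:ℝ) ≤ (N:ℝ) := by exact_mod_cast hkN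
    by_cases hk1' : k = 1
    · -- case k = 1
      subst hk1'
      have hzp : z (1 - 1) = 0 := by simp [hz]
      have hlp : lam (1 - 1) = -(1/2) := by simp [hlam]
      have hzk : z 1 = 1 / (t * ((N:ℝ) - 1)) := by
        simp only [hz]; rw [if_neg (by omega), if_pos (by omega)]
      have hlk : lam 1 = (2 * ((1:ℕ):ℝ) + 1 - (N:ℝ)) / (2 * ((N:ℝ) - 1)) := by
        simp only [hlam]; rw [if_neg (by omega), if_pos (by omega)]
      refine ⟨?_, ?_, ?_⟩
      · intro x'
        simp only [hf, hx, hzp, hlp]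
        refine xstep _ c₁ t _ _ x' hc₁.le ht.le (by norm_num) ?_
        have ha1 : (1:ℝ) ≤ ((N:ℝ) + 1) / ((N:ℝ) - 1) := by
          rw [le_div_iff₀ hN1]; linarith
        nlinarith
      · intro z'
        simp only [hg, hx, hzk, hlp]
        refine zstep1 _ _ _ t z' ht.le ?_ ?_
        · rw [hts, ← sub_nonneg]
          have e : -(1/2) + 1 / ((N:ℝ) - 1) - -(((N:ℝ) - 3) / ((N:ℝ) - 1) / 2) = 0 := by
            field_simp
            ring
          linarith
        · rw [hts]; linarith
      · rw [hlk, hlp, hx, hzk, zero_add, hts]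
        push_cast
        rw [eq_comm, ← sub_eq_zero]
        field_simp
        ring
    · by_cases hkn : k = N
      · -- case k = N
        have hkNR : (k:ℝ) = (N:ℝ) := by exact_mod_cast hkn
        have hzp : z (k - 1) = 1 / (t * ((N:ℝ) - 1)) := by
          simp only [hz]; rw [if_neg (by omega), if_pos (by omega)]
        have hlp : lam (k - 1) = 1 / 2 := by
          simp only [hlam]; rw [if_neg (by omega), if_pos (by omega), hcast, hkNR]
          field_simp
          ring
        have hzk : z k = 0 := by
          simp only [hz]; rw [if_neg (by omega), if_neg (by omega)]
        have hlk : lam k = 1 / 2 := by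
          simp only [hlam]; rw [if_neg (by omega), if_neg (by omega)]
        refine ⟨?_, ?_, ?_⟩
        · intro x'
          simp only [hf, hx, hzp, hlp]
          refine xstep _ c₁ t _ _ x' hc₁.le ht.le ?_ ?_
          · rw [hts]; linarith
          · rw [hts, ← sub_nonneg]
            have e : ((N:ℝ) + 1) / ((N:ℝ) - 1) / 2 - (1/2 + 1 / ((N:ℝ) - 1)) = 0 := by
              field_simp; ring
            linarith
        · intro z'
          simp only [hg, hx, hzk, hlp]
          exact zstepN _ _ t z' ht.le hs0.le hm0
        · rw [hlk, hlp, hx, hzk]; ring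
      · -- case 2 ≤ k ≤ N-1
        have hk2 : 2 ≤ k := by omega
        have hkN1 : (k:ℝ) ≤ (N:ℝ) - 1 := by
          have hn : k + 1 ≤ N := by omega
          have h2 : (k:ℝ) + 1 ≤ (N:ℝ) := by exact_mod_cast hn
          linarith
        have hzp : z (k - 1) = 1 / (t * ((N:ℝ) - 1)) := by
          simp only [hz]; rw [if_neg (by omega), if_pos (by omega)]
        have hlp : lam (k - 1) = (2 * ((k:ℝ) - 1) + 1 - (N:ℝ)) / (2 * ((N:ℝ) - 1)) := by
          simp only [hlam]; rw [if_neg (by omega), if_pos (by omega), hcast]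
        have hzk : z k = 1 / (t * ((N:ℝ) - 1)) := by
          simp only [hz]; rw [if_neg (by omega), if_pos (by omega)]
        have hlk : lam k = (2 * (k:ℝ) + 1 - (N:ℝ)) / (2 * ((N:ℝ) - 1)) := by
          simp only [hlam]; rw [if_neg (by omega), if_pos (by omega)]
        refine ⟨?_, ?_, ?_⟩
        · intro x'
          simp only [hf, hx, hzp, hlp]
          refine xstep _ c₁ t _ _ x' hc₁.le ht.le ?_ ?_
          · rw [hts, ← sub_nonneg]
            have e : (2 * ((k:ℝ) - 1) + 1 - (N:ℝ)) / (2 * ((N:ℝ) - 1)) + 1 / ((N:ℝ) - 1)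
                - -(1/2) = (k:ℝ) / ((N:ℝ) - 1) := by
              field_simp; ring
            rw [e]; positivity
          · rw [hts, ← sub_nonneg]
            have e : ((N:ℝ) + 1) / ((N:ℝ) - 1) / 2 -
                ((2 * ((k:ℝ) - 1) + 1 - (N:ℝ)) / (2 * ((N:ℝ) - 1)) + 1 / ((N:ℝ) - 1))
                = ((N:ℝ) - (k:ℝ)) / ((N:ℝ) - 1) := by
              field_simp; ring
            rw [e]
            apply div_nonneg (by linarith) hN1.le
        · intro z'
          simp only [hg, hx, hzk, hlp]
          refine zstep1 _ _ _ t z' ht.le ?_ ?_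
          · rw [hts, ← sub_nonneg]
            have e : (2 * ((k:ℝ) - 1) + 1 - (N:ℝ)) / (2 * ((N:ℝ) - 1)) + 1 / ((N:ℝ) - 1)
                - -(((N:ℝ) - 3) / ((N:ℝ) - 1) / 2) = ((k:ℝ) - 1) / ((N:ℝ) - 1) := by
              field_simp; ring
            rw [e]
            apply div_nonneg (by linarith) hN1.le
          · rw [hts, ← sub_nonneg]
            have e : 1/2 - ((2 * ((k:ℝ) - 1) + 1 - (N:ℝ)) / (2 * ((N:ℝ) - 1)) + 1 / ((N:ℝ) - 1))
                = ((N:ℝ) - 1 - (k:ℝ)) / ((N:ℝ) - 1) := by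
              field_simp; ring
            rw [e]
            apply div_nonneg (by linarith) hN1.le
        · rw [hlk, hlp, hx, hzk, zero_add, hts]
          rw [eq_comm, ← sub_eq_zero]
          field_simp
          ring
  · -- dual residual
    have hzN : z N = 0 := by
      simp only [hz]; rw [if_neg (by omega), if_neg (by omega)]
    have hzN1 : z (N - 1) = 1 / (t * ((N:ℝ) - 1)) := by
      simp only [hz]; rw [if_neg (by omega), if_pos (by omega)]
    rw [hzN, hzN1, zero_sub, abs_neg, abs_of_pos hs0, mul_comm t]
  · norm_num
end

section
/- Let a > 0 and τ > 0, and suppose the augmented dual objective D^a satisfies the error bound: for every λ ∈ ℝʳ and every minimizer (x̄, z̄) of (x,z) ↦ f(x) + g(z) + ⟨λ, Ax + Bz − b⟩ + (a/2)‖Ax + Bz − b‖², one has d_{Λ*}(λ) ≤ τ‖Ax̄ + Bz̄ − b‖. Then D satisfies the Polyak–Łojasiewicz inequality with constant L_p = a/τ²; that is, for every λ ∈ ℝʳ and every minimizer (x, z) of (x,z) ↦ f(x) + g(z) + ⟨λ, Ax + Bz − b⟩, one has D(λ*) − D(λ) ≤ (τ²/(2a))‖Ax + Bz − b‖². -/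
/-!
If `(x, z)` minimizes the Lagrangian at `λ` with residual `ρ = Ax + Bz - b`, then it also
minimizes the augmented Lagrangian at `λ̂ = λ - a ρ`, because the two differ by
`(a/2)‖ρ' - ρ‖² - (a/2)‖ρ‖²`. So the error bound at `λ̂` bounds the distance from `λ̂` to the
dual optimal set by `τ‖ρ‖`, while weak duality at each dual optimal `ν` yields
`D(λ*) - D(λ) ≤ ⟨ν - λ, ρ⟩ = ⟨ν - λ̂, ρ⟩ - a‖ρ‖² ≤ (τ - a)‖ρ‖² ≤ τ²/(2a) ‖ρ‖²`.
-/

open Matrix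

section DotProduct

variable {ι : Type*} [Fintype ι]

lemma dotProduct_self_nonneg_real (v : ι → ℝ) : 0 ≤ v ⬝ᵥ v := by
  simpa using dotProduct_self_star_nonneg v

lemma dotProduct_le_sqrt_mul_sqrt (u v : ι → ℝ) :
    u ⬝ᵥ v ≤ √(u ⬝ᵥ u) * √(v ⬝ᵥ v) := by
  have hnorm : ∀ w : ι → ℝ, √(w ⬝ᵥ w) = ‖(WithLp.toLp 2 w : EuclideanSpace ℝ ι)‖ := fun w => by
    rw [norm_eq_sqrt_real_inner, EuclideanSpace.inner_toLp_toLp, star_trivial]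
  rw [hnorm, hnorm]
  simpa [EuclideanSpace.inner_toLp_toLp, dotProduct_comm] using
    real_inner_le_norm (WithLp.toLp 2 u : EuclideanSpace ℝ ι) (WithLp.toLp 2 v)

lemma augmentedLagrangian_le_of_isMinimizer {X : Type*} (F : X → ℝ) (ρ : X → ι → ℝ) (lam : ι → ℝ)
    {a : ℝ} (ha : 0 ≤ a) {x : X} (hx : ∀ y, F x + lam ⬝ᵥ ρ x ≤ F y + lam ⬝ᵥ ρ y) (y : X) :
    F x + (lam - a • ρ x) ⬝ᵥ ρ x + a / 2 * (ρ x ⬝ᵥ ρ x)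
      ≤ F y + (lam - a • ρ x) ⬝ᵥ ρ y + a / 2 * (ρ y ⬝ᵥ ρ y) := by
  have hsq := mul_nonneg ha (dotProduct_self_nonneg_real (ρ y - ρ x))
  simp only [sub_dotProduct, dotProduct_sub, smul_dotProduct, smul_eq_mul,
    dotProduct_comm (ρ y) (ρ x)] at hsq ⊢
  nlinarith [hx y]

end DotProduct

lemma le_sInf_mul {S : Set ℝ} (hS : S.Nonempty) {c t : ℝ} (ht : 0 ≤ t)
    (h : ∀ s ∈ S, c ≤ s * t) : c ≤ sInf S * t := by
  have hscale := Real.sInf_smul_of_nonneg ht S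
  rw [smul_eq_mul] at hscale
  rw [mul_comm, ← hscale]
  refine le_csInf hS.smul_set ?_
  rintro _ ⟨s, hs, rfl⟩
  simpa only [smul_eq_mul, mul_comm t] using h s hs

lemma sub_le_sq_div_two_mul {a τ : ℝ} (ha : 0 < a) : τ - a ≤ τ ^ 2 / (2 * a) := by
  rw [le_div_iff₀ (by positivity)]
  nlinarith [sq_nonneg (τ - a)]

theorem stmt9_general {n m r : ℕ}
    (A : Matrix (Fin r) (Fin n) ℝ) (B : Matrix (Fin r) (Fin m) ℝ) (b : Fin r → ℝ)
    (f : (Fin n → ℝ) → ℝ) (g : (Fin m → ℝ) → ℝ)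
    (a τ : ℝ) (ha : 0 < a)
    -- the dual objective D: lower bound property, and equality at attained minimizers
    (D : (Fin r → ℝ) → ℝ)
    (hD_lb : ∀ (lam : Fin r → ℝ) (x : Fin n → ℝ) (z : Fin m → ℝ),
      D lam ≤ f x + g z + lam ⬝ᵥ (A *ᵥ x + B *ᵥ z - b))
    (hD_eq : ∀ (lam : Fin r → ℝ) (x : Fin n → ℝ) (z : Fin m → ℝ),
      (∀ x' z', f x + g z + lam ⬝ᵥ (A *ᵥ x + B *ᵥ z - b)
          ≤ f x' + g z' + lam ⬝ᵥ (A *ᵥ x' + B *ᵥ z' - b)) →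
      D lam = f x + g z + lam ⬝ᵥ (A *ᵥ x + B *ᵥ z - b))
    -- λ* is a dual optimal point
    (lamstar : Fin r → ℝ) (hstar : ∀ lam, D lam ≤ D lamstar)
    -- error bound for the augmented dual objective:
    (hEB : ∀ (lam : Fin r → ℝ) (xb : Fin n → ℝ) (zb : Fin m → ℝ),
      (∀ x' z',
        f xb + g zb + lam ⬝ᵥ (A *ᵥ xb + B *ᵥ zb - b)
            + a / 2 * ((A *ᵥ xb + B *ᵥ zb - b) ⬝ᵥ (A *ᵥ xb + B *ᵥ zb - b))
          ≤ f x' + g z' + lam ⬝ᵥ (A *ᵥ x' + B *ᵥ z' - b)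
            + a / 2 * ((A *ᵥ x' + B *ᵥ z' - b) ⬝ᵥ (A *ᵥ x' + B *ᵥ z' - b))) →
      sInf {dd : ℝ | ∃ ν : Fin r → ℝ, (∀ μ, D μ ≤ D ν) ∧
          dd = Real.sqrt ((ν - lam) ⬝ᵥ (ν - lam))}
        ≤ τ * Real.sqrt ((A *ᵥ xb + B *ᵥ zb - b) ⬝ᵥ (A *ᵥ xb + B *ᵥ zb - b))) :
    -- conclusion: D satisfies the PŁ inequality with constant L_p = a/τ²
    ∀ (lam : Fin r → ℝ) (x : Fin n → ℝ) (z : Fin m → ℝ),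
      (∀ x' z', f x + g z + lam ⬝ᵥ (A *ᵥ x + B *ᵥ z - b)
          ≤ f x' + g z' + lam ⬝ᵥ (A *ᵥ x' + B *ᵥ z' - b)) →
      D lamstar - D lam
        ≤ τ ^ 2 / (2 * a) * ((A *ᵥ x + B *ᵥ z - b) ⬝ᵥ (A *ᵥ x + B *ᵥ z - b)) := by
  intro lam x z hmin
  set ρ := A *ᵥ x + B *ᵥ z - b
  have haug := augmentedLagrangian_le_of_isMinimizer (fun p => f p.1 + g p.2)
    (fun p => A *ᵥ p.1 + B *ᵥ p.2 - b) lam ha.le (x := (x, z)) fun p => hmin p.1 p.2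
  have hdist := hEB (lam - a • ρ) x z fun x' z' => haug (x', z')
  have hgap : ∀ s ∈ {dd : ℝ | ∃ ν : Fin r → ℝ, (∀ μ, D μ ≤ D ν) ∧
      dd = √((ν - (lam - a • ρ)) ⬝ᵥ (ν - (lam - a • ρ)))},
      D lamstar - D lam + a * (ρ ⬝ᵥ ρ) ≤ s * √(ρ ⬝ᵥ ρ) := by
    rintro _ ⟨ν, hν, rfl⟩
    calc D lamstar - D lam + a * (ρ ⬝ᵥ ρ)
        ≤ ν ⬝ᵥ ρ - lam ⬝ᵥ ρ + a * (ρ ⬝ᵥ ρ) := by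
          linarith [hν lamstar, hD_lb ν x z, hD_eq lam x z hmin]
      _ = (ν - (lam - a • ρ)) ⬝ᵥ ρ := by
          simp only [sub_dotProduct, smul_dotProduct, smul_eq_mul]; ring
      _ ≤ _ := dotProduct_le_sqrt_mul_sqrt _ _
  have hinf := le_sInf_mul (by exact ⟨_, lamstar, hstar, rfl⟩) (Real.sqrt_nonneg _) hgap
  have hρ := dotProduct_self_nonneg_real ρ
  have hbound : D lamstar - D lam + a * (ρ ⬝ᵥ ρ) ≤ τ * (ρ ⬝ᵥ ρ) := calc
    _ ≤ _ := hinf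
    _ ≤ τ * √(ρ ⬝ᵥ ρ) * √(ρ ⬝ᵥ ρ) := mul_le_mul_of_nonneg_right hdist (Real.sqrt_nonneg _)
    _ = τ * (ρ ⬝ᵥ ρ) := by rw [mul_assoc, Real.mul_self_sqrt hρ]
  calc D lamstar - D lam ≤ (τ - a) * (ρ ⬝ᵥ ρ) := by linarith
    _ ≤ τ ^ 2 / (2 * a) * (ρ ⬝ᵥ ρ) :=
        mul_le_mul_of_nonneg_right (sub_le_sq_div_two_mul ha) hρ

theorem stmt9 {n m r : ℕ}
    (A : Matrix (Fin r) (Fin n) ℝ) (B : Matrix (Fin r) (Fin m) ℝ) (b : Fin r → ℝ)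
    (f : (Fin n → ℝ) → ℝ) (g : (Fin m → ℝ) → ℝ)
    (hf : ConvexOn ℝ Set.univ f) (hg : ConvexOn ℝ Set.univ g)
    (a τ : ℝ) (ha : 0 < a) (hτ : 0 < τ)
    -- the dual objective D: lower bound property, and equality at attained minimizers
    (D : (Fin r → ℝ) → ℝ)
    (hD_lb : ∀ (lam : Fin r → ℝ) (x : Fin n → ℝ) (z : Fin m → ℝ),
      D lam ≤ f x + g z + lam ⬝ᵥ (A *ᵥ x + B *ᵥ z - b))
    (hD_eq : ∀ (lam : Fin r → ℝ) (x : Fin n → ℝ) (z : Fin m → ℝ),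
      (∀ x' z', f x + g z + lam ⬝ᵥ (A *ᵥ x + B *ᵥ z - b)
          ≤ f x' + g z' + lam ⬝ᵥ (A *ᵥ x' + B *ᵥ z' - b)) →
      D lam = f x + g z + lam ⬝ᵥ (A *ᵥ x + B *ᵥ z - b))
    -- λ* is a dual optimal point
    (lamstar : Fin r → ℝ) (hstar : ∀ lam, D lam ≤ D lamstar)
    -- error bound for the augmented dual objective:
    (hEB : ∀ (lam : Fin r → ℝ) (xb : Fin n → ℝ) (zb : Fin m → ℝ),
      (∀ x' z',
        f xb + g zb + lam ⬝ᵥ (A *ᵥ xb + B *ᵥ zb - b)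
            + a / 2 * ((A *ᵥ xb + B *ᵥ zb - b) ⬝ᵥ (A *ᵥ xb + B *ᵥ zb - b))
          ≤ f x' + g z' + lam ⬝ᵥ (A *ᵥ x' + B *ᵥ z' - b)
            + a / 2 * ((A *ᵥ x' + B *ᵥ z' - b) ⬝ᵥ (A *ᵥ x' + B *ᵥ z' - b))) →
      sInf {dd : ℝ | ∃ ν : Fin r → ℝ, (∀ μ, D μ ≤ D ν) ∧
          dd = Real.sqrt ((ν - lam) ⬝ᵥ (ν - lam))}
        ≤ τ * Real.sqrt ((A *ᵥ xb + B *ᵥ zb - b) ⬝ᵥ (A *ᵥ xb + B *ᵥ zb - b))) :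
    -- conclusion: D satisfies the PŁ inequality with constant L_p = a/τ²
    ∀ (lam : Fin r → ℝ) (x : Fin n → ℝ) (z : Fin m → ℝ),
      (∀ x' z', f x + g z + lam ⬝ᵥ (A *ᵥ x + B *ᵥ z - b)
          ≤ f x' + g z' + lam ⬝ᵥ (A *ᵥ x' + B *ᵥ z' - b)) →
      D lamstar - D lam
        ≤ τ ^ 2 / (2 * a) * ((A *ᵥ x + B *ᵥ z - b) ⬝ᵥ (A *ᵥ x + B *ᵥ z - b)) :=
  stmt9_general A B b f g a τ ha D hD_lb hD_eq lamstar hstar hEB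
end

section
/- Let a > 0 and suppose D satisfies the Polyak–Łojasiewicz inequality with constant L_p > 0. Then for every λ ∈ ℝʳ and every minimizer (x̄, z̄) of (x,z) ↦ f(x) + g(z) + ⟨λ, Ax + Bz − b⟩ + (a/2)‖Ax + Bz − b‖², one has D^a(λ*) − D^a(λ) ≤ (1/(2L_p) + a/2)‖Ax̄ + Bz̄ − b‖²; that is, the augmented dual objective D^a satisfies the Polyak–Łojasiewicz inequality with constant L_p/(1 + aL_p). -/
open Matrix


private lemma dot_aux1 {r : ℕ} (l v w : Fin r → ℝ) (t : ℝ) :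
    l ⬝ᵥ (v + t • (w - v)) = l ⬝ᵥ v + t * (l ⬝ᵥ w - l ⬝ᵥ v) := by
  rw [dotProduct_add, dotProduct_smul, smul_eq_mul,
    dotProduct_sub]

private lemma dot_aux2 {r : ℕ} (v w : Fin r → ℝ) (t : ℝ) :
    (v + t • (w - v)) ⬝ᵥ (v + t • (w - v))
      = v ⬝ᵥ v + 2 * t * (v ⬝ᵥ (w - v)) + t * t * ((w - v) ⬝ᵥ (w - v)) := by
  rw [dotProduct_add, add_dotProduct, add_dotProduct,
    dotProduct_smul, smul_dotProduct, smul_dotProduct,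
    dotProduct_smul]
  have h : (w - v) ⬝ᵥ v = v ⬝ᵥ (w - v) := dotProduct_comm _ _
  simp only [smul_eq_mul, h]
  ring

private lemma dot_aux3 {r : ℕ} (l v w : Fin r → ℝ) (a : ℝ) :
    (l + a • v) ⬝ᵥ w = l ⬝ᵥ w + a * (v ⬝ᵥ w) := by
  rw [add_dotProduct, smul_dotProduct, smul_eq_mul]

theorem stmt10 {n m r : ℕ}
    (A : Matrix (Fin r) (Fin n) ℝ) (B : Matrix (Fin r) (Fin m) ℝ) (b : Fin r → ℝ)
    (f : (Fin n → ℝ) → ℝ) (g : (Fin m → ℝ) → ℝ)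
    (hf : ConvexOn ℝ Set.univ f) (hg : ConvexOn ℝ Set.univ g)
    (a : ℝ) (ha : 0 < a) (Lp : ℝ) (hLp : 0 < Lp)
    -- the dual objective D: lower bound property, and equality at attained minimizers
    (D : (Fin r → ℝ) → ℝ)
    (hD_lb : ∀ (lam : Fin r → ℝ) (x : Fin n → ℝ) (z : Fin m → ℝ),
      D lam ≤ f x + g z + lam ⬝ᵥ (A *ᵥ x + B *ᵥ z - b))
    (hD_eq : ∀ (lam : Fin r → ℝ) (x : Fin n → ℝ) (z : Fin m → ℝ),
      (∀ x' z', f x + g z + lam ⬝ᵥ (A *ᵥ x + B *ᵥ z - b)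
          ≤ f x' + g z' + lam ⬝ᵥ (A *ᵥ x' + B *ᵥ z' - b)) →
      D lam = f x + g z + lam ⬝ᵥ (A *ᵥ x + B *ᵥ z - b))
    -- the augmented dual objective D^a: same two properties
    (Da : (Fin r → ℝ) → ℝ)
    (hDa_lb : ∀ (lam : Fin r → ℝ) (x : Fin n → ℝ) (z : Fin m → ℝ),
      Da lam ≤ f x + g z + lam ⬝ᵥ (A *ᵥ x + B *ᵥ z - b)
        + a / 2 * ((A *ᵥ x + B *ᵥ z - b) ⬝ᵥ (A *ᵥ x + B *ᵥ z - b)))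
    (hDa_eq : ∀ (lam : Fin r → ℝ) (x : Fin n → ℝ) (z : Fin m → ℝ),
      (∀ x' z',
        f x + g z + lam ⬝ᵥ (A *ᵥ x + B *ᵥ z - b)
            + a / 2 * ((A *ᵥ x + B *ᵥ z - b) ⬝ᵥ (A *ᵥ x + B *ᵥ z - b))
          ≤ f x' + g z' + lam ⬝ᵥ (A *ᵥ x' + B *ᵥ z' - b)
            + a / 2 * ((A *ᵥ x' + B *ᵥ z' - b) ⬝ᵥ (A *ᵥ x' + B *ᵥ z' - b))) →
      Da lam = f x + g z + lam ⬝ᵥ (A *ᵥ x + B *ᵥ z - b)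
        + a / 2 * ((A *ᵥ x + B *ᵥ z - b) ⬝ᵥ (A *ᵥ x + B *ᵥ z - b)))
    -- λ* is a dual optimal point, with D^a(λ*) = D(λ*)
    (lamstar : Fin r → ℝ) (hstar : ∀ lam, D lam ≤ D lamstar)
    (hDaDstar : Da lamstar = D lamstar)
    -- D satisfies the PŁ inequality with constant L_p:
    (hPL : ∀ (lam : Fin r → ℝ) (x : Fin n → ℝ) (z : Fin m → ℝ),
      (∀ x' z', f x + g z + lam ⬝ᵥ (A *ᵥ x + B *ᵥ z - b)
          ≤ f x' + g z' + lam ⬝ᵥ (A *ᵥ x' + B *ᵥ z' - b)) →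
      D lamstar - D lam
        ≤ 1 / (2 * Lp) * ((A *ᵥ x + B *ᵥ z - b) ⬝ᵥ (A *ᵥ x + B *ᵥ z - b))) :
    -- conclusion: D^a satisfies the PŁ inequality with constant L_p/(1 + aL_p)
    ∀ (lam : Fin r → ℝ) (xb : Fin n → ℝ) (zb : Fin m → ℝ),
      (∀ x' z',
        f xb + g zb + lam ⬝ᵥ (A *ᵥ xb + B *ᵥ zb - b)
            + a / 2 * ((A *ᵥ xb + B *ᵥ zb - b) ⬝ᵥ (A *ᵥ xb + B *ᵥ zb - b))
          ≤ f x' + g z' + lam ⬝ᵥ (A *ᵥ x' + B *ᵥ z' - b)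
            + a / 2 * ((A *ᵥ x' + B *ᵥ z' - b) ⬝ᵥ (A *ᵥ x' + B *ᵥ z' - b))) →
      Da lamstar - Da lam
        ≤ (1 / (2 * Lp) + a / 2) * ((A *ᵥ xb + B *ᵥ zb - b) ⬝ᵥ (A *ᵥ xb + B *ᵥ zb - b)) := by
  intro lam xb zb hmin
  set c : Fin r → ℝ := A *ᵥ xb + B *ᵥ zb - b with hc
  set mu : Fin r → ℝ := lam + a • c with hmu
  -- (xb, zb) minimizes the unaugmented Lagrangian at mu = lam + a • c
  have hminL : ∀ x' z', f xb + g zb + mu ⬝ᵥ (A *ᵥ xb + B *ᵥ zb - b)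
      ≤ f x' + g z' + mu ⬝ᵥ (A *ᵥ x' + B *ᵥ z' - b) := by
    intro x' z'
    set d : Fin r → ℝ := A *ᵥ x' + B *ᵥ z' - b with hd
    have hdd : 0 ≤ (d - c) ⬝ᵥ (d - c) :=
      Finset.sum_nonneg fun i _ => mul_self_nonneg _
    set K : ℝ := a / 2 * ((d - c) ⬝ᵥ (d - c)) with hK
    have hK0 : 0 ≤ K := mul_nonneg (by linarith) hdd
    apply le_of_forall_pos_le_add
    intro ε hε
    set t : ℝ := min 1 (ε / (K + 1)) with ht
    have ht0 : 0 < t := lt_min one_pos (div_pos hε (by linarith))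
    have ht1 : t ≤ 1 := min_le_left _ _
    have htK : t * K ≤ ε := by
      have h1 : t ≤ ε / (K + 1) := min_le_right _ _
      have h2 : t * K ≤ (ε / (K + 1)) * K :=
        mul_le_mul_of_nonneg_right h1 hK0
      have h3 : (ε / (K + 1)) * K ≤ ε := by
        rw [div_mul_eq_mul_div, div_le_iff₀ (by linarith)]
        nlinarith
      linarith
    -- evaluate the augmented Lagrangian minimality at the convex combination
    have hmin' := hmin (xb + t • (x' - xb)) (zb + t • (z' - zb))
    have hdt : A *ᵥ (xb + t • (x' - xb)) + B *ᵥ (zb + t • (z' - zb)) - b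
        = c + t • (d - c) := by
      simp only [hc, hd, Matrix.mulVec_add, Matrix.mulVec_smul, Matrix.mulVec_sub]
      module
    rw [hdt] at hmin'
    -- convexity of f and g
    have hxcomb : xb + t • (x' - xb) = (1 - t) • xb + t • x' := by module
    have hzcomb : zb + t • (z' - zb) = (1 - t) • zb + t • z' := by module
    have hfc : f (xb + t • (x' - xb)) ≤ (1 - t) * f xb + t * f x' := by
      rw [hxcomb]
      exact hf.2 (Set.mem_univ xb) (Set.mem_univ x') (by linarith) (le_of_lt ht0)
        (by ring)
    have hgc : g (zb + t • (z' - zb)) ≤ (1 - t) * g zb + t * g z' := by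
      rw [hzcomb]
      exact hg.2 (Set.mem_univ zb) (Set.mem_univ z') (by linarith) (le_of_lt ht0)
        (by ring)
    -- expand the dot products
    have e1 : lam ⬝ᵥ (c + t • (d - c)) = lam ⬝ᵥ c + t * (lam ⬝ᵥ d - lam ⬝ᵥ c) :=
      dot_aux1 lam c d t
    have e2 : (c + t • (d - c)) ⬝ᵥ (c + t • (d - c))
        = c ⬝ᵥ c + 2 * t * (c ⬝ᵥ (d - c)) + t * t * ((d - c) ⬝ᵥ (d - c)) :=
      dot_aux2 c d t
    rw [e1, e2] at hmin'
    -- divide through by t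
    have hE : 0 ≤ (f x' - f xb) + (g z' - g zb) + (lam ⬝ᵥ d - lam ⬝ᵥ c)
        + a * (c ⬝ᵥ (d - c)) + t * (a / 2 * ((d - c) ⬝ᵥ (d - c))) := by
      nlinarith [hmin', hfc, hgc, ht0]
    -- expand mu dot products in the goal
    have em1 : mu ⬝ᵥ c = lam ⬝ᵥ c + a * (c ⬝ᵥ c) := dot_aux3 lam c c a
    have em2 : mu ⬝ᵥ d = lam ⬝ᵥ d + a * (c ⬝ᵥ d) := dot_aux3 lam c d a
    have em3 : c ⬝ᵥ (d - c) = c ⬝ᵥ d - c ⬝ᵥ c := dotProduct_sub _ _ _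
    rw [em1, em2]
    rw [em3] at hE
    have : t * (a / 2 * ((d - c) ⬝ᵥ (d - c))) = t * K := by rw [hK]
    rw [this] at hE
    linarith
  -- apply the PŁ inequality at mu
  have hPL' := hPL mu xb zb hminL
  have hDmu := hD_eq mu xb zb hminL
  have hDalam := hDa_eq lam xb zb hmin
  have em1 : mu ⬝ᵥ c = lam ⬝ᵥ c + a * (c ⬝ᵥ c) := dot_aux3 lam c c a
  rw [em1] at hDmu
  linarith [hPL', hDaDstar]
end

section
/- Let f be c₁-strongly convex relative to ‖·‖_A and g be c₂-strongly convex relative to ‖·‖_B with c₁, c₂ > 0, let D satisfy the PŁ inequality with constant L_p > 0, and let 0 < t ≤ √(c₁c₂). Let λ¹ ∈ ℝʳ and z¹ ∈ ℝᵐ with −Bᵀλ¹ ∈ ∂g(z¹), and let (x², z², λ²) be produced from (λ¹, z¹) by one ADMM iteration with step t. If c₁ ≥ c₂, then D(λ*) − D(λ²) ≤ α·(D(λ*) − D(λ¹)) with α = (2c₁c₂ − t²)/(2c₁c₂ − t² + L_p t(4c₁c₂ − c₂t − 2t²)). In particular, if t = √(c₁c₂), then D(λ*) − D(λ²) ≤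 (D(λ*) − D(λ¹))/(1 + L_p(2√(c₁c₂) − c₂)). -/
open Matrix


private lemma dps {r : ℕ} (x : Fin r → ℝ) : 0 ≤ x ⬝ᵥ x := by
  apply Finset.sum_nonneg
  intro i _
  exact mul_self_nonneg (x i)

private lemma dsq {r : ℕ} (x y : Fin r → ℝ) :
    (x - y) ⬝ᵥ (x - y) = x ⬝ᵥ x - 2 * (x ⬝ᵥ y) + y ⬝ᵥ y := by
  simp only [sub_dotProduct, dotProduct_sub]
  rw [dotProduct_comm y x]
  ring

private lemma dexp2sub {r : ℕ} (a b : ℝ) (x y : Fin r → ℝ) :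
    (a • x - b • y) ⬝ᵥ (a • x - b • y)
      = a ^ 2 * (x ⬝ᵥ x) - 2 * a * b * (x ⬝ᵥ y) + b ^ 2 * (y ⬝ᵥ y) := by
  simp only [sub_dotProduct, dotProduct_sub, smul_dotProduct,
    dotProduct_smul, smul_eq_mul]
  rw [dotProduct_comm y x]
  ring

private lemma dexp2add {r : ℕ} (a b : ℝ) (x y : Fin r → ℝ) :
    (a • x + b • y) ⬝ᵥ (a • x + b • y)
      = a ^ 2 * (x ⬝ᵥ x) + 2 * a * b * (x ⬝ᵥ y) + b ^ 2 * (y ⬝ᵥ y) := by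
  simp only [add_dotProduct, dotProduct_add, smul_dotProduct,
    dotProduct_smul, smul_eq_mul]
  rw [dotProduct_comm y x]
  ring

set_option maxHeartbeats 1000000 in
private lemma subgrad {k r : ℕ} (M : Matrix (Fin r) (Fin k) ℝ) (F : (Fin k → ℝ) → ℝ)
    (c τ : ℝ) (hcτ : 0 ≤ c + τ)
    (hF : ConvexOn ℝ Set.univ (fun y => F y - c / 2 * ((M *ᵥ y) ⬝ᵥ (M *ᵥ y))))
    (x0 x1 : Fin k → ℝ) (p q : Fin r → ℝ)
    (hmin : ∀ xx, F x0 + p ⬝ᵥ (M *ᵥ x0) + τ / 2 * ((M *ᵥ x0 - q) ⬝ᵥ (M *ᵥ x0 - q))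
      ≤ F xx + p ⬝ᵥ (M *ᵥ xx) + τ / 2 * ((M *ᵥ xx - q) ⬝ᵥ (M *ᵥ xx - q))) :
    F x0 + (p + τ • (M *ᵥ x0 - q)) ⬝ᵥ (M *ᵥ x0 - M *ᵥ x1)
      + c / 2 * ((M *ᵥ x1 - M *ᵥ x0) ⬝ᵥ (M *ᵥ x1 - M *ᵥ x0)) ≤ F x1 := by
  set m0 := M *ᵥ x0 with hm0
  set m1 := M *ᵥ x1 with hm1
  have hgoal_eq : (p + τ • (m0 - q)) ⬝ᵥ (m0 - m1)
      = (p ⬝ᵥ m0 - p ⬝ᵥ m1) + τ * (m0 ⬝ᵥ m0 - m0 ⬝ᵥ m1 - q ⬝ᵥ m0 + q ⬝ᵥ m1) := by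
    simp only [add_dotProduct, smul_dotProduct, sub_dotProduct,
      dotProduct_sub, smul_eq_mul]
    ring
  have hsqe : (m1 - m0) ⬝ᵥ (m1 - m0) = m1 ⬝ᵥ m1 - 2 * (m0 ⬝ᵥ m1) + m0 ⬝ᵥ m0 := by
    rw [dsq, dotProduct_comm m1 m0]
    try ring
  set a00 := m0 ⬝ᵥ m0 with ha00
  set a01 := m0 ⬝ᵥ m1 with ha01
  set a11 := m1 ⬝ᵥ m1 with ha11
  set pm0 := p ⬝ᵥ m0 with hpm0
  set pm1 := p ⬝ᵥ m1 with hpm1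
  set q0 := q ⬝ᵥ m0 with hq0
  set q1 := q ⬝ᵥ m1 with hq1
  set qq := q ⬝ᵥ q with hqq
  have hKnn : 0 ≤ a11 - 2 * a01 + a00 := by
    have h := dps (m1 - m0)
    rwa [hsqe] at h
  have key : ∀ s : ℝ, 0 < s → s ≤ 1 →
      0 ≤ F x1 - F x0 - ((pm0 - pm1) + τ * (a00 - a01 - q0 + q1))
        - c / 2 * (a11 - 2 * a01 + a00) + s * ((c + τ) / 2 * (a11 - 2 * a01 + a00)) := by
    intro s hs hs1
    have hxs := hmin (x0 + s • (x1 - x0))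
    have hMxs : M *ᵥ (x0 + s • (x1 - x0)) = m0 + s • (m1 - m0) := by
      rw [Matrix.mulVec_add, Matrix.mulVec_smul, Matrix.mulVec_sub]
    rw [hMxs] at hxs
    have hpt : (1 - s) • x0 + s • x1 = x0 + s • (x1 - x0) := by
      ext i
      simp only [Pi.add_apply, Pi.smul_apply, Pi.sub_apply, smul_eq_mul]
      ring
    have hcx := hF.2 (Set.mem_univ x0) (Set.mem_univ x1)
      (by linarith : (0:ℝ) ≤ 1 - s) hs.le (by ring)
    simp only [smul_eq_mul] at hcx
    rw [hpt, hMxs] at hcx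
    have h1 : (m0 + s • (m1 - m0)) ⬝ᵥ (m0 + s • (m1 - m0))
        = a00 + 2 * s * (a01 - a00) + s ^ 2 * (a11 - 2 * a01 + a00) := by
      simp only [dotProduct_add, add_dotProduct, dotProduct_smul,
        smul_dotProduct, dotProduct_sub, sub_dotProduct, smul_eq_mul]
      rw [dotProduct_comm m1 m0]
      ring
    have h2 : p ⬝ᵥ (m0 + s • (m1 - m0)) = pm0 + s * (pm1 - pm0) := by
      simp only [dotProduct_add, dotProduct_smul, dotProduct_sub,
        smul_eq_mul]
      try ring
    have h3 : (m0 + s • (m1 - m0) - q) ⬝ᵥ (m0 + s • (m1 - m0) - q)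
        = (a00 - 2 * q0 + qq) + 2 * s * (a01 - a00 - q1 + q0)
          + s ^ 2 * (a11 - 2 * a01 + a00) := by
      simp only [sub_dotProduct, dotProduct_sub, dotProduct_add,
        add_dotProduct, dotProduct_smul, smul_dotProduct, smul_eq_mul]
      rw [dotProduct_comm m1 m0, dotProduct_comm m0 q, dotProduct_comm m1 q]
      ring
    have h4 : (m0 - q) ⬝ᵥ (m0 - q) = a00 - 2 * q0 + qq := by
      rw [dsq, dotProduct_comm m0 q]
    rw [h2, h3, h4] at hxs
    rw [h1] at hcx
    have h5 : 0 ≤ s * (F x1 - F x0 - ((pm0 - pm1) + τ * (a00 - a01 - q0 + q1))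
        - c / 2 * (a11 - 2 * a01 + a00) + s * ((c + τ) / 2 * (a11 - 2 * a01 + a00))) := by
      nlinarith [hxs, hcx]
    have h6 : s * 0 ≤ s * (F x1 - F x0 - ((pm0 - pm1) + τ * (a00 - a01 - q0 + q1))
        - c / 2 * (a11 - 2 * a01 + a00) + s * ((c + τ) / 2 * (a11 - 2 * a01 + a00))) := by
      rw [mul_zero]; exact h5
    exact le_of_mul_le_mul_left h6 hs
  have hKq : 0 ≤ (c + τ) / 2 * (a11 - 2 * a01 + a00) := by
    apply mul_nonneg _ hKnn
    linarith
  have main : ∀ R K : ℝ, 0 ≤ K → (∀ s : ℝ, 0 < s → s ≤ 1 → 0 ≤ R + s * K) → 0 ≤ R := by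
    intro R K hK hkey
    by_contra hcon
    push_neg at hcon
    have hs0 : 0 < -R / (2 * K + 1) := div_pos (by linarith) (by linarith)
    have hs : 0 < min 1 (-R / (2 * K + 1)) := lt_min one_pos hs0
    have hs1 : min 1 (-R / (2 * K + 1)) ≤ 1 := min_le_left _ _
    have hs2 : min 1 (-R / (2 * K + 1)) ≤ -R / (2 * K + 1) := min_le_right _ _
    have hs3 : min 1 (-R / (2 * K + 1)) * (2 * K + 1) ≤ -R :=
      (le_div_iff₀ (by linarith)).mp hs2
    have hk := hkey (min 1 (-R / (2 * K + 1))) hs hs1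
    nlinarith [hk, hs3, hs, hK]
  have hfin : 0 ≤ F x1 - F x0 - ((pm0 - pm1) + τ * (a00 - a01 - q0 + q1))
      - c / 2 * (a11 - 2 * a01 + a00) :=
    main _ _ hKq (fun s hs hs1 => by have := key s hs hs1; linarith)
  rw [hgoal_eq, hsqe]
  linarith

set_option maxHeartbeats 1000000 in
theorem stmt11 {n m r : ℕ}
    (A : Matrix (Fin r) (Fin n) ℝ) (B : Matrix (Fin r) (Fin m) ℝ) (b : Fin r → ℝ)
    (f : (Fin n → ℝ) → ℝ) (g : (Fin m → ℝ) → ℝ)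
    (c₁ c₂ : ℝ) (hc₁ : 0 < c₁) (hc₂ : 0 < c₂)
    (hf : ConvexOn ℝ Set.univ (fun y => f y - c₁ / 2 * ((A *ᵥ y) ⬝ᵥ (A *ᵥ y))))
    (hg : ConvexOn ℝ Set.univ (fun w => g w - c₂ / 2 * ((B *ᵥ w) ⬝ᵥ (B *ᵥ w))))
    -- the dual objective D: lower bound property, and equality at attained minimizers
    (D : (Fin r → ℝ) → ℝ)
    (hD_lb : ∀ (lam : Fin r → ℝ) (x : Fin n → ℝ) (z : Fin m → ℝ),
      D lam ≤ f x + g z + lam ⬝ᵥ (A *ᵥ x + B *ᵥ z - b))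
    (hD_eq : ∀ (lam : Fin r → ℝ) (x : Fin n → ℝ) (z : Fin m → ℝ),
      (∀ x' z', f x + g z + lam ⬝ᵥ (A *ᵥ x + B *ᵥ z - b)
          ≤ f x' + g z' + lam ⬝ᵥ (A *ᵥ x' + B *ᵥ z' - b)) →
      D lam = f x + g z + lam ⬝ᵥ (A *ᵥ x + B *ᵥ z - b))
    (lamstar : Fin r → ℝ) (hstar : ∀ lam, D lam ≤ D lamstar)
    -- D satisfies the PŁ inequality with constant L_p:
    (Lp : ℝ) (hLp : 0 < Lp)
    (hPL : ∀ (lam : Fin r → ℝ) (x : Fin n → ℝ) (z : Fin m → ℝ),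
      (∀ x' z', f x + g z + lam ⬝ᵥ (A *ᵥ x + B *ᵥ z - b)
          ≤ f x' + g z' + lam ⬝ᵥ (A *ᵥ x' + B *ᵥ z' - b)) →
      D lamstar - D lam
        ≤ 1 / (2 * Lp) * ((A *ᵥ x + B *ᵥ z - b) ⬝ᵥ (A *ᵥ x + B *ᵥ z - b)))
    (t : ℝ) (ht0 : 0 < t) (ht : t ≤ Real.sqrt (c₁ * c₂))
    -- the point (λ¹, z¹) with −Bᵀλ¹ ∈ ∂g(z¹):
    (lam1 : Fin r → ℝ) (z1 : Fin m → ℝ)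
    (hz1 : ∀ w : Fin m → ℝ, g z1 + (-(Bᵀ *ᵥ lam1)) ⬝ᵥ (w - z1) ≤ g w)
    -- one ADMM iteration with step t from (λ¹, z¹):
    (x2 : Fin n → ℝ) (z2 : Fin m → ℝ) (lam2 : Fin r → ℝ)
    (hx2 : ∀ x' : Fin n → ℝ,
      f x2 + lam1 ⬝ᵥ (A *ᵥ x2) + t / 2 * ((A *ᵥ x2 + B *ᵥ z1 - b) ⬝ᵥ (A *ᵥ x2 + B *ᵥ z1 - b))
        ≤ f x' + lam1 ⬝ᵥ (A *ᵥ x')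
          + t / 2 * ((A *ᵥ x' + B *ᵥ z1 - b) ⬝ᵥ (A *ᵥ x' + B *ᵥ z1 - b)))
    (hz2 : ∀ z' : Fin m → ℝ,
      g z2 + lam1 ⬝ᵥ (B *ᵥ z2) + t / 2 * ((A *ᵥ x2 + B *ᵥ z2 - b) ⬝ᵥ (A *ᵥ x2 + B *ᵥ z2 - b))
        ≤ g z' + lam1 ⬝ᵥ (B *ᵥ z')
          + t / 2 * ((A *ᵥ x2 + B *ᵥ z' - b) ⬝ᵥ (A *ᵥ x2 + B *ᵥ z' - b)))
    (hlam2 : lam2 = lam1 + t • (A *ᵥ x2 + B *ᵥ z2 - b))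
    -- the dual infima are attained at the points considered:
    (hatt_star : ∃ xx zz, ∀ x' z',
      f xx + g zz + lamstar ⬝ᵥ (A *ᵥ xx + B *ᵥ zz - b)
        ≤ f x' + g z' + lamstar ⬝ᵥ (A *ᵥ x' + B *ᵥ z' - b))
    (hatt1 : ∃ xx zz, ∀ x' z',
      f xx + g zz + lam1 ⬝ᵥ (A *ᵥ xx + B *ᵥ zz - b)
        ≤ f x' + g z' + lam1 ⬝ᵥ (A *ᵥ x' + B *ᵥ z' - b))
    (hatt2 : ∃ xx zz, ∀ x' z',
      f xx + g zz + lam2 ⬝ᵥ (A *ᵥ xx + B *ᵥ zz - b)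
        ≤ f x' + g z' + lam2 ⬝ᵥ (A *ᵥ x' + B *ᵥ z' - b))
    (hcc : c₂ ≤ c₁) :
    D lamstar - D lam2
        ≤ (2 * c₁ * c₂ - t ^ 2)
            / (2 * c₁ * c₂ - t ^ 2 + Lp * t * (4 * c₁ * c₂ - c₂ * t - 2 * t ^ 2))
          * (D lamstar - D lam1) ∧
      (t = Real.sqrt (c₁ * c₂) →
        D lamstar - D lam2
          ≤ (D lamstar - D lam1) / (1 + Lp * (2 * Real.sqrt (c₁ * c₂) - c₂))) := by
  -- basic positivity facts
  have hcc0 : (0:ℝ) ≤ c₁ * c₂ := by positivity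
  have ht2 : t ^ 2 ≤ c₁ * c₂ := by
    have h := pow_le_pow_left₀ ht0.le ht 2
    rwa [Real.sq_sqrt hcc0] at h
  have htc1 : t ≤ c₁ := by
    have h1 : c₁ * c₂ ≤ c₁ * c₁ := mul_le_mul_of_nonneg_left hcc hc₁.le
    nlinarith [sq_nonneg (t - c₁)]
  have hDq : 0 < 2 * c₁ * c₂ - t ^ 2 := by nlinarith [mul_pos hc₁ hc₂]
  have hNq : 0 < 4 * c₁ * c₂ - c₂ * t - 2 * t ^ 2 := by
    have h1 : c₂ * t ≤ c₂ * c₁ := mul_le_mul_of_nonneg_left htc1 hc₂.le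
    nlinarith [mul_pos hc₁ hc₂]
  obtain ⟨xt, zt, hmin2⟩ := hatt2
  set u := A *ᵥ x2 + B *ᵥ z1 - b with hu
  set v := A *ᵥ x2 + B *ᵥ z2 - b with hv
  set dl := B *ᵥ z2 - B *ᵥ z1 with hdl
  set e := A *ᵥ xt - A *ᵥ x2 with he
  set wt := A *ᵥ xt + B *ᵥ z2 - b with hwt
  have hl2 : lam1 + t • v = lam2 := by rw [hlam2]
  -- S1 : subgradient inequality for f at x2 with multiplier lam1 + t • u
  have hmin1 : ∀ xx, f x2 + lam1 ⬝ᵥ (A *ᵥ x2)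
      + t / 2 * ((A *ᵥ x2 - (b - B *ᵥ z1)) ⬝ᵥ (A *ᵥ x2 - (b - B *ᵥ z1)))
      ≤ f xx + lam1 ⬝ᵥ (A *ᵥ xx)
      + t / 2 * ((A *ᵥ xx - (b - B *ᵥ z1)) ⬝ᵥ (A *ᵥ xx - (b - B *ᵥ z1))) := by
    intro xx
    have hr1 : A *ᵥ x2 - (b - B *ᵥ z1) = A *ᵥ x2 + B *ᵥ z1 - b := by abel
    have hr2 : A *ᵥ xx - (b - B *ᵥ z1) = A *ᵥ xx + B *ᵥ z1 - b := by abel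
    rw [hr1, hr2]
    exact hx2 xx
  have S1 := subgrad A f c₁ t (by linarith) hf x2 xt lam1 (b - B *ᵥ z1) hmin1
  have hru : A *ᵥ x2 - (b - B *ᵥ z1) = u := by rw [hu]; abel
  have hre : A *ᵥ x2 - A *ᵥ xt = -e := by rw [he]; abel
  rw [hru, hre, ← he] at S1
  -- S1 : f x2 + (lam1 + t • u) ⬝ᵥ (-e) + c₁ / 2 * (e ⬝ᵥ e) ≤ f xt
  -- S4 : subgradient inequality for f at xt with multiplier lam2
  have hminf : ∀ xx, f xt + lam2 ⬝ᵥ (A *ᵥ xt) + (0:ℝ) / 2 * ((A *ᵥ xt - 0) ⬝ᵥ (A *ᵥ xt - 0))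
      ≤ f xx + lam2 ⬝ᵥ (A *ᵥ xx) + (0:ℝ) / 2 * ((A *ᵥ xx - 0) ⬝ᵥ (A *ᵥ xx - 0)) := by
    intro xx
    have h := hmin2 xx zt
    have hsplit : ∀ yy : Fin n → ℝ, lam2 ⬝ᵥ (A *ᵥ yy + B *ᵥ zt - b)
        = lam2 ⬝ᵥ (A *ᵥ yy) + lam2 ⬝ᵥ (B *ᵥ zt - b) := by
      intro yy
      rw [show A *ᵥ yy + B *ᵥ zt - b = A *ᵥ yy + (B *ᵥ zt - b) by abel, dotProduct_add]
    rw [hsplit xt, hsplit xx] at h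
    simp only [zero_div, zero_mul, add_zero]
    linarith
  have S4 := subgrad A f c₁ 0 (by linarith) hf xt x2 lam2 0 hminf
  simp only [zero_smul, add_zero] at S4
  have hre2 : A *ᵥ xt - A *ᵥ x2 = e := he.symm
  rw [hre2, hre] at S4
  -- S4 : f xt + lam2 ⬝ᵥ e + c₁ / 2 * ((-e) ⬝ᵥ (-e)) ≤ f x2
  -- S2 : subgradient inequality for g at z2 with multiplier lam2
  have hmin2g : ∀ zz, g z2 + lam1 ⬝ᵥ (B *ᵥ z2)
      + t / 2 * ((B *ᵥ z2 - (b - A *ᵥ x2)) ⬝ᵥ (B *ᵥ z2 - (b - A *ᵥ x2)))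
      ≤ g zz + lam1 ⬝ᵥ (B *ᵥ zz)
      + t / 2 * ((B *ᵥ zz - (b - A *ᵥ x2)) ⬝ᵥ (B *ᵥ zz - (b - A *ᵥ x2))) := by
    intro zz
    have hr1 : B *ᵥ z2 - (b - A *ᵥ x2) = A *ᵥ x2 + B *ᵥ z2 - b := by abel
    have hr2 : B *ᵥ zz - (b - A *ᵥ x2) = A *ᵥ x2 + B *ᵥ zz - b := by abel
    rw [hr1, hr2]
    exact hz2 zz
  have S2 := subgrad B g c₂ t (by linarith) hg z2 zt lam1 (b - A *ᵥ x2) hmin2g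
  have hrv : B *ᵥ z2 - (b - A *ᵥ x2) = v := by rw [hv]; abel
  rw [hrv, hl2] at S2
  -- S2 : g z2 + lam2 ⬝ᵥ (B *ᵥ z2 - B *ᵥ zt) + c₂ / 2 * ((B *ᵥ zt - B *ᵥ z2) ⬝ᵥ ..) ≤ g zt
  -- S5 : subgradient inequality for g at zt with multiplier lam2
  have hming : ∀ zz, g zt + lam2 ⬝ᵥ (B *ᵥ zt) + (0:ℝ) / 2 * ((B *ᵥ zt - 0) ⬝ᵥ (B *ᵥ zt - 0))
      ≤ g zz + lam2 ⬝ᵥ (B *ᵥ zz) + (0:ℝ) / 2 * ((B *ᵥ zz - 0) ⬝ᵥ (B *ᵥ zz - 0)) := by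
    intro zz
    have h := hmin2 xt zz
    have hsplit : ∀ yy : Fin m → ℝ, lam2 ⬝ᵥ (A *ᵥ xt + B *ᵥ yy - b)
        = lam2 ⬝ᵥ (B *ᵥ yy) + lam2 ⬝ᵥ (A *ᵥ xt - b) := by
      intro yy
      rw [show A *ᵥ xt + B *ᵥ yy - b = B *ᵥ yy + (A *ᵥ xt - b) by abel, dotProduct_add]
    rw [hsplit zt, hsplit zz] at h
    simp only [zero_div, zero_mul, add_zero]
    linarith
  have S5 := subgrad B g c₂ 0 (by linarith) hg zt z2 lam2 0 hming
  simp only [zero_smul, add_zero] at S5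
  -- S3 : subgradient inequality for g at z1 with multiplier lam1
  have hminz1 : ∀ zz, g z1 + lam1 ⬝ᵥ (B *ᵥ z1) + (0:ℝ) / 2 * ((B *ᵥ z1 - 0) ⬝ᵥ (B *ᵥ z1 - 0))
      ≤ g zz + lam1 ⬝ᵥ (B *ᵥ zz) + (0:ℝ) / 2 * ((B *ᵥ zz - 0) ⬝ᵥ (B *ᵥ zz - 0)) := by
    intro zz
    have h := hz1 zz
    have hBt : (-(Bᵀ *ᵥ lam1)) ⬝ᵥ (zz - z1) = -(lam1 ⬝ᵥ (B *ᵥ zz)) + lam1 ⬝ᵥ (B *ᵥ z1) := by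
      rw [Matrix.mulVec_transpose, neg_dotProduct, ← Matrix.dotProduct_mulVec,
        Matrix.mulVec_sub, dotProduct_sub]
      ring
    simp only [zero_div, zero_mul, add_zero]
    rw [hBt] at h
    linarith
  have S3 := subgrad B g c₂ 0 (by linarith) hg z1 z2 lam1 0 hminz1
  simp only [zero_smul, add_zero] at S3
  -- Step 2 : B *ᵥ zt = B *ᵥ z2 and g zt = g z2
  have hS2t : g z2 + lam2 ⬝ᵥ (B *ᵥ z2 - B *ᵥ zt)
      + c₂ / 2 * ((B *ᵥ zt - B *ᵥ z2) ⬝ᵥ (B *ᵥ zt - B *ᵥ z2)) ≤ g zt := S2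
  have hS5t : g zt + lam2 ⬝ᵥ (B *ᵥ zt - B *ᵥ z2)
      + c₂ / 2 * ((B *ᵥ z2 - B *ᵥ zt) ⬝ᵥ (B *ᵥ z2 - B *ᵥ zt)) ≤ g z2 := S5
  have hdzz : (B *ᵥ zt - B *ᵥ z2) ⬝ᵥ (B *ᵥ zt - B *ᵥ z2) = 0 := by
    have e1 : lam2 ⬝ᵥ (B *ᵥ z2 - B *ᵥ zt) = -(lam2 ⬝ᵥ (B *ᵥ zt - B *ᵥ z2)) := by
      rw [show B *ᵥ z2 - B *ᵥ zt = -(B *ᵥ zt - B *ᵥ z2) by abel, dotProduct_neg]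
    have e2 : (B *ᵥ z2 - B *ᵥ zt) ⬝ᵥ (B *ᵥ z2 - B *ᵥ zt)
        = (B *ᵥ zt - B *ᵥ z2) ⬝ᵥ (B *ᵥ zt - B *ᵥ z2) := by
      rw [show B *ᵥ z2 - B *ᵥ zt = -(B *ᵥ zt - B *ᵥ z2) by abel, neg_dotProduct,
        dotProduct_neg, neg_neg]
    rw [e1] at hS2t
    rw [e2] at hS5t
    have hnn := dps (B *ᵥ zt - B *ᵥ z2)
    have hle : c₂ * ((B *ᵥ zt - B *ᵥ z2) ⬝ᵥ (B *ᵥ zt - B *ᵥ z2)) ≤ c₂ * 0 := by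
      rw [mul_zero]; linarith
    have hX0 := le_of_mul_le_mul_left hle hc₂
    linarith
  have hBz : B *ᵥ zt = B *ᵥ z2 := by
    have h := dotProduct_self_eq_zero.mp hdzz
    have := sub_eq_zero.mp h
    exact this
  have hgz : g zt = g z2 := by
    rw [hBz] at hS2t hS5t
    simp only [sub_self, dotProduct_zero, zero_dotProduct, mul_zero,
      add_zero] at hS2t hS5t
    linarith
  -- Ef : t * (dl ⬝ᵥ e) + c₁ * (e ⬝ᵥ e) ≤ 0
  have hu2 : u = v - dl := by rw [hu, hv, hdl]; abel
  have eS1 : (lam1 + t • u) ⬝ᵥ (-e)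
      = -(lam1 ⬝ᵥ e) - t * (v ⬝ᵥ e) + t * (dl ⬝ᵥ e) := by
    rw [hu2]
    simp only [add_dotProduct, smul_dotProduct, dotProduct_neg,
      sub_dotProduct, smul_eq_mul]
    ring
  have eS4 : lam2 ⬝ᵥ e = lam1 ⬝ᵥ e + t * (v ⬝ᵥ e) := by
    rw [← hl2]
    simp only [add_dotProduct, smul_dotProduct, smul_eq_mul]
  have eNeg : (-e) ⬝ᵥ (-e) = e ⬝ᵥ e := by
    rw [neg_dotProduct, dotProduct_neg, neg_neg]
  rw [eS1] at S1
  rw [eS4, eNeg] at S4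
  have hEf : t * (dl ⬝ᵥ e) + c₁ * (e ⬝ᵥ e) ≤ 0 := by linarith
  -- the dual value at lam2
  have hD2 := hD_eq lam2 xt zt hmin2
  have hr4 : A *ᵥ xt + B *ᵥ zt - b = wt := by rw [hwt, hBz]
  rw [hr4, hgz] at hD2
  -- hD2 : D lam2 = f xt + g z2 + lam2 ⬝ᵥ wt
  -- (★) : D lam1 ≤ D lam2 - t * (v ⬝ᵥ wt) - c₂/2 * (dl ⬝ᵥ dl)
  have hDlb := hD_lb lam1 xt z1
  have hr3 : A *ᵥ xt + B *ᵥ z1 - b = wt - dl := by rw [hwt, hdl]; abel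
  rw [hr3] at hDlb
  have eS3a : lam1 ⬝ᵥ (B *ᵥ z1 - B *ᵥ z2) = -(lam1 ⬝ᵥ dl) := by
    rw [show B *ᵥ z1 - B *ᵥ z2 = -dl by rw [hdl]; abel, dotProduct_neg]
  have eS3b : (B *ᵥ z2 - B *ᵥ z1) ⬝ᵥ (B *ᵥ z2 - B *ᵥ z1) = dl ⬝ᵥ dl := by rw [← hdl]
  rw [eS3a, eS3b] at S3
  -- S3 : g z1 + -(lam1 ⬝ᵥ dl) + c₂ / 2 * (dl ⬝ᵥ dl) ≤ g z2
  have eWd : lam1 ⬝ᵥ (wt - dl) = lam1 ⬝ᵥ wt - lam1 ⬝ᵥ dl := dotProduct_sub _ _ _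
  have eL2w : lam2 ⬝ᵥ wt = lam1 ⬝ᵥ wt + t * (v ⬝ᵥ wt) := by
    rw [← hl2]
    simp only [add_dotProduct, smul_dotProduct, smul_eq_mul]
  have hstar4 : D lam1 ≤ D lam2 - t * (v ⬝ᵥ wt) - c₂ / 2 * (dl ⬝ᵥ dl) := by
    rw [eWd] at hDlb
    rw [hD2, eL2w]
    linarith
  -- PL inequality at lam2
  have hP := hPL lam2 xt zt hmin2
  rw [hr4] at hP
  -- scalar atoms and expansions
  have hwt2 : wt = v + e := by rw [hwt, hv, he]; abel
  have hvwt : v ⬝ᵥ wt = v ⬝ᵥ v + v ⬝ᵥ e := by rw [hwt2, dotProduct_add]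
  have hww : wt ⬝ᵥ wt = v ⬝ᵥ v + 2 * (v ⬝ᵥ e) + e ⬝ᵥ e := by
    rw [hwt2]
    simp only [dotProduct_add, add_dotProduct]
    rw [dotProduct_comm e v]
    ring
  rw [hvwt] at hstar4
  rw [hww] at hP
  have hsq1 : 0 ≤ (c₂ * t) ^ 2 * (v ⬝ᵥ v)
      - 2 * (c₂ * t) * (2 * c₁ * c₂ - c₂ * t - t ^ 2) * (v ⬝ᵥ e)
      + (2 * c₁ * c₂ - c₂ * t - t ^ 2) ^ 2 * (e ⬝ᵥ e) := by
    have h := dps ((c₂ * t) • v - (2 * c₁ * c₂ - c₂ * t - t ^ 2) • e)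
    rwa [dexp2sub] at h
  have hsq2 : 0 ≤ c₂ ^ 2 * (dl ⬝ᵥ dl) + 2 * c₂ * t * (dl ⬝ᵥ e) + t ^ 2 * (e ⬝ᵥ e) := by
    have h := dps (c₂ • dl + t • e)
    rwa [dexp2add] at h
  have h5 : 0 ≤ (2 * c₁ * c₂ - t ^ 2)
      * (c₂ ^ 2 * (dl ⬝ᵥ dl) + 2 * c₂ * t * (dl ⬝ᵥ e) + t ^ 2 * (e ⬝ᵥ e)) :=
    mul_nonneg hDq.le hsq2
  have h6 : 0 ≤ 2 * c₂ * (2 * c₁ * c₂ - t ^ 2) * (-(t * (dl ⬝ᵥ e)) - c₁ * (e ⬝ᵥ e)) := by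
    apply mul_nonneg
    · positivity
    · linarith
  have hkey : c₂ * t * (4 * c₁ * c₂ - c₂ * t - 2 * t ^ 2)
        * (v ⬝ᵥ v + 2 * (v ⬝ᵥ e) + e ⬝ᵥ e)
      ≤ 2 * c₂ * (2 * c₁ * c₂ - t ^ 2)
        * (t * (v ⬝ᵥ v + v ⬝ᵥ e) + c₂ / 2 * (dl ⬝ᵥ dl)) := by
    linarith [hsq1, h5, h6]
  -- multiply PL by 2 c₂ Lp t Nq
  have hc6 : (0:ℝ) < 2 * c₂ * Lp * t * (4 * c₁ * c₂ - c₂ * t - 2 * t ^ 2) :=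
    mul_pos (mul_pos (mul_pos (mul_pos two_pos hc₂) hLp) ht0) hNq
  have hPm := mul_le_mul_of_nonneg_left hP hc6.le
  have hsimp : 2 * c₂ * Lp * t * (4 * c₁ * c₂ - c₂ * t - 2 * t ^ 2)
      * (1 / (2 * Lp) * (v ⬝ᵥ v + 2 * (v ⬝ᵥ e) + e ⬝ᵥ e))
      = c₂ * t * (4 * c₁ * c₂ - c₂ * t - 2 * t ^ 2)
        * (v ⬝ᵥ v + 2 * (v ⬝ᵥ e) + e ⬝ᵥ e) := by
    field_simp
  rw [hsimp] at hPm
  -- multiply (★) by 2 c₂ Dq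
  have hc7 : (0:ℝ) ≤ 2 * c₂ * (2 * c₁ * c₂ - t ^ 2) := by positivity
  have h7 := mul_le_mul_of_nonneg_left hstar4 hc7
  -- final combination
  have hfinal : 2 * c₂ * ((2 * c₁ * c₂ - t ^ 2 + Lp * t * (4 * c₁ * c₂ - c₂ * t - 2 * t ^ 2))
        * (D lamstar - D lam2))
      ≤ 2 * c₂ * ((2 * c₁ * c₂ - t ^ 2) * (D lamstar - D lam1)) := by
    linarith [h7, hkey, hPm]
  have hfinal2 : (2 * c₁ * c₂ - t ^ 2 + Lp * t * (4 * c₁ * c₂ - c₂ * t - 2 * t ^ 2))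
        * (D lamstar - D lam2)
      ≤ (2 * c₁ * c₂ - t ^ 2) * (D lamstar - D lam1) :=
    le_of_mul_le_mul_left hfinal (by linarith)
  have hdenpos : 0 < 2 * c₁ * c₂ - t ^ 2 + Lp * t * (4 * c₁ * c₂ - c₂ * t - 2 * t ^ 2) := by
    have := mul_pos (mul_pos hLp ht0) hNq
    linarith
  have hpart1 : D lamstar - D lam2
      ≤ (2 * c₁ * c₂ - t ^ 2)
          / (2 * c₁ * c₂ - t ^ 2 + Lp * t * (4 * c₁ * c₂ - c₂ * t - 2 * t ^ 2))
        * (D lamstar - D lam1) := by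
    rw [div_mul_eq_mul_div, le_div_iff₀ hdenpos]
    linarith [hfinal2]
  refine ⟨hpart1, ?_⟩
  intro hteq
  have ht2e : t ^ 2 = c₁ * c₂ := by rw [hteq, Real.sq_sqrt hcc0]
  have htc2 : c₂ ≤ t := by
    rw [hteq]
    have h2 : Real.sqrt (c₂ * c₂) ≤ Real.sqrt (c₁ * c₂) :=
      Real.sqrt_le_sqrt (mul_le_mul_of_nonneg_right hcc hc₂.le)
    rwa [Real.sqrt_mul_self hc₂.le] at h2
  have hden2 : 0 < 1 + Lp * (2 * Real.sqrt (c₁ * c₂) - c₂) := by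
    rw [← hteq]
    have h2 := mul_pos hLp (show (0:ℝ) < 2 * t - c₂ by linarith)
    linarith
  have heqq : (2 * c₁ * c₂ - t ^ 2)
        / (2 * c₁ * c₂ - t ^ 2 + Lp * t * (4 * c₁ * c₂ - c₂ * t - 2 * t ^ 2))
        * (D lamstar - D lam1)
      = (D lamstar - D lam1) / (1 + Lp * (2 * Real.sqrt (c₁ * c₂) - c₂)) := by
    rw [← hteq] at hden2 ⊢
    rw [div_mul_eq_mul_div, div_eq_div_iff hdenpos.ne' hden2.ne']
    linear_combination 2 * Lp * c₂ * (D lamstar - D lam1) * ht2e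
  rw [← heqq]
  exact hpart1
end

section
/- Let f : ℝⁿ → ℝ and g : ℝᵐ → ℝ be convex, let t > 0 and λ¹ ∈ ℝʳ, and suppose (x̂¹, z¹) minimizes (x,z) ↦ f(x) + g(z) + ⟨λ¹, Ax + Bz − b⟩. Let (x², z²) be produced from (λ¹, z¹) by one ADMM iteration with step t, i.e., x² minimizes f(x) + ⟨λ¹, Ax⟩ + (t/2)‖Ax + Bz¹ − b‖² and z² minimizes g(z) + ⟨λ¹, Bz⟩ + (t/2)‖Ax² + Bz − b‖². Then ⟨Ax̂¹ + Bz¹ − b, Ax² + Bz² − b⟩ ≤ ‖Ax̂¹ + Bz¹ − b‖². -/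
open Matrix

theorem stmt13 {n m r : ℕ}
    (A : Matrix (Fin r) (Fin n) ℝ) (B : Matrix (Fin r) (Fin m) ℝ) (b : Fin r → ℝ)
    (f : (Fin n → ℝ) → ℝ) (g : (Fin m → ℝ) → ℝ)
    (hf : ConvexOn ℝ Set.univ f) (hg : ConvexOn ℝ Set.univ g)
    (t : ℝ) (ht : 0 < t)
    (lam1 : Fin r → ℝ)
    -- (x̂¹, z¹) minimizes the Lagrangian at λ¹:
    (xh1 : Fin n → ℝ) (z1 : Fin m → ℝ)
    (hmin : ∀ (x' : Fin n → ℝ) (z' : Fin m → ℝ),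
      f xh1 + g z1 + lam1 ⬝ᵥ (A *ᵥ xh1 + B *ᵥ z1 - b)
        ≤ f x' + g z' + lam1 ⬝ᵥ (A *ᵥ x' + B *ᵥ z' - b))
    -- one ADMM iteration with step t from (λ¹, z¹):
    (x2 : Fin n → ℝ) (z2 : Fin m → ℝ)
    (hx2 : ∀ x' : Fin n → ℝ,
      f x2 + lam1 ⬝ᵥ (A *ᵥ x2) + t / 2 * ((A *ᵥ x2 + B *ᵥ z1 - b) ⬝ᵥ (A *ᵥ x2 + B *ᵥ z1 - b))
        ≤ f x' + lam1 ⬝ᵥ (A *ᵥ x')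
          + t / 2 * ((A *ᵥ x' + B *ᵥ z1 - b) ⬝ᵥ (A *ᵥ x' + B *ᵥ z1 - b)))
    (hz2 : ∀ z' : Fin m → ℝ,
      g z2 + lam1 ⬝ᵥ (B *ᵥ z2) + t / 2 * ((A *ᵥ x2 + B *ᵥ z2 - b) ⬝ᵥ (A *ᵥ x2 + B *ᵥ z2 - b))
        ≤ g z' + lam1 ⬝ᵥ (B *ᵥ z')
          + t / 2 * ((A *ᵥ x2 + B *ᵥ z' - b) ⬝ᵥ (A *ᵥ x2 + B *ᵥ z' - b))) :
    (A *ᵥ xh1 + B *ᵥ z1 - b) ⬝ᵥ (A *ᵥ x2 + B *ᵥ z2 - b)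
      ≤ (A *ᵥ xh1 + B *ᵥ z1 - b) ⬝ᵥ (A *ᵥ xh1 + B *ᵥ z1 - b) := by
  have h1 := hx2 xh1
  have h2 := hz2 z1
  have h3 := hmin x2 z2
  set u := A *ᵥ xh1 + B *ᵥ z1 - b with hu
  set v := A *ᵥ x2 + B *ᵥ z2 - b with hv
  have hq : (0:ℝ) ≤ (u - v) ⬝ᵥ (u - v) := by
    apply Finset.sum_nonneg
    intro i _
    exact mul_self_nonneg _
  have hexp : (u - v) ⬝ᵥ (u - v) = u ⬝ᵥ u - 2 * (u ⬝ᵥ v) + v ⬝ᵥ v := by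
    simp [sub_dotProduct, dotProduct_sub, dotProduct_comm v u]
    ring
  simp only [dotProduct_add, dotProduct_sub, hu, hv] at h3
  have hvu : v ⬝ᵥ v ≤ u ⬝ᵥ u := by nlinarith [h1, h2, h3]
  nlinarith [hq, hexp, hvu]
end

section
/- Let f be c₁-strongly convex relative to ‖·‖_A and g be c₂-strongly convex relative to ‖·‖_B (c₁, c₂ ≥ 0), and let t > 0. Suppose ADMM with step t is linearly convergent with respect to the dual objective value: there exists γ ∈ [0, 1) such that for every λ¹ ∈ ℝʳ and z¹ ∈ ℝᵐ with −Bᵀλ¹ ∈ ∂g(z¹), the next ADMM iterate λ² satisfies D(λ*) − D(λ²) ≤ γ(D(λ*) − D(λ¹)). Then D satisfies the PŁ inequality: for every λ ∈ ℝʳ and every minimizer (x̂, ẑ) of (x,z) ↦ f(x) + g(z) + ⟨λ, Ax + Bz − b⟩, one has D(λ*) − D(λ) ≤ (t/(1 − γ))‖Ax̂ + Bẑ − b‖². -/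
open Matrix

theorem stmt14 {n m r : ℕ}
    (A : Matrix (Fin r) (Fin n) ℝ) (B : Matrix (Fin r) (Fin m) ℝ) (b : Fin r → ℝ)
    (f : (Fin n → ℝ) → ℝ) (g : (Fin m → ℝ) → ℝ)
    (c₁ c₂ : ℝ) (hc₁ : 0 ≤ c₁) (hc₂ : 0 ≤ c₂)
    (hf : ConvexOn ℝ Set.univ (fun y => f y - c₁ / 2 * ((A *ᵥ y) ⬝ᵥ (A *ᵥ y))))
    (hg : ConvexOn ℝ Set.univ (fun w => g w - c₂ / 2 * ((B *ᵥ w) ⬝ᵥ (B *ᵥ w))))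
    (t : ℝ) (ht : 0 < t)
    -- the dual objective D: lower bound property, and equality at attained minimizers
    (D : (Fin r → ℝ) → ℝ)
    (hD_lb : ∀ (lam : Fin r → ℝ) (x : Fin n → ℝ) (z : Fin m → ℝ),
      D lam ≤ f x + g z + lam ⬝ᵥ (A *ᵥ x + B *ᵥ z - b))
    (hD_eq : ∀ (lam : Fin r → ℝ) (x : Fin n → ℝ) (z : Fin m → ℝ),
      (∀ x' z', f x + g z + lam ⬝ᵥ (A *ᵥ x + B *ᵥ z - b)
          ≤ f x' + g z' + lam ⬝ᵥ (A *ᵥ x' + B *ᵥ z' - b)) →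
      D lam = f x + g z + lam ⬝ᵥ (A *ᵥ x + B *ᵥ z - b))
    (lamstar : Fin r → ℝ) (hstar : ∀ lam, D lam ≤ D lamstar)
    -- the ADMM subproblems always have minimizers:
    (hxex : ∀ (lam : Fin r → ℝ) (zz : Fin m → ℝ), ∃ x2 : Fin n → ℝ, ∀ x' : Fin n → ℝ,
      f x2 + lam ⬝ᵥ (A *ᵥ x2) + t / 2 * ((A *ᵥ x2 + B *ᵥ zz - b) ⬝ᵥ (A *ᵥ x2 + B *ᵥ zz - b))
        ≤ f x' + lam ⬝ᵥ (A *ᵥ x')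
          + t / 2 * ((A *ᵥ x' + B *ᵥ zz - b) ⬝ᵥ (A *ᵥ x' + B *ᵥ zz - b)))
    (hzex : ∀ (lam : Fin r → ℝ) (xx : Fin n → ℝ), ∃ z2 : Fin m → ℝ, ∀ z' : Fin m → ℝ,
      g z2 + lam ⬝ᵥ (B *ᵥ z2) + t / 2 * ((A *ᵥ xx + B *ᵥ z2 - b) ⬝ᵥ (A *ᵥ xx + B *ᵥ z2 - b))
        ≤ g z' + lam ⬝ᵥ (B *ᵥ z')
          + t / 2 * ((A *ᵥ xx + B *ᵥ z' - b) ⬝ᵥ (A *ᵥ xx + B *ᵥ z' - b)))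
    -- linear convergence of ADMM in dual objective value:
    (γ : ℝ) (hγ0 : 0 ≤ γ) (hγ1 : γ < 1)
    (hlin : ∀ (lam1 : Fin r → ℝ) (z1 : Fin m → ℝ),
      (∀ w : Fin m → ℝ, g z1 + (-(Bᵀ *ᵥ lam1)) ⬝ᵥ (w - z1) ≤ g w) →
      ∀ (x2 : Fin n → ℝ) (z2 : Fin m → ℝ) (lam2 : Fin r → ℝ),
        (∀ x' : Fin n → ℝ,
          f x2 + lam1 ⬝ᵥ (A *ᵥ x2)
              + t / 2 * ((A *ᵥ x2 + B *ᵥ z1 - b) ⬝ᵥ (A *ᵥ x2 + B *ᵥ z1 - b))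
            ≤ f x' + lam1 ⬝ᵥ (A *ᵥ x')
              + t / 2 * ((A *ᵥ x' + B *ᵥ z1 - b) ⬝ᵥ (A *ᵥ x' + B *ᵥ z1 - b))) →
        (∀ z' : Fin m → ℝ,
          g z2 + lam1 ⬝ᵥ (B *ᵥ z2)
              + t / 2 * ((A *ᵥ x2 + B *ᵥ z2 - b) ⬝ᵥ (A *ᵥ x2 + B *ᵥ z2 - b))
            ≤ g z' + lam1 ⬝ᵥ (B *ᵥ z')
              + t / 2 * ((A *ᵥ x2 + B *ᵥ z' - b) ⬝ᵥ (A *ᵥ x2 + B *ᵥ z' - b))) →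
        lam2 = lam1 + t • (A *ᵥ x2 + B *ᵥ z2 - b) →
        D lamstar - D lam2 ≤ γ * (D lamstar - D lam1)) :
    -- conclusion: D satisfies the PŁ inequality
    ∀ (lam : Fin r → ℝ) (xh : Fin n → ℝ) (zh : Fin m → ℝ),
      (∀ x' z', f xh + g zh + lam ⬝ᵥ (A *ᵥ xh + B *ᵥ zh - b)
          ≤ f x' + g z' + lam ⬝ᵥ (A *ᵥ x' + B *ᵥ z' - b)) →
      D lamstar - D lam
        ≤ t / (1 - γ) * ((A *ᵥ xh + B *ᵥ zh - b) ⬝ᵥ (A *ᵥ xh + B *ᵥ zh - b)) := by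
  intro lam xh zh hmin
  have h1γ : 0 < 1 - γ := by linarith
  -- expand dot products over the constraint residual
  have hexp : ∀ (x : Fin n → ℝ) (z : Fin m → ℝ),
      lam ⬝ᵥ (A *ᵥ x + B *ᵥ z - b)
        = lam ⬝ᵥ (A *ᵥ x) + lam ⬝ᵥ (B *ᵥ z) - lam ⬝ᵥ b := by
    intro x z
    simp [dotProduct_add, dotProduct_sub]
  -- subgradient property of g at zh
  have hsub : ∀ w : Fin m → ℝ, g zh + (-(Bᵀ *ᵥ lam)) ⬝ᵥ (w - zh) ≤ g w := by
    intro w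
    have h := hmin xh w
    rw [hexp xh zh, hexp xh w] at h
    have hdot : (-(Bᵀ *ᵥ lam)) ⬝ᵥ (w - zh)
        = -(lam ⬝ᵥ (B *ᵥ w)) + lam ⬝ᵥ (B *ᵥ zh) := by
      rw [Matrix.mulVec_transpose, dotProduct_sub, neg_dotProduct,
        neg_dotProduct, ← Matrix.dotProduct_mulVec, ← Matrix.dotProduct_mulVec]
      ring
    rw [hdot]
    linarith
  obtain ⟨x2, hx2⟩ := hxex lam zh
  obtain ⟨z2, hz2⟩ := hzex lam x2
  have hγineq := hlin lam zh hsub x2 z2 (lam + t • (A *ᵥ x2 + B *ᵥ z2 - b)) hx2 hz2 rfl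
  -- abbreviations
  set e := A *ᵥ xh + B *ᵥ zh - b with he
  set u1 := A *ᵥ x2 + B *ᵥ zh - b with hu1
  set u := A *ᵥ x2 + B *ᵥ z2 - b with hu
  -- step 1: ‖u1‖² ≤ ‖e‖²
  have hstep1 : u1 ⬝ᵥ u1 ≤ e ⬝ᵥ e := by
    have h1 := hx2 xh
    have h2 := hmin x2 zh
    rw [hexp xh zh, hexp x2 zh] at h2
    nlinarith [h1, h2, ht]
  -- step 2: ‖u‖² ≤ ‖u1‖²
  have hstep2 : u ⬝ᵥ u ≤ u1 ⬝ᵥ u1 := by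
    have h1 := hz2 zh
    have h2 := hmin xh z2
    rw [hexp xh zh, hexp xh z2] at h2
    nlinarith [h1, h2, ht]
  -- step 3: u ⬝ᵥ e ≤ e ⬝ᵥ e
  have hstep3 : u ⬝ᵥ e ≤ e ⬝ᵥ e := by
    have hnn : 0 ≤ (u - e) ⬝ᵥ (u - e) := Finset.sum_nonneg fun i _ => mul_self_nonneg _
    have hex : (u - e) ⬝ᵥ (u - e) = u ⬝ᵥ u - 2 * (u ⬝ᵥ e) + e ⬝ᵥ e := by
      have hc : e ⬝ᵥ u = u ⬝ᵥ e := dotProduct_comm _ _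
      simp [dotProduct_sub, sub_dotProduct, hc]
      ring
    rw [hex] at hnn
    linarith
  -- step 4: D lam2 ≤ D lam + t * (e ⬝ᵥ e)
  have hDlam : D lam = f xh + g zh + lam ⬝ᵥ e := hD_eq lam xh zh hmin
  have hDlam2 : D (lam + t • u) ≤ D lam + t * (e ⬝ᵥ e) := by
    have hlb := hD_lb (lam + t • u) xh zh
    rw [← he] at hlb
    have hdot2 : (lam + t • u) ⬝ᵥ e = lam ⬝ᵥ e + t * (u ⬝ᵥ e) := by
      rw [add_dotProduct, smul_dotProduct]
      simp [smul_eq_mul]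
    rw [hdot2] at hlb
    have : t * (u ⬝ᵥ e) ≤ t * (e ⬝ᵥ e) := by
      exact mul_le_mul_of_nonneg_left hstep3 (le_of_lt ht)
    linarith
  -- combine
  have hfin : (1 - γ) * (D lamstar - D lam) ≤ t * (e ⬝ᵥ e) := by
    have := hγineq
    nlinarith [hstar (lam + t • u)]
  rw [div_mul_eq_mul_div, le_div_iff₀ h1γ]
  nlinarith [hfin]
end
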